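/- arXiv:1803.03458 — 10 statements merged into one kernel-verified Lean document; each statement's English description precedes it below -/
import Mathlib

section
/- If X is a Menger subset of the real line, then the complement ℝ ∖ X is completely Baire. -/
/-- A topological space is Menger if for every sequence of open covers there exist
finite subfamilies whose unions together cover the space. -/
def MengerSpace (X : Type*) [TopologicalSpace X] : Prop :=
  ∀ U : ℕ → Set (Set X),
    (∀ n, (∀ u ∈ U n, IsOpen u) ∧ ⋃₀ U n = Set.univ) →
    ∃ V : ℕ → Set (Set X), (∀ n, V n ⊆ U n ∧ (V n).Finite) ∧
      (⋃ n, ⋃₀ V n) = Set.univ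

/-- A space is completely Baire if every closed subspace is a Baire space. -/
def CompletelyBaire (X : Type*) [TopologicalSpace X] : Prop :=
  ∀ C : Set X, IsClosed C → BaireSpace C

/-!
If `Xᶜ` is not completely Baire, it contains a nonempty relatively closed set `C` that is meagre
in itself: open sets `u n` have dense traces on `C` but no common point in `C`. Every point of `C`
then accumulates each `C ∩ u n`, so one can grow a tree of pairwise disjoint closed balls indexed by
finite sequences of naturals, centred in `C`, the balls of depth `n + 1` lying in `u n` and the
children of a node clustering at its centre. Each branch converges to a point of
`closure C ∩ ⋂ n, u n ⊆ X`, so `X` contains a copy of `ℕ → ℕ`, closed in `X` because the balls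
accumulate only at their centres, which lie in `C`. This kills the Menger property as it does for
`ℕ → ℕ`: covering by "last index `< k`" at each depth, finite subcovers give bounds `g n`, and the
limit of the branch along `g` escapes all of them.
-/

open Set Filter Topology Metric Function PiNat

theorem Set.Finite.exists_sUnion_subset_of_monotone {α : Type*} {F : ℕ → Set α}
    (hF : Monotone F) {V : Set (Set α)} (hV : V.Finite) (hVF : V ⊆ range F) :
    ∃ m, ⋃₀ V ⊆ F m := by
  choose! idx hidx using fun v (hv : v ∈ V) => hVF hv
  obtain ⟨m, hm⟩ := (hV.image idx).bddAbove
  exact ⟨m, sUnion_subset fun v hv => hidx v hv ▸ hF (hm ⟨v, hv, rfl⟩)⟩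

theorem MengerSpace.exists_iInter_eq_empty {Z : Type*} [TopologicalSpace Z] (hZ : MengerSpace Z)
    {A : ℕ → ℕ → Set Z} (hA : ∀ n k, IsClosed (A n k)) (hanti : ∀ n, Antitone (A n))
    (hempty : ∀ n, ⋂ k, A n k = ∅) : ∃ g : ℕ → ℕ, ⋂ n, A n (g n) = ∅ := by
  obtain ⟨V, hV, hcover⟩ := hZ (fun n => range fun k => (A n k)ᶜ) fun n =>
    ⟨by rintro _ ⟨k, rfl⟩; exact (hA n k).isOpen_compl,
      by rw [sUnion_range, ← compl_iInter, hempty, compl_empty]⟩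
  choose g hg using fun n => (hV n).2.exists_sUnion_subset_of_monotone
    (fun _ _ hkl => compl_subset_compl.2 (hanti n hkl)) (hV n).1
  refine ⟨g, eq_empty_of_forall_notMem fun x hx => ?_⟩
  obtain ⟨n, hn⟩ := mem_iUnion.1 (hcover ▸ mem_univ x)
  exact hg n hn (mem_iInter.1 hx n)

theorem Topology.IsInducing.exists_of_not_baireSpace {β α : Type*} [TopologicalSpace β]
    [TopologicalSpace α] {f : β → α} (hf : IsInducing f) (h : ¬ BaireSpace β) :
    ∃ w : Set α, ∃ v : ℕ → Set α, IsOpen w ∧ (range f ∩ w).Nonempty ∧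
      (∀ n, IsOpen (v n)) ∧ (∀ n, range f ⊆ closure (range f ∩ v n)) ∧
      range f ∩ w ∩ ⋂ n, v n = ∅ := by
  obtain ⟨s, hs, hsd, hnd⟩ : ∃ s : ℕ → Set β,
      (∀ n, IsOpen (s n)) ∧ (∀ n, Dense (s n)) ∧ ¬ Dense (⋂ n, s n) := by
    by_contra! hcon
    exact h ⟨hcon⟩
  choose v hv hvs using fun n => hf.isOpen_iff.1 (hs n)
  obtain ⟨U, hU, hUne, hUs⟩ :
      ∃ U, IsOpen U ∧ U.Nonempty ∧ ¬ (U ∩ ⋂ n, s n).Nonempty := by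
    simpa [dense_iff_inter_open] using hnd
  obtain ⟨w, hw, rfl⟩ := hf.isOpen_iff.1 hU
  refine ⟨w, v, hw, ?_, hv, fun n => ?_, ?_⟩
  · obtain ⟨b, hb⟩ := hUne
    exact ⟨f b, mem_range_self b, hb⟩
  · rintro _ ⟨b, rfl⟩
    simpa only [← hvs n, image_preimage_eq_range_inter] using hf.dense_iff.1 (hsd n) b
  · refine eq_empty_of_forall_notMem ?_
    rintro _ ⟨⟨⟨b, rfl⟩, hbw⟩, hbv⟩
    exact hUs ⟨b, hbw, mem_iInter.2 fun n => hvs n ▸ mem_iInter.1 hbv n⟩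

theorem accPt_inter_of_subset_closure {α : Type*} [TopologicalSpace α] {C : Set α}
    {u : ℕ → Set α} (hu : ∀ n, IsOpen (u n)) (hdense : ∀ n, C ⊆ closure (C ∩ u n))
    (hempty : C ∩ ⋂ n, u n = ∅) {z : α} (hz : z ∈ C) (n : ℕ) :
    AccPt z (𝓟 (C ∩ u n)) := by
  rw [accPt_iff_frequently]
  by_cases hzn : z ∈ u n
  · obtain ⟨m, hm⟩ : ∃ m, z ∉ u m := by
      simpa using fun h => hempty.subset ⟨hz, mem_iInter.2 h⟩
    refine ((mem_closure_iff_frequently.1 (hdense m hz)).and_eventually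
      ((hu n).mem_nhds hzn)).mono fun y hy => ?_
    exact ⟨ne_of_mem_of_not_mem hy.1.2 hm, hy.1.1, hy.2⟩
  · exact (mem_closure_iff_frequently.1 (hdense n hz)).mono fun y hy =>
      ⟨ne_of_mem_of_not_mem hy.2 hzn, hy⟩

theorem exists_relClosed_meagre_of_not_completelyBaire {α : Type*} [TopologicalSpace α]
    {Y : Set α} (h : ¬ CompletelyBaire Y) :
    ∃ C ⊆ Y, C.Nonempty ∧ closure C ∩ Y ⊆ C ∧ ∃ u : ℕ → Set α, (∀ n, IsOpen (u n)) ∧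
      (∀ z ∈ C, ∀ n, AccPt z (𝓟 (C ∩ u n))) ∧ C ∩ ⋂ n, u n = ∅ := by
  simp only [CompletelyBaire, not_forall] at h
  obtain ⟨C₀, hC₀, hnb⟩ := h
  obtain ⟨w, v, hw, hne, hv, hdense, hempty⟩ :=
    (IsInducing.subtypeVal.comp IsInducing.subtypeVal).exists_of_not_baireSpace hnb
  set E : Set α := range (Subtype.val ∘ Subtype.val : C₀ → α) with hE
  obtain ⟨F, hF, hFC₀⟩ := isClosed_induced_iff.1 hC₀
  have hEF : E = F ∩ Y := by
    rw [hE, range_comp, ← hFC₀, Subtype.range_coe, image_preimage_eq_range_inter,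
      Subtype.range_coe, inter_comm]
  set C := closure (E ∩ w) ∩ Y
  have hCE : C ⊆ E := hEF ▸ inter_subset_inter_left _
    (closure_minimal (inter_subset_left.trans (hEF ▸ inter_subset_left)) hF)
  have hCdense : ∀ n, C ⊆ closure (C ∩ (w ∩ v n)) := by
    refine fun n => inter_subset_left.trans (closure_minimal (fun x hx => ?_) isClosed_closure)
    refine closure_mono ?_ (hw.inter_closure ⟨hx.2, hdense n hx.1⟩)
    rintro y ⟨hyw, hyE, hyv⟩
    exact ⟨⟨subset_closure ⟨hyE, hyw⟩, (hEF ▸ hyE).2⟩, hyw, hyv⟩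
  have hCempty : C ∩ ⋂ n, w ∩ v n = ∅ := by
    refine eq_empty_of_subset_empty (hempty ▸ ?_)
    rintro x ⟨hxC, hx⟩
    exact ⟨⟨hCE hxC, (mem_iInter.1 hx 0).1⟩, mem_iInter.2 fun n => (mem_iInter.1 hx n).2⟩
  refine ⟨C, inter_subset_right, ?_, ?_, fun n => w ∩ v n, fun n => hw.inter (hv n),
    fun z hz => accPt_inter_of_subset_closure (fun n => hw.inter (hv n)) hCdense hCempty hz,
    hCempty⟩
  · obtain ⟨x, hxE, hxw⟩ := hne
    exact ⟨x, subset_closure ⟨hxE, hxw⟩, (hEF ▸ hxE).2⟩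
  · exact fun x hx =>
      ⟨closure_closure (s := E ∩ w) ▸ closure_mono inter_subset_left hx.1, hx.2⟩

theorem isClosed_insert_iUnion_of_tendsto {α : Type*} [MetricSpace α] {t : α}
    {Z : ℕ → Set α} {R : ℕ → ℝ} (hZ : ∀ k, IsClosed (Z k)) (hR : Tendsto R atTop (𝓝 0))
    (hZR : ∀ k, Z k ⊆ closedBall t (R k)) : IsClosed (insert t (⋃ k, Z k)) := by
  refine isClosed_of_closure_subset fun x hx => ?_
  rcases eq_or_ne x t with rfl | hxt
  · exact mem_insert _ _
  have hδ : 0 < dist x t / 2 := half_pos (dist_pos.2 hxt)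
  obtain ⟨m, hm⟩ := eventually_atTop.1 (hR.eventually (gt_mem_nhds hδ))
  have hsub : insert t (⋃ k, Z k) ⊆
      (⋃ k ∈ Finset.range m, Z k) ∪ closedBall t (dist x t / 2) := by
    rintro y (rfl | ⟨_, ⟨k, rfl⟩, hy⟩)
    · exact Or.inr (mem_closedBall_self hδ.le)
    · rcases lt_or_ge k m with hk | hk
      · exact Or.inl (mem_biUnion (Finset.mem_range.2 hk) hy)
      · exact Or.inr (closedBall_subset_closedBall (hm k hk).le (hZR k hy))
  have hclosed : IsClosed ((⋃ k ∈ Finset.range m, Z k) ∪ closedBall t (dist x t / 2)) :=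
    (isClosed_biUnion_finset fun k _ => hZ k).union isClosed_closedBall
  rcases closure_minimal hsub hclosed hx with hx | hx
  · obtain ⟨k, -, hk⟩ := mem_iUnion₂.1 hx
    exact mem_insert_of_mem _ (mem_iUnion.2 ⟨k, hk⟩)
  · linarith [mem_closedBall.1 hx]

theorem AccPt.exists_seq_two_mul_dist_lt {α : Type*} [MetricSpace α] {t : α} {D : Set α}
    (ht : AccPt t (𝓟 D)) {ρ : ℝ} (hρ : 0 < ρ) :
    ∃ c : ℕ → α, (∀ k, c k ∈ D ∧ c k ≠ t ∧ dist (c k) t < ρ) ∧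
      ∀ m k, m < k → 2 * dist (c k) t < dist (c m) t := by
  refine exists_seq_of_forall_finset_exists (fun y => y ∈ D ∧ y ≠ t ∧ dist y t < ρ)
    (fun x y => 2 * dist y t < dist x t) fun s hs => ?_
  have hnear : ∀ᶠ y in 𝓝 t, dist y t < ρ ∧ ∀ x ∈ s, 2 * dist y t < dist x t := by
    refine Filter.Eventually.and (ball_mem_nhds t hρ) (s.eventually_all.2 fun x hx => ?_)
    filter_upwards [ball_mem_nhds t (half_pos (dist_pos.2 (hs x hx).2.1))] with y hy
    rw [mem_ball] at hy
    linarith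
  obtain ⟨y, ⟨hyt, hyD⟩, hy, hys⟩ :=
    ((accPt_iff_frequently.1 ht).and_eventually hnear).exists
  exact ⟨y, ⟨hyD, hyt, hy⟩, hys⟩

theorem exists_seq_closedBall_disjoint {α : Type*} [MetricSpace α] {t : α} {D U : Set α}
    (ht : AccPt t (𝓟 D)) (hU : IsOpen U) (hDU : D ⊆ U) {ε : ℝ} (hε : 0 < ε) :
    ∃ c : ℕ → α, ∃ r : ℕ → ℝ,
      (∀ k, c k ∈ D ∧ 0 < r k ∧ r k ≤ ε / 2 ∧
        closedBall (c k) (r k) ⊆ U ∩ closedBall t (ε / 2 ^ k)) ∧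
      Pairwise (Disjoint on fun k => closedBall (c k) (r k)) := by
  obtain ⟨c, hc, hfar⟩ := ht.exists_seq_two_mul_dist_lt (half_pos hε)
  set d := fun k => dist (c k) t
  have hd_pos : ∀ k, 0 < d k := fun k => dist_pos.2 (hc k).2.1
  have hd_le : ∀ k, d k ≤ ε / 2 ^ k / 2 := by
    intro k
    induction k with
    | zero => simpa using (hc 0).2.2.le
    | succ k ih =>
      have := hfar k (k + 1) k.lt_succ_self
      rw [pow_succ, ← div_div]
      linarith
  choose s hs hsU using fun k => nhds_basis_closedBall.mem_iff.1 (hU.mem_nhds (hDU (hc k).1))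
  set r := fun k => min (s k) (d k / 4)
  -- Each ball lies in an annulus around `t`; these are disjoint since the `d k` at least halve.
  have hannulus : ∀ k, ∀ y ∈ closedBall (c k) (r k),
      3 / 4 * d k ≤ dist y t ∧ dist y t ≤ 5 / 4 * d k := by
    intro k y hy
    have hy' : dist y (c k) ≤ d k / 4 := (mem_closedBall.1 hy).trans (min_le_right _ _)
    have h1 := dist_triangle y (c k) t
    have h2 := dist_comm (c k) y ▸ dist_triangle (c k) y t
    constructor <;> linarith
  refine ⟨c, r, fun k => ⟨(hc k).1, lt_min (hs k) (by linarith [hd_pos k]), ?_, ?_⟩, ?_⟩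
  · linarith [min_le_right (s k) (d k / 4), (hc k).2.2]
  · refine fun y hy => ⟨hsU k ((closedBall_subset_closedBall (min_le_left _ _)) hy), ?_⟩
    have : 0 ≤ ε / 2 ^ k := by positivity
    rw [mem_closedBall]
    linarith [(hannulus k y hy).2, hd_le k]
  · refine (pairwise_disjoint_on _).2 fun k m hkm => disjoint_left.2 fun y hyk hym => ?_
    linarith [hannulus k y hyk, hannulus m y hym, hfar k m hkm]

theorem iUnion_length_succ_union_image {α : Type*} (c : List ℕ → α) (Y : List ℕ → Set α)
    (n : ℕ) :
    (⋃ (L) (_ : L.length = n + 1), Y L) ∪ c '' {L | L.length < n + 1} =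
      (⋃ (L) (_ : L.length = n), insert (c L) (⋃ j, Y (j :: L))) ∪ c '' {L | L.length < n} := by
  ext x
  simp only [mem_union, mem_iUnion, mem_insert_iff, mem_image, mem_ofPred_eq, exists_prop]
  constructor
  · rintro (⟨_ | ⟨j, L⟩, hL, hx⟩ | ⟨L, hL, rfl⟩)
    · simp at hL
    · exact Or.inl ⟨L, by simpa using hL, Or.inr ⟨j, hx⟩⟩
    · rcases Nat.lt_succ_iff_lt_or_eq.1 hL with hL | hL
      · exact Or.inr ⟨L, hL, rfl⟩
      · exact Or.inl ⟨L, hL, Or.inl rfl⟩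
  · rintro (⟨L, hL, rfl | ⟨j, hx⟩⟩ | ⟨L, hL, rfl⟩)
    · exact Or.inr ⟨L, by omega, rfl⟩
    · exact Or.inl ⟨j :: L, by simpa using hL, hx⟩
    · exact Or.inr ⟨L, by omega, rfl⟩

-- Node `j :: L` is the `j`-th child of `L`, so `PiNat.res σ n` is the depth-`n` node on the
-- branch along `σ`.
structure BallTree (P : Type*) [MetricSpace P] where
  center : List ℕ → P
  radius : List ℕ → ℝ
  radius_pos : ∀ L, 0 < radius L
  radius_cons_le : ∀ j L, radius (j :: L) ≤ radius L / 2
  closedBall_cons_subset : ∀ j L,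
    closedBall (center (j :: L)) (radius (j :: L)) ⊆ closedBall (center L) (radius L / 2 ^ j)
  pairwise_disjoint : ∀ L,
    Pairwise (Disjoint on fun j => closedBall (center (j :: L)) (radius (j :: L)))

namespace BallTree

variable {P : Type*} [MetricSpace P] (T : BallTree P)

def ball (L : List ℕ) : Set P := closedBall (T.center L) (T.radius L)

theorem center_mem_ball (L : List ℕ) : T.center L ∈ T.ball L :=
  mem_closedBall_self (T.radius_pos L).le

theorem ball_cons_subset (j : ℕ) (L : List ℕ) : T.ball (j :: L) ⊆ T.ball L :=
  (T.closedBall_cons_subset j L).trans <| closedBall_subset_closedBall <|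
    div_le_self (T.radius_pos L).le (one_le_pow₀ one_le_two)

theorem disjoint_ball_of_length_eq : ∀ {L M : List ℕ}, L.length = M.length → L ≠ M →
    Disjoint (T.ball L) (T.ball M)
  | [], [], _, h => (h rfl).elim
  | j :: L, m :: M, hlen, hne => by
    by_cases hLM : L = M
    · subst hLM
      exact T.pairwise_disjoint L fun hjm => hne (hjm ▸ rfl)
    · exact (disjoint_ball_of_length_eq (Nat.succ.inj hlen) hLM).mono
        (T.ball_cons_subset j L) (T.ball_cons_subset m M)

theorem isClosed_level (n : ℕ) (Y : List ℕ → Set P)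
    (hY : ∀ L, L.length = n → IsClosed (Y L) ∧ Y L ⊆ T.ball L) :
    IsClosed ((⋃ (L) (_ : L.length = n), Y L) ∪ T.center '' {L | L.length < n}) := by
  induction n generalizing Y with
  | zero => simpa using (hY [] rfl).1
  | succ n ih =>
    rw [iUnion_length_succ_union_image]
    have hYcons : ∀ L, L.length = n → ∀ j,
        IsClosed (Y (j :: L)) ∧ Y (j :: L) ⊆ T.ball (j :: L) :=
      fun L hL j => hY (j :: L) (by simpa using hL)
    refine ih _ fun L hL => ⟨?_, insert_subset (T.center_mem_ball L) ?_⟩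
    · exact isClosed_insert_iUnion_of_tendsto (fun j => (hYcons L hL j).1)
        (tendsto_const_nhds.div_atTop (tendsto_pow_atTop_atTop_of_one_lt one_lt_two))
        fun j => (hYcons L hL j).2.trans (T.closedBall_cons_subset j L)
    · exact iUnion_subset fun j => (hYcons L hL j).2.trans (T.ball_cons_subset j L)

theorem radius_res_le (σ : ℕ → ℕ) (n : ℕ) : T.radius (res σ n) ≤ T.radius [] / 2 ^ n := by
  induction n with
  | zero => simp
  | succ n ih =>
    calc T.radius (res σ (n + 1)) ≤ T.radius (res σ n) / 2 := T.radius_cons_le _ _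
      _ ≤ T.radius [] / 2 ^ (n + 1) := by rw [pow_succ, ← div_div]; linarith

theorem antitone_ball_res (σ : ℕ → ℕ) : Antitone fun n => T.ball (res σ n) :=
  antitone_nat_of_succ_le fun n => T.ball_cons_subset (σ n) (res σ n)

theorem exists_tendsto_center_res [CompleteSpace P] (σ : ℕ → ℕ) :
    ∃ x, Tendsto (fun n => T.center (res σ n)) atTop (𝓝 x) ∧ ∀ n, x ∈ T.ball (res σ n) := by
  have hcauchy : CauchySeq fun n => T.center (res σ n) := by
    refine cauchySeq_of_le_geometric_two (C := 2 * T.radius []) fun n => ?_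
    rw [dist_comm]
    calc dist (T.center (res σ (n + 1))) (T.center (res σ n)) ≤ T.radius (res σ n) :=
          T.ball_cons_subset (σ n) (res σ n) (T.center_mem_ball _)
      _ ≤ 2 * T.radius [] / 2 / 2 ^ n := by simpa using T.radius_res_le σ n
  obtain ⟨x, hx⟩ := cauchySeq_tendsto_of_complete hcauchy
  refine ⟨x, hx, fun n => isClosed_closedBall.mem_of_tendsto hx ?_⟩
  exact eventually_atTop.2 ⟨n, fun m hm => T.antitone_ball_res σ hm (T.center_mem_ball _)⟩

-- The shallower centres are added because the depth-`n + 1` balls accumulate exactly there.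
def ballsFrom (n k : ℕ) : Set P :=
  (⋃ (L) (_ : L.length = n + 1), T.ball L ∩ {_x | k ≤ L.headI}) ∪
    T.center '' {L | L.length < n + 1}

theorem isClosed_ballsFrom (n k : ℕ) : IsClosed (T.ballsFrom n k) :=
  T.isClosed_level _ _ fun _ _ => ⟨isClosed_closedBall.inter isClosed_const, inter_subset_left⟩

theorem antitone_ballsFrom (n : ℕ) : Antitone (T.ballsFrom n) := fun _ _ hkl =>
  union_subset_union_left _ <| iUnion₂_mono fun _ _ =>
    inter_subset_inter_right _ fun _ h => hkl.trans h

theorem iInter_ballsFrom_subset (n : ℕ) : ⋂ k, T.ballsFrom n k ⊆ range T.center := by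
  intro x hx
  rcases mem_iInter.1 hx 0 with hx₀ | ⟨L, -, rfl⟩
  swap; · exact mem_range_self L
  obtain ⟨L₀, hL₀, hxL₀, -⟩ := mem_iUnion₂.1 hx₀
  rcases mem_iInter.1 hx (L₀.headI + 1) with hx₁ | ⟨L, -, rfl⟩
  swap; · exact mem_range_self L
  obtain ⟨L, hL, hxL, hhead⟩ := mem_iUnion₂.1 hx₁
  have hne : L ≠ L₀ := by rintro rfl; exact absurd hhead (by simp)
  exact (disjoint_left.1 (T.disjoint_ball_of_length_eq (hL.trans hL₀.symm) hne) hxL hxL₀).elim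

theorem ball_res_subset_ballsFrom (σ : ℕ → ℕ) (n : ℕ) :
    T.ball (res σ (n + 1)) ⊆ T.ballsFrom n (σ n) :=
  fun x hx => Or.inl (mem_iUnion₂.2 ⟨res σ (n + 1), res_length σ _, hx, by simp⟩)

end BallTree

theorem exists_ballTree {P : Type*} [MetricSpace P] {C : Set P} {u : ℕ → Set P}
    (hu : ∀ n, IsOpen (u n)) (hacc : ∀ z ∈ C, ∀ n, AccPt z (𝓟 (C ∩ u n))) {z₀ : P}
    (hz₀ : z₀ ∈ C) :
    ∃ T : BallTree P, (∀ L, T.center L ∈ C) ∧ ∀ j L, T.ball (j :: L) ⊆ u L.length := by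
  choose! c r hc hdisj using fun z (hz : z ∈ C) ε (hε : 0 < ε) n =>
    exists_seq_closedBall_disjoint (hacc z hz n) (hu n) inter_subset_right hε
  let node : List ℕ → P × ℝ := fun L =>
    L.rec (z₀, 1) fun j L p => (c p.1 p.2 L.length j, r p.1 p.2 L.length j)
  have hnode : ∀ L, (node L).1 ∈ C ∧ 0 < (node L).2 := by
    intro L
    induction L with
    | nil => exact ⟨hz₀, one_pos⟩
    | cons j L ih => exact ⟨(hc _ ih.1 _ ih.2 _ j).1.1, (hc _ ih.1 _ ih.2 _ j).2.1⟩
  have hchild := fun j L => hc _ (hnode L).1 _ (hnode L).2 L.length j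
  refine ⟨⟨fun L => (node L).1, fun L => (node L).2, fun L => (hnode L).2,
    fun j L => (hchild j L).2.2.1, fun j L => (hchild j L).2.2.2.trans inter_subset_right,
    fun L => hdisj _ (hnode L).1 _ (hnode L).2 L.length⟩,
    fun L => (hnode L).1, fun j L => (hchild j L).2.2.2.trans inter_subset_left⟩

theorem completelyBaire_compl_of_mengerSpace {P : Type*} [MetricSpace P] [CompleteSpace P]
    {X : Set P} (hX : MengerSpace X) : CompletelyBaire (Xᶜ : Set P) := by
  by_contra h
  obtain ⟨C, hCX, ⟨z₀, hz₀⟩, hrel, u, hu, hacc, hempty⟩ :=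
    exists_relClosed_meagre_of_not_completelyBaire h
  obtain ⟨T, hTC, hTu⟩ := exists_ballTree hu hacc hz₀
  obtain ⟨g, hg⟩ := hX.exists_iInter_eq_empty (A := fun n k => ((↑) : X → P) ⁻¹' T.ballsFrom n k)
    (fun n k => (T.isClosed_ballsFrom n k).preimage continuous_subtype_val)
    (fun n _ _ hkl => preimage_mono (T.antitone_ballsFrom n hkl))
    (fun n => eq_empty_of_forall_notMem fun x hx => by
      obtain ⟨L, hL⟩ := T.iInter_ballsFrom_subset n (by simpa [preimage_iInter] using hx)
      exact hCX (hL ▸ hTC L) x.2)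
  obtain ⟨x, hlim, hxT⟩ := T.exists_tendsto_center_res g
  have hxu : x ∈ ⋂ n, u n := mem_iInter.2 fun n => by simpa using hTu (g n) (res g n) (hxT (n + 1))
  have hxX : x ∈ X := by
    by_contra hxX
    refine hempty.subset ⟨hrel ⟨?_, hxX⟩, hxu⟩
    exact mem_closure_of_tendsto hlim (Eventually.of_forall fun n => hTC _)
  have hxg : (⟨x, hxX⟩ : X) ∈ ⋂ n, ((↑) : X → P) ⁻¹' T.ballsFrom n (g n) :=
    mem_iInter.2 fun n => T.ball_res_subset_ballsFrom g n (hxT (n + 1))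
  exact hg.subset hxg

theorem menger_complement_completelyBaire (X : Set ℝ) (hX : MengerSpace X) :
    CompletelyBaire ↥(Xᶜ) :=
  completelyBaire_compl_of_mengerSpace hX
end

section
/- A nonempty Polish space that is nowhere locally compact and zero-dimensional is homeomorphic to the Baire space ℕ^ℕ (equivalently, to the space of irrational numbers). -/
/-!
Give `X` a complete metric. Every nonempty clopen set `U` is a countable union of clopen sets of
small diameter, which can be made disjoint. Since no point has a compact neighbourhood, `U` is not
compact, hence, being complete, not totally bounded; so infinitely many of the pieces are nonempty,
and the nonempty ones can be indexed by `ℕ`. Iterating this splitting gives a scheme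
`A : List ℕ → Set X` of nonempty clopen sets with vanishing diameter in which the children of each
set partition it. Sending a point to its branch through the scheme is then a homeomorphism onto
`ℕ → ℕ`, whose inverse is the map induced by the scheme.
-/

open Set Metric TopologicalSpace Function Filter PiNat Topology

theorem isClopen_disjointed {X ι : Type*} [TopologicalSpace X] [Preorder ι]
    [LocallyFiniteOrderBot ι] {f : ι → Set X} (hf : ∀ i, IsClopen (f i)) (i : ι) :
    IsClopen (disjointed f i) :=
  disjointedRec (fun _ j ht => ht.diff (hf j)) (hf i)

theorem exists_nonempty_reindex {α : Type*} {D : ℕ → Set α}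
    (hD : {n | (D n).Nonempty}.Infinite) :
    ∃ e : ℕ → ℕ, Injective e ∧ (∀ k, (D (e k)).Nonempty) ∧ ⋃ k, D (e k) = ⋃ n, D n := by
  refine ⟨Nat.nth fun n => (D n).Nonempty, Nat.nth_injective hD, Nat.nth_mem_of_infinite hD, ?_⟩
  rw [← biUnion_range, Nat.range_nth_of_infinite hD]
  ext x
  simp only [mem_iUnion]
  exact ⟨fun ⟨n, _, hx⟩ => ⟨n, hx⟩, fun ⟨n, hx⟩ => ⟨n, ⟨x, hx⟩, hx⟩⟩

theorem CantorScheme.Disjoint.disjoint_of_length_eq {β α : Type*} {A : List β → Set α}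
    (hA : CantorScheme.Disjoint A) (hanti : CantorScheme.Antitone A) :
    ∀ {l₁ l₂ : List β}, l₁.length = l₂.length → l₁ ≠ l₂ → Disjoint (A l₁) (A l₂)
  | [], [], _, hne => absurd rfl hne
  | [], _ :: _, hlen, _ | _ :: _, [], hlen, _ => by simp at hlen
  | a :: l₁, b :: l₂, hlen, hne => by
    by_cases hl : l₁ = l₂
    · subst hl
      exact hA l₁ fun hab => hne (hab ▸ rfl)
    · exact (hA.disjoint_of_length_eq hanti (Nat.succ.inj hlen) hl).mono (hanti _ _) (hanti _ _)

section PseudoMetric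

variable {X : Type*} [PseudoMetricSpace X]

theorem infinite_setOf_nonempty_of_iUnion_eq {U : Set X} {r : ℝ}
    (hU : ∀ t : Set X, t.Finite → ¬U ⊆ ⋃ y ∈ t, ball y r) {D : ℕ → Set X}
    (hDU : ⋃ n, D n = U) (hD : ∀ n, ediam (D n) < ENNReal.ofReal r) :
    {n | (D n).Nonempty}.Infinite := by
  intro hfin
  choose y hy using fun n : {n | (D n).Nonempty} => n.2
  have := hfin.to_subtype
  refine hU (range y) (finite_range y) ?_
  rw [← hDU]
  refine iUnion_subset fun n x hx => mem_biUnion (mem_range_self ⟨n, x, hx⟩) ?_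
  exact edist_lt_ofReal.1 ((edist_le_ediam_of_mem hx (hy ⟨n, x, hx⟩)).trans_lt (hD n))

variable [SecondCountableTopology X] {B : Set (Set X)}

theorem exists_clopen_cover_ediam_le (hB : IsTopologicalBasis B) (hBc : ∀ s ∈ B, IsClopen s)
    {U : Set X} (hU : IsOpen U) (hne : U.Nonempty) {δ : ℝ} (hδ : 0 < δ) :
    ∃ C : ℕ → Set X, (∀ n, IsClopen (C n)) ∧ (∀ n, ediam (C n) ≤ ENNReal.ofReal δ) ∧
      ⋃ n, C n = U := by
  choose! b hbB hxb hbU using fun x (hx : x ∈ U) =>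
    hB.exists_subset_of_mem_open (mem_inter hx (mem_ball_self (half_pos hδ)))
      (hU.inter isOpen_ball)
  have hbU' : ⋃ x ∈ U, b x = U :=
    (iUnion₂_subset fun x hx => (hbU x hx).trans inter_subset_left).antisymm
      fun x hx => mem_biUnion hx (hxb x hx)
  obtain ⟨T, hTU, hTc, hT⟩ :=
    isOpen_biUnion_countable U b fun x hx => (hBc _ (hbB x hx)).isOpen
  have hTne : T.Nonempty := by
    contrapose! hne
    rw [← hbU', ← hT, hne, biUnion_empty]
  obtain ⟨c, rfl⟩ := hTc.exists_eq_range hTne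
  refine ⟨b ∘ c, fun n => hBc _ (hbB _ (hTU ⟨n, rfl⟩)), fun n => ?_, ?_⟩
  · refine ediam_le_of_forall_dist_le fun y hy z hz => ?_
    have hy' : dist y (c n) < δ / 2 := (hbU _ (hTU ⟨n, rfl⟩) hy).2
    have hz' : dist z (c n) < δ / 2 := (hbU _ (hTU ⟨n, rfl⟩) hz).2
    linarith [dist_triangle_right y z (c n)]
  · rw [← hbU', ← hT, biUnion_range]
    rfl

theorem IsClopen.exists_partition [CompleteSpace X] (hB : IsTopologicalBasis B)
    (hBc : ∀ s ∈ B, IsClopen s) {U : Set X} (hU : IsClopen U) (hUc : ¬IsCompact U) {ε : ℝ}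
    (hε : 0 < ε) :
    ∃ D : ℕ → Set X, (∀ n, IsClopen (D n)) ∧ (∀ n, (D n).Nonempty) ∧
      Pairwise (Disjoint on D) ∧ ⋃ n, D n = U ∧ ∀ n, ediam (D n) ≤ ENNReal.ofReal ε := by
  have hne : U.Nonempty := nonempty_iff_ne_empty.2 fun h => hUc (h ▸ isCompact_empty)
  have htb : ¬TotallyBounded U := fun h =>
    hUc (isCompact_iff_totallyBounded_isComplete.2 ⟨h, hU.isClosed.isComplete⟩)
  obtain ⟨r, hr, hUr⟩ : ∃ r > 0, ∀ t : Set X, t.Finite → ¬U ⊆ ⋃ y ∈ t, ball y r := by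
    simpa [Metric.totallyBounded_iff] using htb
  obtain ⟨C, hCc, hCd, hCU⟩ :=
    exists_clopen_cover_ediam_le hB hBc hU.isOpen hne (half_pos (lt_min hε hr))
  have hsmall : ∀ n, ediam (disjointed C n) ≤ ENNReal.ofReal (min ε r / 2) := fun n =>
    (ediam_mono (disjointed_subset C n)).trans (hCd n)
  have hδr : ENNReal.ofReal (min ε r / 2) < ENNReal.ofReal r :=
    (ENNReal.ofReal_lt_ofReal_iff hr).2 (by linarith [min_le_right ε r])
  have hunion : ⋃ n, disjointed C n = U := iUnion_disjointed.trans hCU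
  obtain ⟨e, he, hene, heU⟩ := exists_nonempty_reindex
    (infinite_setOf_nonempty_of_iUnion_eq hUr hunion fun n => (hsmall n).trans_lt hδr)
  refine ⟨disjointed C ∘ e, fun n => isClopen_disjointed hCc _, hene,
    (disjoint_disjointed C).comp_of_injective he, heU.trans hunion, fun n => ?_⟩
  exact (hsmall _).trans (ENNReal.ofReal_le_ofReal (by linarith [min_le_left ε r]))

end PseudoMetric

/-- `A (a :: l)` is the `a`-th child of `A l`; the branch of `z : ℕ → ℕ` is `A (res z n)`, where
`res z n` lists `z 0, …, z (n - 1)` in reverse order. -/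
structure IsClopenPartitionScheme {X : Type*} [PseudoMetricSpace X] (A : List ℕ → Set X) :
    Prop where
  nil : A [] = univ
  isClopen : ∀ l, IsClopen (A l)
  nonempty : ∀ l, (A l).Nonempty
  iUnion_cons : ∀ l, ⋃ a, A (a :: l) = A l
  disjoint : CantorScheme.Disjoint A
  vanishingDiam : CantorScheme.VanishingDiam A

theorem exists_isClopenPartitionScheme {X : Type*} [PseudoMetricSpace X] [CompleteSpace X]
    [SecondCountableTopology X] [Nonempty X] (hNLC : ∀ x : X, ¬∃ s ∈ 𝓝 x, IsCompact s)
    {B : Set (Set X)} (hB : IsTopologicalBasis B) (hBc : ∀ s ∈ B, IsClopen s) :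
    ∃ A : List ℕ → Set X, IsClopenPartitionScheme A := by
  have hnc : ∀ U : Set X, IsClopen U → U.Nonempty → ¬IsCompact U :=
    fun U hU ⟨x, hx⟩ hc => hNLC x ⟨U, hU.isOpen.mem_nhds hx, hc⟩
  choose D hDc hDne hDdisj hDU hDdiam using
    fun (U : {U : Set X // IsClopen U ∧ U.Nonempty}) (n : ℕ) =>
      U.2.1.exists_partition hB hBc (hnc U U.2.1 U.2.2) (Nat.one_div_pos_of_nat (n := n))
  let S : List ℕ → {U : Set X // IsClopen U ∧ U.Nonempty} := fun l =>
    l.rec ⟨univ, isClopen_univ, univ_nonempty⟩ fun a l U =>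
      ⟨D U l.length a, hDc U l.length a, hDne U l.length a⟩
  refine ⟨fun l => (S l).1, ⟨rfl, fun l => (S l).2.1, fun l => (S l).2.2,
    fun l => hDU (S l) l.length, fun l => hDdisj (S l) l.length, fun x => ?_⟩⟩
  have hlim : Tendsto (fun n : ℕ => ENNReal.ofReal (1 / (n + 1))) atTop (𝓝 0) := by
    simpa using ENNReal.tendsto_ofReal (tendsto_one_div_add_atTop_nhds_zero_nat (𝕜 := ℝ))
  rw [← tendsto_add_atTop_iff_nat 1]
  refine tendsto_of_tendsto_of_tendsto_of_le_of_le tendsto_const_nhds hlim (fun _ => zero_le)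
    fun n => ?_
  rw [res_succ]
  exact (hDdiam (S (res x n)) _ (x n)).trans_eq (by rw [res_length])

namespace IsClopenPartitionScheme

section PseudoMetric

variable {X : Type*} [PseudoMetricSpace X] {A : List ℕ → Set X} (h : IsClopenPartitionScheme A)
include h

theorem antitone : CantorScheme.Antitone A := fun l a =>
  h.iUnion_cons l ▸ subset_iUnion (fun a => A (a :: l)) a

theorem exists_forall_mem_res (x : X) : ∃ z : ℕ → ℕ, ∀ n, x ∈ A (res z n) := by
  choose! next hnext using fun l (hl : x ∈ A l) => mem_iUnion.1 (by rwa [h.iUnion_cons])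
  let path : ℕ → List ℕ := fun n => Nat.rec [] (fun _ l => next l :: l) n
  have hres : ∀ n, res (fun k => next (path k)) n = path n := by
    intro n
    induction n with
    | zero => rfl
    | succ n ih => rw [res_succ, ih]
  have hmem : ∀ n, x ∈ A (path n) := fun n =>
    Nat.rec (h.nil ▸ mem_univ x) (fun _ ih => hnext _ ih) n
  exact ⟨fun k => next (path k), fun n => hres n ▸ hmem n⟩

theorem mem_iff_res_eq {z : ℕ → ℕ} {x : X} (hz : ∀ n, x ∈ A (res z n)) {l : List ℕ} :
    x ∈ A l ↔ res z l.length = l :=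
  ⟨fun hx => by_contra fun hne => disjoint_left.1
    (h.disjoint.disjoint_of_length_eq h.antitone (res_length z _) hne) (hz _) hx,
   fun hl => hl ▸ hz _⟩

end PseudoMetric

section Metric

variable {X : Type*} [MetricSpace X] {A : List ℕ → Set X} (h : IsClopenPartitionScheme A)
include h

theorem eq_of_forall_mem_res {z : ℕ → ℕ} {x y : X} (hx : ∀ n, x ∈ A (res z n))
    (hy : ∀ n, y ∈ A (res z n)) : x = y :=
  eq_of_forall_dist_le fun ε hε =>
    let ⟨n, hn⟩ := h.vanishingDiam.dist_lt ε hε z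
    (hn x (hx n) y (hy n)).le

theorem nonempty_homeomorph [CompleteSpace X] : Nonempty (X ≃ₜ (ℕ → ℕ)) := by
  choose b hb using h.exists_forall_mem_res
  have hdom : (CantorScheme.inducedMap A).1 = univ :=
    (h.antitone.closureAntitone fun l => (h.isClopen l).isClosed).map_of_vanishingDiam
      h.vanishingDiam h.nonempty
  let f : (ℕ → ℕ) → X := fun z => (CantorScheme.inducedMap A).2 ⟨z, hdom ▸ mem_univ z⟩
  have hbf : ∀ z, b (f z) = z := fun z => res_injective <| funext fun n => by
    simpa only [res_length] using (h.mem_iff_res_eq (hb (f z))).1 (CantorScheme.map_mem _ n)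
  have hbinj : Injective b := fun x y hxy => h.eq_of_forall_mem_res (hb x) (hxy ▸ hb y)
  have hbcont : Continuous b := by
    refine (isTopologicalBasis_cylinders _).continuous_iff.2 ?_
    rintro _ ⟨z, n, rfl⟩
    have : b ⁻¹' cylinder z n = A (res z n) := by
      ext x
      simp [cylinder_eq_res, h.mem_iff_res_eq (hb x), res_length]
    exact this ▸ (h.isClopen _).isOpen
  exact ⟨{
    toFun := b
    invFun := f
    left_inv := fun x => hbinj (hbf (b x))
    right_inv := hbf
    continuous_toFun := hbcont
    continuous_invFun := h.vanishingDiam.map_continuous.comp (by fun_prop) }⟩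

end Metric

end IsClopenPartitionScheme

/-- Alexandrov–Urysohn: a nonempty Polish, nowhere locally compact, zero-dimensional
space is homeomorphic to the Baire space ℕ^ℕ. -/
theorem alexandrov_urysohn (X : Type*) [TopologicalSpace X] [Nonempty X]
    (hPolish : PolishSpace X)
    (hNLC : ∀ x : X, ¬∃ s ∈ nhds x, IsCompact s)
    (hZD : ∃ B : Set (Set X), TopologicalSpace.IsTopologicalBasis B ∧ ∀ s ∈ B, IsClopen s) :
    Nonempty (X ≃ₜ (ℕ → ℕ)) := by
  let := upgradeIsCompletelyMetrizable X
  obtain ⟨B, hB, hBc⟩ := hZD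
  obtain ⟨A, hA⟩ := exists_isClopenPartitionScheme hNLC hB hBc
  exact hA.nonempty_homeomorph
end

section
/- The product of a Menger space with a σ-compact space is Menger. -/
/-!
Cover `Y` by countably many compact sets `K m`. Given open covers `𝒰 n` of `X × Y`, the tube
lemma turns each `𝒰 n` into an open cover of `X` by sets `O` for which `O ×ˢ K m` lies in the
union of finitely many members of `𝒰 n`; the Menger property of `X` applied to these covers
makes each `univ ×ˢ K m` Menger inside `X × Y`, and splitting the sequence of covers into
countably many subsequences, one for each `m`, handles all the `K m` at once.
-/

open Set

section

variable {X Y Z : Type*} [TopologicalSpace X] [TopologicalSpace Y] [TopologicalSpace Z]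

/-- The Menger property of a subset `s`, tested against open covers of the ambient space. -/
def IsMengerSet (s : Set Z) : Prop :=
  ∀ U : ℕ → Set (Set Z), (∀ n, (∀ u ∈ U n, IsOpen u) ∧ ⋃₀ U n = univ) →
    ∃ V : ℕ → Set (Set Z), (∀ n, V n ⊆ U n ∧ (V n).Finite) ∧ s ⊆ ⋃ n, ⋃₀ V n

theorem mengerSpace_iff_isMengerSet_univ : MengerSpace Z ↔ IsMengerSet (univ : Set Z) := by
  simp only [MengerSpace, IsMengerSet, univ_subset_iff]

theorem IsMengerSet.iUnion {s : ℕ → Set Z} (hs : ∀ m, IsMengerSet (s m)) :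
    IsMengerSet (⋃ m, s m) := by
  intro U hU
  choose W hW hsW using fun m => hs m (fun n => U (Nat.pair m n)) (fun n => hU _)
  refine ⟨fun k => W k.unpair.1 k.unpair.2, fun k => ?_, ?_⟩
  · simpa only [Nat.pair_unpair] using hW k.unpair.1 k.unpair.2
  · refine iUnion_subset fun m => (hsW m).trans <| iUnion_subset fun n => ?_
    refine subset_iUnion_of_subset (Nat.pair m n) ?_
    simp only [Nat.unpair_pair, subset_refl]

def tubeCover (𝒰 : Set (Set (X × Y))) (K : Set Y) : Set (Set X) :=
  {O | IsOpen O ∧ ∃ F ⊆ 𝒰, F.Finite ∧ O ×ˢ K ⊆ ⋃₀ F}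

theorem sUnion_tubeCover {𝒰 : Set (Set (X × Y))} (h𝒰 : ∀ u ∈ 𝒰, IsOpen u) (hcover : ⋃₀ 𝒰 = univ)
    {K : Set Y} (hK : IsCompact K) : ⋃₀ tubeCover 𝒰 K = univ := by
  refine eq_univ_of_forall fun x => ?_
  obtain ⟨F, hF𝒰, hFfin, hxK⟩ : ∃ F ⊆ 𝒰, F.Finite ∧ ({x} : Set X) ×ˢ K ⊆ ⋃ u ∈ F, u :=
    (isCompact_singleton.prod hK).elim_finite_subcover_image h𝒰
      (by simp only [← sUnion_eq_biUnion, hcover, subset_univ])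
  rw [← sUnion_eq_biUnion] at hxK
  obtain ⟨O, V, hO, -, hxO, hKV, hOV⟩ := generalized_tube_lemma isCompact_singleton hK
    (isOpen_sUnion fun u hu => h𝒰 u (hF𝒰 hu)) hxK
  exact ⟨O, ⟨hO, F, hF𝒰, hFfin, (prod_mono le_rfl hKV).trans hOV⟩, hxO rfl⟩

theorem MengerSpace.isMengerSet_univ_prod (hX : MengerSpace X) {K : Set Y} (hK : IsCompact K) :
    IsMengerSet (univ ×ˢ K : Set (X × Y)) := by
  intro U hU
  obtain ⟨G, hG, hGcover⟩ := hX (fun n => tubeCover (U n) K)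
    fun n => ⟨fun O hO => hO.1, sUnion_tubeCover (hU n).1 (hU n).2 hK⟩
  choose! F hFU hFfin hOF using fun n O (hO : O ∈ G n) => ((hG n).1 hO).2
  refine ⟨fun n => ⋃ O ∈ G n, F n O, fun n => ⟨iUnion₂_subset fun O hO => hFU n O hO,
    (hG n).2.biUnion fun O hO => hFfin n O hO⟩, ?_⟩
  rintro ⟨x, y⟩ ⟨-, hy⟩
  obtain ⟨n, O, hO, hxO⟩ : ∃ n, ∃ O ∈ G n, x ∈ O := by
    have hx : x ∈ ⋃ n, ⋃₀ G n := hGcover ▸ mem_univ x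
    simpa only [mem_iUnion, mem_sUnion] using hx
  obtain ⟨u, hu, hxyu⟩ := hOF n O hO ⟨hxO, hy⟩
  exact mem_iUnion.2 ⟨n, u, mem_biUnion hO hu, hxyu⟩

end

theorem menger_prod_sigmaCompact {X Y : Type*} [TopologicalSpace X] [TopologicalSpace Y]
    (hX : MengerSpace X) [SigmaCompactSpace Y] : MengerSpace (X × Y) := by
  have hcover : (univ : Set (X × Y)) = ⋃ m, univ ×ˢ compactCovering Y m := by
    rw [← prod_iUnion, iUnion_compactCovering, univ_prod_univ]
  rw [mengerSpace_iff_isMengerSet_univ, hcover]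
  exact IsMengerSet.iUnion fun m => hX.isMengerSet_univ_prod (isCompact_compactCovering Y m)
end

section
/- If X is a Menger subset of the Cantor space 2^ℕ, then (2^ℕ ∖ X)^ℕ (with the product topology) is completely Baire. -/
/-!
Put `M = ⋃ n, {p | p n ∈ X}`, a Menger subset of the compact space `(2^ℕ)^ℕ` whose complement
is `(2^ℕ ∖ X)^ℕ`. A closed subset `C` of the complement has `closure C ∖ C ⊆ M`. If `C` were not
Baire, some nonempty relatively open `O ⊆ C` would be meagre, and `L ∖ O` would be Menger for
`L = closure O`. Inside `L` one builds a Lusin scheme of balls along `O`: the balls of level `n + 1`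
avoid the `n`-th nowhere dense set covering `O`, and the children of each ball converge to a
point of `O`. The branches form a copy of `ℕ^ℕ` in `L ∖ O` which is closed in `L ∖ O` (its only
other limit points lie in `O`), hence Menger; but a copy of `ℕ^ℕ` whose levels are separated by
disjoint open sets is never Menger.
-/

open Set Filter Topology Metric PiNat Function

/-- Covers are by open sets of the ambient space, unlike `MengerSpace ↥S`. -/
def IsMenger {P : Type*} [TopologicalSpace P] (S : Set P) : Prop :=
  ∀ U : ℕ → Set (Set P), (∀ n, (∀ u ∈ U n, IsOpen u) ∧ S ⊆ ⋃₀ U n) →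
    ∃ V : ℕ → Set (Set P), (∀ n, V n ⊆ U n ∧ (V n).Finite) ∧ S ⊆ ⋃ n, ⋃₀ V n

section Menger

variable {P Q : Type*} [TopologicalSpace P] [TopologicalSpace Q] {S T : Set P}

theorem MengerSpace.isMenger_univ (h : MengerSpace P) : IsMenger (univ : Set P) := by
  intro U hU
  obtain ⟨V, hV, hcov⟩ := h U fun n => ⟨(hU n).1, univ_subset_iff.1 (hU n).2⟩
  exact ⟨V, hV, hcov.symm.subset⟩

theorem IsCompact.isMenger (h : IsCompact S) : IsMenger S := by
  intro U hU
  obtain ⟨t, htU, htf, hcov⟩ := h.elim_finite_subcover_image (hU 0).1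
    (sUnion_eq_biUnion ▸ (hU 0).2)
  refine ⟨fun n => if n = 0 then t else ∅, fun n => ?_, ?_⟩
  · by_cases hn : n = 0 <;> simp [hn, htU, htf]
  · exact hcov.trans <| sUnion_eq_biUnion ▸ subset_iUnion_of_subset 0 (by simp)

theorem IsMenger.exists_finite {ι : ℕ → Type*} (hS : IsMenger S) (u : ∀ n, ι n → Set P)
    (hu : ∀ n i, IsOpen (u n i)) (hcov : ∀ n, S ⊆ ⋃ i, u n i) :
    ∃ t : ∀ n, Set (ι n), (∀ n, (t n).Finite) ∧ S ⊆ ⋃ n, ⋃ i ∈ t n, u n i := by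
  obtain ⟨V, hV, hSV⟩ := hS (fun n => range (u n))
    fun n => ⟨forall_mem_range.2 (hu n), by rw [sUnion_range]; exact hcov n⟩
  have hVt : ∀ n, ∃ t : Set (ι n), t.Finite ∧ V n = u n '' t := fun n => by
    obtain ⟨t, -, htf, ht⟩ := exists_subset_image_finite_and.1
      ⟨V n, image_univ.symm ▸ (hV n).1, (hV n).2, rfl⟩
    exact ⟨t, htf, ht⟩
  choose t htf hVt using hVt
  refine ⟨t, htf, hSV.trans fun x hx => ?_⟩
  simp only [hVt, sUnion_image, mem_iUnion] at hx ⊢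
  exact hx

theorem IsMenger.image (hS : IsMenger S) {f : P → Q} (hf : Continuous f) : IsMenger (f '' S) := by
  intro U hU
  obtain ⟨t, htf, hSt⟩ := hS.exists_finite (fun n (u : U n) => f ⁻¹' u)
    (fun n u => ((hU n).1 u u.2).preimage hf) fun n x hx => by
      obtain ⟨u, hu, hxu⟩ := (hU n).2 (mem_image_of_mem f hx)
      exact mem_iUnion.2 ⟨⟨u, hu⟩, hxu⟩
  refine ⟨fun n => Subtype.val '' t n, fun n => ⟨by simp, (htf n).image _⟩, ?_⟩
  rintro _ ⟨x, hx, rfl⟩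
  obtain ⟨n, u, hu, hxu⟩ : ∃ n, ∃ u ∈ t n, x ∈ f ⁻¹' u := by simpa using hSt hx
  exact mem_iUnion.2 ⟨n, u, mem_image_of_mem _ hu, hxu⟩

theorem MengerSpace.isMenger_coe {S : Set P} (h : MengerSpace S) : IsMenger S := by
  simpa using h.isMenger_univ.image continuous_subtype_val

theorem IsMenger.inter_right (hS : IsMenger S) (hT : IsClosed T) : IsMenger (S ∩ T) := by
  intro U hU
  obtain ⟨V, hV, hSV⟩ := hS (fun n => insert Tᶜ (U n)) fun n =>
    ⟨forall_mem_insert.2 ⟨hT.isOpen_compl, (hU n).1⟩, fun x hx => by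
      by_cases hxT : x ∈ T
      · exact sUnion_subset_sUnion (subset_insert _ _) ((hU n).2 ⟨hx, hxT⟩)
      · exact ⟨Tᶜ, mem_insert _ _, hxT⟩⟩
  refine ⟨fun n => V n \ {Tᶜ}, fun n => ⟨?_, (hV n).2.sdiff⟩, ?_⟩
  · rintro u ⟨hu, hne⟩
    exact ((hV n).1 hu).resolve_left hne
  · rintro x ⟨hxS, hxT⟩
    obtain ⟨n, v, hv, hxv⟩ : ∃ n, ∃ v ∈ V n, x ∈ v := by simpa using hSV hxS
    exact mem_iUnion.2 ⟨n, v, ⟨hv, by rintro rfl; exact hxv hxT⟩, hxv⟩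

theorem IsMenger.union (hS : IsMenger S) (hT : IsMenger T) : IsMenger (S ∪ T) := by
  intro U hU
  obtain ⟨V, hV, hSV⟩ := hS U fun n => ⟨(hU n).1, subset_union_left.trans (hU n).2⟩
  obtain ⟨W, hW, hTW⟩ := hT U fun n => ⟨(hU n).1, subset_union_right.trans (hU n).2⟩
  refine ⟨fun n => V n ∪ W n, fun n => ⟨union_subset (hV n).1 (hW n).1, (hV n).2.union (hW n).2⟩,
    union_subset (hSV.trans ?_) (hTW.trans ?_)⟩ <;>
  exact iUnion_mono fun n => sUnion_mono (by simp)

theorem isMenger_iUnion {S : ℕ → Set P} (h : ∀ m, IsMenger (S m)) : IsMenger (⋃ m, S m) := by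
  intro U hU
  choose V hV hSV using fun m => h m (fun k => U (Nat.pair m k))
    fun k => ⟨(hU _).1, (subset_iUnion S m).trans (hU _).2⟩
  refine ⟨fun j => V j.unpair.1 j.unpair.2, fun j => by simpa using hV j.unpair.1 j.unpair.2, ?_⟩
  refine iUnion_subset fun m => (hSV m).trans <| iUnion_subset fun k => ?_
  exact subset_iUnion_of_subset (Nat.pair m k) (by simp)

theorem IsMenger.preimage_of_isClosedMap {f : P → Q} (hf : IsClosedMap f)
    (hfib : ∀ q, IsCompact (f ⁻¹' {q})) {T : Set Q} (hT : IsMenger T) : IsMenger (f ⁻¹' T) := by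
  intro U hU
  -- each fibre is covered by finitely many members of `U n`, and then so is a tube around it
  have tube : ∀ n (q : T), ∃ F ⊆ U n, F.Finite ∧ ∃ W, IsOpen W ∧ (q : Q) ∈ W ∧ f ⁻¹' W ⊆ ⋃₀ F := by
    intro n q
    obtain ⟨F, hFU, hFf, hF⟩ := (hfib q).elim_finite_subcover_image (hU n).1
      (sUnion_eq_biUnion ▸ fun x hx =>
        (hU n).2 (show f x ∈ T from (mem_singleton_iff.1 hx).symm ▸ q.2))
    have hFo : IsOpen (⋃₀ F) := isOpen_sUnion fun u hu => (hU n).1 u (hFU hu)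
    refine ⟨F, hFU, hFf, (f '' (⋃₀ F)ᶜ)ᶜ, (hf _ hFo.isClosed_compl).isOpen_compl, ?_, ?_⟩
    · rintro ⟨x, hx, hxq⟩
      exact hx (sUnion_eq_biUnion ▸ hF (mem_singleton_iff.2 hxq))
    · intro x hx
      by_contra hxF
      exact hx (mem_image_of_mem f hxF)
  choose F hFU hFf W hWo hqW hWF using tube
  obtain ⟨t, htf, hTt⟩ := hT.exists_finite W hWo fun n q hq => mem_iUnion.2 ⟨⟨q, hq⟩, hqW n _⟩
  refine ⟨fun n => ⋃ q ∈ t n, F n q, fun n => ⟨iUnion₂_subset fun q _ => hFU n q,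
    (htf n).biUnion fun q _ => hFf n q⟩, fun x hx => ?_⟩
  obtain ⟨n, q, hq, hxq⟩ : ∃ n, ∃ q ∈ t n, f x ∈ W n q := by simpa using hTt hx
  obtain ⟨u, hu, hxu⟩ := hWF n q hxq
  exact mem_iUnion.2 ⟨n, u, mem_biUnion hq hu, hxu⟩

theorem IsMenger.exists_iUnion_of_monotone (hS : IsMenger S) {U : ℕ → ℕ → Set P}
    (hU : ∀ n k, IsOpen (U n k)) (hmono : ∀ n, Monotone (U n)) (hcov : ∀ n, S ⊆ ⋃ k, U n k) :
    ∃ K : ℕ → ℕ, S ⊆ ⋃ n, U n (K n) := by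
  obtain ⟨t, htf, hSt⟩ := hS.exists_finite U hU hcov
  choose K hK using fun n => (htf n).bddAbove
  exact ⟨K, hSt.trans <| iUnion_mono fun n => iUnion₂_subset fun k hk => hmono n (hK n hk)⟩

end Menger

/-- The Baire space `ℕ^ℕ` is not Menger, in the form of a copy of it whose levels are separated
by disjoint open sets. -/
theorem not_isMenger_range {P : Type*} [TopologicalSpace P] {x : (ℕ → ℕ) → P}
    {U : List ℕ → Set P} (hU : ∀ s, IsOpen (U s)) (hx : ∀ f n, x f ∈ U (res f n))
    (hdisj : ∀ s t, s.length = t.length → s ≠ t → Disjoint (U s) (U t)) :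
    ¬ IsMenger (range x) := by
  intro hM
  obtain ⟨K, hK⟩ := hM.exists_iUnion_of_monotone
    (U := fun n k => ⋃ (f : ℕ → ℕ) (_ : f n ≤ k), U (res f (n + 1)))
    (fun n k => isOpen_biUnion fun f _ => hU _)
    (fun n k k' hkk' => iUnion₂_mono' fun f hf => ⟨f, hf.trans hkk', subset_rfl⟩)
    (fun n => by
      rintro _ ⟨f, rfl⟩
      exact mem_iUnion.2 ⟨f n, mem_iUnion₂.2 ⟨f, le_rfl, hx f _⟩⟩)
  -- the branch through `K n + 1` escapes every `K n`-th member
  set g : ℕ → ℕ := fun n => K n + 1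
  obtain ⟨n, f, hf, hgf⟩ : ∃ n, ∃ f : ℕ → ℕ, f n ≤ K n ∧ x g ∈ U (res f (n + 1)) := by
    simpa using hK (mem_range_self g)
  have hres : res f (n + 1) = res g (n + 1) := by
    by_contra hne
    exact (hdisj _ _ (by simp [res_length]) hne).le_bot ⟨hgf, hx g (n + 1)⟩
  simp only [res_succ, List.cons.injEq, g] at hres
  omega

theorem exists_tree {α : Type*} (p : α → Prop) (R : ℕ → α → (ℕ → α) → Prop) {a : α} (ha : p a)
    (h : ∀ n a, p a → ∃ b : ℕ → α, (∀ j, p (b j)) ∧ R n a b) :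
    ∃ T : List ℕ → α, T [] = a ∧ (∀ s, p (T s)) ∧ ∀ s, R s.length (T s) fun j => T (j :: s) := by
  choose b hbp hbR using h
  let T : List ℕ → {x // p x} := fun s =>
    s.rec ⟨a, ha⟩ fun j s (t : {x // p x}) => ⟨b s.length t t.2 j, hbp _ _ _ j⟩
  refine ⟨fun s => (T s).1, rfl, fun s => (T s).2, fun s => ?_⟩
  exact hbR s.length _ (T s).2

section Balls

variable {P : Type*} [MetricSpace P]

theorem pairwise_disjoint_annuli (q : P) {ρ : ℕ → ℝ} (hρ : Antitone ρ) :
    Pairwise (Disjoint on fun j => ball q (ρ j) \ closedBall q (ρ (j + 1))) :=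
  (pairwise_disjoint_on _).2 fun _ _ hjk => disjoint_left.2 fun _ hj hk =>
    hj.2 (ball_subset_closedBall.trans (closedBall_subset_closedBall (hρ hjk)) hk.1)

theorem exists_annuli_inter_nonempty {L : Set P} {q : P} (hq : q ∈ closure (L \ {q})) {ρ₀ : ℝ}
    (hρ₀ : 0 < ρ₀) : ∃ ρ : ℕ → ℝ, ρ 0 = ρ₀ ∧ Antitone ρ ∧ Tendsto ρ atTop (𝓝 0) ∧
      ∀ j, ((ball q (ρ j) \ closedBall q (ρ (j + 1))) ∩ L).Nonempty := by
  have next : ∀ ε : ℝ, ∃ ε', 0 < ε →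
      0 < ε' ∧ ε' < ε / 2 ∧ ((ball q ε \ closedBall q ε') ∩ L).Nonempty := by
    intro ε
    by_cases hε : 0 < ε
    · obtain ⟨y, ⟨hyL, hyq⟩, hy⟩ := Metric.mem_closure_iff.1 hq ε hε
      have hd : 0 < dist y q := dist_pos.2 hyq
      refine ⟨dist y q / 2, fun _ => ⟨by positivity, ?_, y, ⟨?_, ?_⟩, hyL⟩⟩
      · rw [dist_comm] at hy; linarith
      · rw [mem_ball, dist_comm]; exact hy
      · rw [mem_closedBall]; linarith
    · exact ⟨0, fun h => absurd h hε⟩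
  choose g hg using next
  have hpos : ∀ j, 0 < g^[j] ρ₀ := fun j => by
    induction j with
    | zero => exact hρ₀
    | succ j ih => rw [Function.iterate_succ_apply']; exact (hg _ ih).1
  have hhalf : ∀ j, g^[j + 1] ρ₀ < g^[j] ρ₀ / 2 := fun j => by
    rw [Function.iterate_succ_apply']; exact (hg _ (hpos j)).2.1
  have hgeom : ∀ j, g^[j] ρ₀ ≤ ρ₀ * 2⁻¹ ^ j := fun j => by
    induction j with
    | zero => simp
    | succ j ih => rw [pow_succ]; linarith [hhalf j]
  refine ⟨fun j => g^[j] ρ₀, rfl, antitone_nat_of_succ_le fun j => by linarith [hhalf j, hpos j],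
    squeeze_zero (fun j => (hpos j).le) hgeom ?_, fun j => ?_⟩
  · simpa using (tendsto_pow_atTop_nhds_zero_of_lt_one (by norm_num : (0 : ℝ) ≤ 2⁻¹)
      (by norm_num)).const_mul ρ₀
  · simpa only [Function.iterate_succ_apply'] using (hg _ (hpos j)).2.2

theorem eq_of_mem_closure_iUnion {N : ℕ → Set P} {p q : P}
    (hN : ∀ ε > 0, ∀ᶠ j in atTop, N j ⊆ ball q ε) (hp : p ∈ closure (⋃ j, N j))
    (hpN : ∀ j, p ∉ closure (N j)) : p = q := by
  by_contra hpq
  have hε : 0 < dist p q / 2 := half_pos (dist_pos.2 hpq)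
  obtain ⟨J, hJ⟩ := eventually_atTop.1 (hN _ hε)
  have hsub : (⋃ j, N j) ⊆ (⋃ j < J, N j) ∪ ball q (dist p q / 2) := iUnion_subset fun j => by
    rcases lt_or_ge j J with hjJ | hjJ
    · exact subset_union_of_subset_left (subset_iUnion₂ (s := fun j _ => N j) j hjJ) _
    · exact subset_union_of_subset_right (hJ j hjJ) _
  have hp' := closure_mono hsub hp
  rw [closure_union, closure_iUnion₂_lt_nat] at hp'
  rcases hp' with hp' | hp'
  · obtain ⟨j, -, hj⟩ := mem_iUnion₂.1 hp'
    exact hpN j hj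
  · linarith [mem_closedBall.1 (closure_ball_subset_closedBall hp')]

end Balls

section Scheme

variable {P : Type*} [MetricSpace P] {L O : Set P} {B : ℕ → Set P}

theorem exists_children {F : Set P} (hLO : L ⊆ closure O) (hF : IsClosed F)
    (hFL : ∀ V, IsOpen V → V ∩ L ⊆ F → V ∩ L = ∅) (hO : ∀ q ∈ O, q ∈ closure (L \ {q}))
    {c : P} {r δ : ℝ} (hc : c ∈ L) (hr : 0 < r) (hδ : 0 < δ) :
    ∃ z : ℕ → P, ∃ t : ℕ → ℝ, (∀ j, z j ∈ L ∧ 0 < t j) ∧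
      (∀ j, t j ≤ δ ∧ closedBall (z j) (t j) ⊆ ball c r \ F) ∧
      Pairwise (Disjoint on fun j => closedBall (z j) (t j)) ∧
      ∃ q ∈ O, ∀ ε > 0, ∀ᶠ j in atTop, closedBall (z j) (t j) ⊆ ball q ε := by
  obtain ⟨q, hqO, hcq⟩ := Metric.mem_closure_iff.1 (hLO hc) (r / 2) (half_pos hr)
  obtain ⟨ρ, hρ0, hρa, hρt, hρL⟩ := exists_annuli_inter_nonempty (hO q hqO) (half_pos hr)
  have hA : ∀ j, ∃ z ∈ L, ∃ t, 0 < t ∧ t ≤ δ ∧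
      closedBall z t ⊆ (ball q (ρ j) \ closedBall q (ρ (j + 1))) \ F := by
    intro j
    have hAo : IsOpen (ball q (ρ j) \ closedBall q (ρ (j + 1))) :=
      isOpen_ball.sdiff isClosed_closedBall
    obtain ⟨z, ⟨hzA, hzL⟩, hzF⟩ :=
      sdiff_nonempty.2 fun hsub => (hρL j).ne_empty (hFL _ hAo hsub)
    obtain ⟨ε, hε, hεF⟩ := Metric.isOpen_iff.1 (hAo.sdiff hF) z ⟨hzA, hzF⟩
    exact ⟨z, hzL, min (ε / 2) δ, by positivity, min_le_right _ _,
      (closedBall_subset_ball (by linarith [min_le_left (ε / 2) δ])).trans hεF⟩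
  choose z hzL t ht htδ hzt using hA
  have hρr : ∀ j, ball q (ρ j) ⊆ ball c r := fun j =>
    ball_subset_ball' (by linarith [hρa (Nat.zero_le j), dist_comm c q])
  refine ⟨z, t, fun j => ⟨hzL j, ht j⟩, fun j => ⟨htδ j, ?_⟩, ?_, q, hqO, fun ε hε => ?_⟩
  · exact (hzt j).trans (sdiff_subset_sdiff_left (sdiff_subset.trans (hρr j)))
  · exact (pairwise_disjoint_annuli q hρa).mono fun j k h =>
      h.mono ((hzt j).trans sdiff_subset) ((hzt k).trans sdiff_subset)
  · filter_upwards [hρt.eventually (gt_mem_nhds hε)] with j hj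
    exact (hzt j).trans (sdiff_subset.trans (sdiff_subset.trans (ball_subset_ball hj.le)))

-- Node `s` is the ball `closedBall (c s) (r s)`; its children are the nodes `j :: s`, so that
-- a branch `f : ℕ → ℕ` passes through the nodes `res f n`.
structure IsLusinScheme (L O : Set P) (B : ℕ → Set P) (c : List ℕ → P) (r : List ℕ → ℝ) :
    Prop where
  mem : ∀ s, c s ∈ L
  radius_pos : ∀ s, 0 < r s
  radius_le : ∀ s, r s ≤ 2⁻¹ ^ s.length
  child_subset : ∀ j s, closedBall (c (j :: s)) (r (j :: s)) ⊆ ball (c s) (r s) \ B s.length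
  child_disjoint : ∀ s, Pairwise (Disjoint on fun j => closedBall (c (j :: s)) (r (j :: s)))
  child_tendsto : ∀ s, ∃ q ∈ O, ∀ ε > 0, ∀ᶠ j in atTop,
    closedBall (c (j :: s)) (r (j :: s)) ⊆ ball q ε

theorem exists_isLusinScheme (hOL : O ⊆ L) (hLO : L ⊆ closure O) (hO : O.Nonempty)
    (hB : ∀ n, IsClosed (B n)) (hBL : ∀ n V, IsOpen V → V ∩ L ⊆ B n → V ∩ L = ∅)
    (hOB : O ⊆ ⋃ n, B n) : ∃ c r, IsLusinScheme L O B c r := by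
  have hiso : ∀ q ∈ O, q ∈ closure (L \ {q}) := by
    intro q hq
    by_contra hq'
    obtain ⟨n, hn⟩ := mem_iUnion.1 (hOB hq)
    have hsub : (closure (L \ {q}))ᶜ ∩ L ⊆ B n := by
      rintro y ⟨hy, hyL⟩
      rcases eq_or_ne y q with rfl | hne
      · exact hn
      · exact absurd (subset_closure (show y ∈ L \ {q} from ⟨hyL, hne⟩)) hy
    exact eq_empty_iff_forall_notMem.1 (hBL n _ isClosed_closure.isOpen_compl hsub) q ⟨hq', hOL hq⟩
  obtain ⟨x₀, hx₀⟩ := hO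
  obtain ⟨T, hT₀, hTp, hTR⟩ := exists_tree (fun a : P × ℝ => a.1 ∈ L ∧ 0 < a.2)
    (fun n a b => (∀ j, (b j).2 ≤ 2⁻¹ ^ (n + 1) ∧ closedBall (b j).1 (b j).2 ⊆ ball a.1 a.2 \ B n) ∧
      Pairwise (Disjoint on fun j => closedBall (b j).1 (b j).2) ∧
      ∃ q ∈ O, ∀ ε > 0, ∀ᶠ j in atTop, closedBall (b j).1 (b j).2 ⊆ ball q ε)
    (a := (x₀, 1)) ⟨hOL hx₀, one_pos⟩ fun n a ha => by
      obtain ⟨z, t, hzt, hsub, hdisj, hq⟩ :=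
        exists_children hLO (hB n) (hBL n) hiso ha.1 ha.2 (δ := 2⁻¹ ^ (n + 1)) (by positivity)
      exact ⟨fun j => (z j, t j), hzt, hsub, hdisj, hq⟩
  refine ⟨fun s => (T s).1, fun s => (T s).2, fun s => (hTp s).1, fun s => (hTp s).2, ?_,
    fun j s => ((hTR s).1 j).2, fun s => (hTR s).2.1, fun s => (hTR s).2.2⟩
  rintro (_ | ⟨j, s⟩)
  · simp [hT₀]
  · exact ((hTR s).1 j).1

namespace IsLusinScheme

variable {c : List ℕ → P} {r : List ℕ → ℝ} {x : (ℕ → ℕ) → P}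

theorem closedBall_child_subset (h : IsLusinScheme L O B c r) (j : ℕ) (s : List ℕ) :
    closedBall (c (j :: s)) (r (j :: s)) ⊆ closedBall (c s) (r s) :=
  (h.child_subset j s).trans (sdiff_subset.trans ball_subset_closedBall)

theorem antitone_closedBall_res (h : IsLusinScheme L O B c r) (f : ℕ → ℕ) :
    Antitone fun n => closedBall (c (res f n)) (r (res f n)) :=
  antitone_nat_of_succ_le fun n => by
    simp only [res_succ]
    exact h.closedBall_child_subset _ _

theorem exists_mem_closedBall_res [CompleteSpace P] (h : IsLusinScheme L O B c r) (f : ℕ → ℕ) :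
    ∃ x, ∀ n, x ∈ closedBall (c (res f n)) (r (res f n)) := by
  have hmem : ∀ m n, n ≤ m → c (res f m) ∈ closedBall (c (res f n)) (r (res f n)) :=
    fun m n hnm => h.antitone_closedBall_res f hnm (mem_closedBall_self (h.radius_pos _).le)
  have hcauchy : CauchySeq fun n => c (res f n) := by
    refine cauchySeq_of_le_geometric 2⁻¹ 1 (by norm_num) fun n => ?_
    rw [one_mul, dist_comm]
    exact (mem_closedBall.1 (hmem (n + 1) n n.le_succ)).trans
      ((h.radius_le _).trans_eq (by rw [res_length]))
  obtain ⟨x, hx⟩ := cauchySeq_tendsto_of_complete hcauchy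
  exact ⟨x, fun n => isClosed_closedBall.mem_of_tendsto hx
    (eventually_atTop.2 ⟨n, fun m hm => hmem m n hm⟩)⟩

theorem eq_of_forall_mem_closedBall_res (h : IsLusinScheme L O B c r) {f : ℕ → ℕ} {x y : P}
    (hx : ∀ n, x ∈ closedBall (c (res f n)) (r (res f n)))
    (hy : ∀ n, y ∈ closedBall (c (res f n)) (r (res f n))) : x = y := by
  refine eq_of_forall_dist_le fun ε hε => ?_
  obtain ⟨n, hn⟩ := exists_pow_lt_of_lt_one (half_pos hε) (by norm_num : (2⁻¹ : ℝ) < 1)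
  have hr : r (res f n) ≤ 2⁻¹ ^ n := (h.radius_le _).trans_eq (by rw [res_length])
  calc dist x y ≤ dist x (c (res f n)) + dist y (c (res f n)) := dist_triangle_right _ _ _
    _ ≤ ε := by linarith [mem_closedBall.1 (hx n), mem_closedBall.1 (hy n)]

theorem disjoint_closedBall (h : IsLusinScheme L O B c r) {s t : List ℕ}
    (hlen : s.length = t.length) (hne : s ≠ t) :
    Disjoint (closedBall (c s) (r s)) (closedBall (c t) (r t)) := by
  induction s generalizing t with
  | nil => exact absurd (List.length_eq_zero_iff.1 hlen.symm).symm hne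
  | cons j s ih =>
    obtain _ | ⟨k, t⟩ := t
    · simp at hlen
    by_cases hst : s = t
    · subst hst
      exact h.child_disjoint s fun hjk => hne (hjk ▸ rfl)
    · exact (ih (by simpa using hlen) hst).mono (h.closedBall_child_subset j s)
        (h.closedBall_child_subset k t)

theorem closure_range_subset (h : IsLusinScheme L O B c r)
    (hx : ∀ f n, x f ∈ closedBall (c (res f n)) (r (res f n))) :
    closure (range x) ⊆ range x ∪ O := by
  intro p hp
  set N : List ℕ → Set P := fun s => x '' {f | res f s.length = s}
  have hN : ∀ s, N s ⊆ closedBall (c s) (r s) := by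
    rintro s _ ⟨f, hf, rfl⟩
    have := hx f s.length
    rwa [show res f s.length = s from hf] at this
  have hsplit : ∀ s, N s ⊆ ⋃ j, N (j :: s) := by
    rintro s _ ⟨f, hf, rfl⟩
    exact mem_iUnion.2 ⟨f s.length, f, by simpa [res_succ] using hf, rfl⟩
  set A : Set (List ℕ) := {s | p ∈ closure (N s)}
  have hroot : [] ∈ A := by simpa [A, N, res_zero] using hp
  by_cases hA : ∀ s ∈ A, ∃ j, j :: s ∈ A
  · -- follow a branch of nodes whose closures contain `p`
    choose! g hg using hA
    let S : ℕ → List ℕ := fun n => n.rec [] fun _ s => g s :: s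
    have hSA : ∀ n, S n ∈ A := fun n => by
      induction n with
      | zero => exact hroot
      | succ n ih => exact hg _ ih
    have hres : ∀ n, res (fun m => g (S m)) n = S n := fun n => by
      induction n with
      | zero => rfl
      | succ n ih => rw [res_succ, ih]
    refine Or.inl ⟨fun m => g (S m), h.eq_of_forall_mem_closedBall_res (hx _) fun n => ?_⟩
    rw [hres]
    exact closure_minimal (hN _) isClosed_closedBall (hSA n)
  · -- `p` lies in the closure of a node but of none of its children: it is their limit point
    push Not at hA
    obtain ⟨s, hs, hmax⟩ := hA
    obtain ⟨q, hq, hconv⟩ := h.child_tendsto s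
    exact Or.inr <| eq_of_mem_closure_iUnion
      (fun ε hε => (hconv ε hε).mono fun j hj => (hN _).trans hj)
      (closure_mono (hsplit s) hs) hmax ▸ hq

theorem range_subset_diff (h : IsLusinScheme L O B c r) (hL : IsClosed L)
    (hOB : O ⊆ ⋃ n, B n) (hx : ∀ f n, x f ∈ closedBall (c (res f n)) (r (res f n))) :
    range x ⊆ L \ O := by
  rintro _ ⟨f, rfl⟩
  refine ⟨hL.closure_eq ▸ Metric.mem_closure_iff.2 fun ε hε => ?_, fun hO => ?_⟩
  · obtain ⟨n, hn⟩ := exists_pow_lt_of_lt_one hε (by norm_num : (2⁻¹ : ℝ) < 1)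
    refine ⟨c (res f n), h.mem _, (mem_closedBall.1 (hx f n)).trans_lt ?_⟩
    exact (h.radius_le _).trans_lt (by rwa [res_length])
  · obtain ⟨n, hn⟩ := mem_iUnion.1 (hOB hO)
    have := h.child_subset (f n) (res f n) (res_succ f n ▸ hx f (n + 1))
    rw [res_length] at this
    exact this.2 hn

theorem not_isMenger_range (h : IsLusinScheme L O B c r)
    (hx : ∀ f n, x f ∈ closedBall (c (res f n)) (r (res f n))) : ¬ IsMenger (range x) :=
  _root_.not_isMenger_range (U := fun s => ball (c s) (r s)) (fun _ => isOpen_ball)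
    (fun f n => (h.child_subset (f n) (res f n) (res_succ f n ▸ hx f (n + 1))).1)
    fun _ _ hlen hne => (h.disjoint_closedBall hlen hne).mono ball_subset_closedBall
      ball_subset_closedBall

end IsLusinScheme

-- The hypotheses say that `O` is a nonempty, dense and meagre subset of the closed set `L`.
theorem not_isMenger_diff [CompleteSpace P] (hL : IsClosed L) (hOL : O ⊆ L)
    (hLO : L ⊆ closure O) (hO : O.Nonempty) (hB : ∀ n, IsClosed (B n))
    (hBL : ∀ n V, IsOpen V → V ∩ L ⊆ B n → V ∩ L = ∅)
    (hOB : O ⊆ ⋃ n, B n) : ¬ IsMenger (L \ O) := by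
  intro hM
  obtain ⟨c, r, h⟩ := exists_isLusinScheme hOL hLO hO hB hBL hOB
  choose x hx using h.exists_mem_closedBall_res
  have hclosed : range x = (L \ O) ∩ closure (range x) :=
    subset_antisymm (subset_inter (h.range_subset_diff hL hOB hx) subset_closure)
      fun p hp => (h.closure_range_subset hx hp.2).resolve_right hp.1.2
  exact h.not_isMenger_range hx (hclosed ▸ hM.inter_right isClosed_closure)

end Scheme

theorem not_subset_closure_sdiff {P : Type*} [TopologicalSpace P] {C G V : Set P} (hG : IsOpen G)
    (hCG : C ⊆ closure (C ∩ G)) (hV : IsOpen V) (hVC : (V ∩ C).Nonempty) :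
    ¬ V ∩ C ⊆ closure (C \ G) := by
  intro hsub
  obtain ⟨u, huV, huC⟩ := hVC
  obtain ⟨v, hvV, hvC, hvG⟩ := mem_closure_iff.1 (hCG huC) V hV huV
  obtain ⟨w, hwG, -, hwG'⟩ := mem_closure_iff.1 (hsub ⟨hvV, hvC⟩) G hG hvG
  exact hwG' hwG

theorem baireSpace_of_closure_sdiff_subset {P : Type*} [MetricSpace P] [CompactSpace P]
    {C M : Set P} (hM : IsMenger M) (hCM : closure C \ C ⊆ M) (hdisj : Disjoint C M) :
    BaireSpace C := by
  refine ⟨fun g hgo hgd => by_contra fun hnd => ?_⟩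
  choose G hGo hGg using fun n => isOpen_induced_iff.1 (hgo n)
  have hCG : ∀ n, C ⊆ closure (C ∩ G n) := fun n => by
    simpa [← hGg n, Subtype.image_preimage_coe, inter_comm] using Subtype.dense_iff.1 (hgd n)
  simp only [dense_iff_inter_open, not_forall, not_nonempty_iff_eq_empty] at hnd
  obtain ⟨o, hoo, ⟨z, hzo⟩, ho⟩ := hnd
  obtain ⟨W, hWo, rfl⟩ := isOpen_induced_iff.1 hoo
  -- `W ∩ C` is a nonempty open subset of `C` which is meagre in `C`
  refine not_isMenger_diff (L := closure (W ∩ C)) (B := fun n => closure (C \ G n))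
    isClosed_closure subset_closure subset_rfl ⟨z, hzo, z.2⟩ (fun _ => isClosed_closure)
    (fun n V hV hsub => ?_) (fun x hx => ?_) ?_
  · refine eq_empty_iff_forall_notMem.2 fun y ⟨hyV, hyL⟩ => ?_
    obtain ⟨u, huV, huW, huC⟩ := mem_closure_iff.1 hyL V hV hyV
    exact not_subset_closure_sdiff (hGo n) (hCG n) (hV.inter hWo) ⟨u, ⟨huV, huW⟩, huC⟩
      fun v ⟨⟨hvV, hvW⟩, hvC⟩ => hsub ⟨hvV, subset_closure ⟨hvW, hvC⟩⟩
  · by_contra hxB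
    simp only [mem_iUnion, not_exists] at hxB
    have hxG : ∀ n, x ∈ G n := fun n =>
      by_contra fun hxG => hxB n (subset_closure ⟨hx.2, hxG⟩)
    refine (eq_empty_iff_forall_notMem.1 ho) ⟨x, hx.2⟩ ⟨hx.1, mem_iInter.2 fun n => ?_⟩
    simp [← hGg n, hxG n]
  · have hsplit : closure (W ∩ C) \ (W ∩ C) = (closure (W ∩ C) \ W) ∪ (M ∩ closure (W ∩ C)) := by
      ext x
      constructor
      · rintro ⟨hx, hxWC⟩
        by_cases hxW : x ∈ W
        · exact Or.inr ⟨hCM ⟨closure_mono inter_subset_right hx, fun hxC => hxWC ⟨hxW, hxC⟩⟩, hx⟩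
        · exact Or.inl ⟨hx, hxW⟩
      · rintro (⟨hx, hxW⟩ | ⟨hxM, hx⟩)
        exacts [⟨hx, fun h => hxW h.1⟩, ⟨hx, fun h => disjoint_left.1 hdisj h.2 hxM⟩]
    rw [hsplit]
    exact (isClosed_closure.sdiff hWo).isCompact.isMenger.union (hM.inter_right isClosed_closure)

theorem Homeomorph.completelyBaire {X Y : Type*} [TopologicalSpace X] [TopologicalSpace Y]
    (e : X ≃ₜ Y) (h : CompletelyBaire X) : CompletelyBaire Y := fun C hC =>
  have := h _ (e.symm.isClosed_image.2 hC)
  (e.symm.image C).symm.baireSpace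

theorem completelyBaire_compl {P : Type*} [TopologicalSpace P] [CompactSpace P]
    [TopologicalSpace.MetrizableSpace P] {M : Set P} (hM : IsMenger M) :
    CompletelyBaire ↥Mᶜ := by
  let _ := TopologicalSpace.metrizableSpaceMetric P
  intro C hC
  have hemb := IsEmbedding.subtypeVal (p := (· ∈ Mᶜ))
  have : BaireSpace ((↑) '' C : Set P) := by
    refine baireSpace_of_closure_sdiff_subset hM (fun p ⟨hpC, hpC'⟩ => by_contra fun hpM => ?_)
      (disjoint_left.2 fun _ ⟨x, _, hx⟩ => hx ▸ x.2)
    have : (⟨p, hpM⟩ : ↥Mᶜ) ∈ closure C := by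
      rw [hemb.closure_eq_preimage_closure_image]
      exact hpC
    exact hpC' ⟨_, hC.closure_eq ▸ this, rfl⟩
  exact (hemb.homeomorphImage C).symm.baireSpace

theorem power_of_complement_completelyBaire (X : Set (ℕ → Bool)) (hX : MengerSpace ↥X) :
    CompletelyBaire (ℕ → ↥(Xᶜ)) := by
  -- `(Xᶜ)^ℕ` is the complement of `⋃ n, {p | p n ∈ X}` in the compact space `(2^ℕ)^ℕ`
  have hM : IsMenger (⋃ n, (fun p : ℕ → ℕ → Bool => p n) ⁻¹' X) :=
    isMenger_iUnion fun n => hX.isMenger_coe.preimage_of_isClosedMap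
      (continuous_apply n).isClosedMap
      fun _ => (isClosed_singleton.preimage (continuous_apply n)).isCompact
  have hemb : IsEmbedding (Pi.map fun _ : ℕ => ((↑) : ↥Xᶜ → ℕ → Bool)) :=
    .piMap fun _ => .subtypeVal
  have hrange : range (Pi.map fun _ : ℕ => ((↑) : ↥Xᶜ → ℕ → Bool)) =
      (⋃ n, (fun p : ℕ → ℕ → Bool => p n) ⁻¹' X)ᶜ := by
    ext p
    simp [range_piMap]
  exact hemb.toHomeomorph.symm.completelyBaire (hrange ▸ completelyBaire_compl hM)
end

section
/- Let X ⊆ 2^ℕ be closed under finite modifications (e.g., a filter extending the Fréchet filter) and non-meager in 2^ℕ, and let Y = 2^ℕ ∖ X. If Z ⊆ Y is dense in Y, has the Baire property in 2^ℕ, and is non-meager in Y, then there is a contradiction; hence every dense subset of Y with the Baire property is meager in Y. -/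
open Topology Filter Set

/-!
If `Z ⊆ Y := Xᶜ` has the Baire property and is not meagre, it is comeagre in some basic cylinder.
Since `Y` is closed under finite modifications, flipping the finitely many coordinates of the
cylinder moves any point of `Yᶜ` into the cylinder without leaving `Yᶜ`, so countably many
homeomorphic copies of the meagre set `Yᶜ ∩ cylinder` cover `Yᶜ = X`, contradicting `¬ IsMeagre X`.
Hence `Z` is meagre in `2^ℕ`, and meagreness passes to the subspace `Y`, which is dense as soon as
it is nonempty.
-/

/-- `X` is closed under finite modifications. -/
def ClosedUnderFiniteMod (X : Set (ℕ → Bool)) : Prop :=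
  ∀ x ∈ X, ∀ y : ℕ → Bool, {n | x n ≠ y n}.Finite → y ∈ X

lemma exists_finset_forall_eq_imp_mem {ι : Type*} {A : ι → Type*} [∀ i, TopologicalSpace (A i)]
    {s : Set (∀ i, A i)} {x : ∀ i, A i} (hs : s ∈ 𝓝 x) :
    ∃ I : Finset ι, ∀ y, (∀ i ∈ I, y i = x i) → y ∈ s := by
  simp only [nhds_pi, Filter.mem_pi'] at hs
  obtain ⟨I, t, htx, hts⟩ := hs
  exact ⟨I, fun y hy => hts fun i hi => hy i hi ▸ mem_of_mem_nhds (htx i)⟩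

lemma Dense.tendsto_val_residual {α : Type*} [TopologicalSpace α] {D : Set α} (hD : Dense D) :
    Tendsto ((↑) : D → α) (residual D) (residual α) := by
  refine le_countableGenerate_iff_of_countableInterFilter.mpr ?_
  rintro t ⟨ht, htd⟩
  refine residual_of_dense_open (ht.preimage continuous_subtype_val) ?_
  rw [Subtype.dense_iff, Subtype.image_preimage_coe, (hD.inter_of_isOpen_right htd ht).closure_eq]
  exact subset_univ D

lemma IsMeagre.preimage_val {α : Type*} [TopologicalSpace α] {s D : Set α} (hs : IsMeagre s)
    (hD : Dense D) : IsMeagre ((↑) ⁻¹' s : Set D) :=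
  hD.tendsto_val_residual hs

section FlipOn

variable {ι : Type*} [DecidableEq ι]

def flipOn (S : Finset ι) : (ι → Bool) ≃ₜ (ι → Bool) where
  toFun x i := if i ∈ S then !x i else x i
  invFun x i := if i ∈ S then !x i else x i
  left_inv x := by ext i; by_cases hi : i ∈ S <;> simp [hi]
  right_inv x := by ext i; by_cases hi : i ∈ S <;> simp [hi]
  continuous_toFun := continuous_pi fun i =>
    (continuous_of_discreteTopology (f := fun b => if i ∈ S then !b else b)).comp
      (continuous_apply i)
  continuous_invFun := continuous_pi fun i =>
    (continuous_of_discreteTopology (f := fun b => if i ∈ S then !b else b)).comp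
      (continuous_apply i)

lemma flipOn_apply (S : Finset ι) (x : ι → Bool) (i : ι) :
    flipOn S x i = if i ∈ S then !x i else x i :=
  rfl

lemma setOf_ne_flipOn (S : Finset ι) (x : ι → Bool) : {i | x i ≠ flipOn S x i} = S := by
  ext i
  by_cases hi : i ∈ S <;> simp [flipOn_apply, hi]

lemma flipOn_filter_ne_apply (I : Finset ι) (x u : ι → Bool) {i : ι} (hi : i ∈ I) :
    flipOn (I.filter fun j => x j ≠ u j) x i = u i := by
  by_cases h : x i = u i <;> simp_all [flipOn_apply, Bool.eq_not]

end FlipOn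

namespace ClosedUnderFiniteMod

variable {X : Set (ℕ → Bool)}

lemma compl (hX : ClosedUnderFiniteMod X) : ClosedUnderFiniteMod Xᶜ := fun x hx y hxy hy =>
  hx (hX y hy x (by simpa only [ne_comm] using hxy))

lemma flipOn_mem (hX : ClosedUnderFiniteMod X) {x : ℕ → Bool} (hx : x ∈ X) (S : Finset ℕ) :
    flipOn S x ∈ X :=
  hX x hx _ (by rw [setOf_ne_flipOn]; exact S.finite_toSet)

lemma dense (hX : ClosedUnderFiniteMod X) (hne : X.Nonempty) : Dense X := by
  obtain ⟨x, hx⟩ := hne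
  refine dense_iff_inter_open.mpr fun U hU ⟨u, hu⟩ => ?_
  obtain ⟨I, hI⟩ := exists_finset_forall_eq_imp_mem (hU.mem_nhds hu)
  exact ⟨_, hI _ fun i => flipOn_filter_ne_apply I x u, hX.flipOn_mem hx _⟩

lemma isMeagre_of_isMeagre_inter (hX : ClosedUnderFiniteMod X) {U : Set (ℕ → Bool)}
    (hU : IsOpen U) (hne : U.Nonempty) (h : IsMeagre (X ∩ U)) : IsMeagre X := by
  obtain ⟨u, hu⟩ := hne
  obtain ⟨I, hI⟩ := exists_finset_forall_eq_imp_mem (hU.mem_nhds hu)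
  have hcover : X ⊆ ⋃ S : Finset ℕ, flipOn S ⁻¹' (X ∩ U) := fun x hx =>
    mem_iUnion.mpr ⟨_, hX.flipOn_mem hx _, hI _ fun i => flipOn_filter_ne_apply I x u⟩
  refine (isMeagre_iUnion fun S => ?_).mono hcover
  exact h.preimage_of_isOpenMap (flipOn S).continuous (flipOn S).isOpenMap

lemma mem_residual_of_subset (hX : ClosedUnderFiniteMod X) {Z : Set (ℕ → Bool)} (hZX : Z ⊆ X)
    (hZ : BaireMeasurableSet Z) (hnm : ¬ IsMeagre Z) : X ∈ residual (ℕ → Bool) := by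
  obtain ⟨U, hU, hZU⟩ := hZ.residualEq_isOpen
  have hne : U.Nonempty :=
    nonempty_iff_ne_empty.mpr fun hU0 => hnm (eventuallyEq_empty.mp (hU0 ▸ hZU))
  have hdiff : IsMeagre (U \ Z) :=
    eventuallyEq_empty.mp (by simpa using hZU.symm.diff (EventuallyEq.refl _ Z))
  have hsub : Xᶜ ∩ U ⊆ U \ Z := fun x hx => ⟨hx.2, fun hxZ => hx.1 (hZX hxZ)⟩
  simpa only [IsMeagre, compl_compl] using
    hX.compl.isMeagre_of_isMeagre_inter hU hne (hdiff.mono hsub)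

end ClosedUnderFiniteMod

theorem dense_baireProperty_subset_meager_general (X : Set (ℕ → Bool))
    (hmod : ClosedUnderFiniteMod X) (hnm : ¬ IsMeagre X)
    (Z : Set (ℕ → Bool)) (hZY : Z ⊆ Xᶜ)
    (hBP : BaireMeasurableSet Z) :
    IsMeagre ((↑) ⁻¹' Z : Set ↥(Xᶜ)) := by
  have hZ : IsMeagre Z := by
    by_contra hZ
    exact hnm (hmod.compl.mem_residual_of_subset hZY hBP hZ)
  rcases (Xᶜ).eq_empty_or_nonempty with hY | hY
  · have : IsEmpty ↥(Xᶜ) := isEmpty_coe_sort.mpr hY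
    simpa only [Set.eq_empty_of_isEmpty] using IsMeagre.empty
  · exact hZ.preimage_val (hmod.compl.dense hY)

theorem dense_baireProperty_subset_meager (X : Set (ℕ → Bool))
    (hmod : ClosedUnderFiniteMod X) (hnm : ¬ IsMeagre X)
    (Z : Set (ℕ → Bool)) (hZY : Z ⊆ Xᶜ)
    (hdense : Xᶜ ⊆ closure Z) (hBP : BaireMeasurableSet Z) :
    IsMeagre ((↑) ⁻¹' Z : Set ↥(Xᶜ)) :=
  dense_baireProperty_subset_meager_general X hmod hnm Z hZY hBP
end

section
/- A Bernstein subset of the Baire space ℕ^ℕ is not Menger. -/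
/-- `B` is a Bernstein subset: both `B` and its complement meet every nonempty
perfect subset. -/
def IsBernstein {X : Type*} [TopologicalSpace X] (B : Set X) : Prop :=
  ∀ C : Set X, Perfect C → C.Nonempty → (B ∩ C).Nonempty ∧ (Bᶜ ∩ C).Nonempty

/-!
A Menger subspace `X` of `ℕ^ℕ` is bounded: applying the Menger property to the increasing covers
`{x | x n < m}` (`m ∈ ℕ`) yields `g : ℕ → ℕ` such that no `x ∈ X` dominates `g` everywhere. The set
`{f | g ≤ f}` of functions dominating `g` is a nonempty perfect set, so a Bernstein set meets it.
-/

open Set Filter Topology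

theorem Monotone.exists_forall_le_of_subset_range {α β : Type*} [Preorder α] [Nonempty α]
    [IsDirectedOrder α] [Preorder β] {f : α → β} (hf : Monotone f) {S : Set β}
    (hS : S.Finite) (hSf : S ⊆ range f) : ∃ a, ∀ b ∈ S, b ≤ f a := by
  have : Finite S := hS
  choose m hm using fun b : S => hSf b.2
  obtain ⟨a, ha⟩ := Finite.exists_le m
  exact ⟨a, fun b hb => (hm ⟨b, hb⟩).symm.trans_le (hf (ha ⟨b, hb⟩))⟩

theorem MengerSpace.exists_iUnion_eq_univ {X : Type*} [TopologicalSpace X] (hX : MengerSpace X)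
    {O : ℕ → ℕ → Set X} (hO : ∀ n m, IsOpen (O n m)) (hmono : ∀ n, Monotone (O n))
    (hcover : ∀ n, ⋃ m, O n m = univ) : ∃ g : ℕ → ℕ, ⋃ n, O n (g n) = univ := by
  obtain ⟨V, hV, hVcover⟩ := hX (fun n => range (O n))
    fun n => ⟨forall_mem_range.2 (hO n), by rw [sUnion_range, hcover]⟩
  choose g hg using fun n => (hmono n).exists_forall_le_of_subset_range (hV n).2 (hV n).1
  exact ⟨g, eq_univ_of_univ_subset (hVcover ▸ iUnion_mono fun n => sUnion_subset (hg n))⟩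

theorem MengerSpace.exists_forall_not_le {X : Type*} [TopologicalSpace X] (hX : MengerSpace X)
    {φ : X → ℕ → ℕ} (hφ : Continuous φ) : ∃ g : ℕ → ℕ, ∀ x, ¬ g ≤ φ x := by
  obtain ⟨g, hg⟩ := hX.exists_iUnion_eq_univ (O := fun n m => {x | φ x n < m})
    (fun n m => (isOpen_discrete (Iio m)).preimage ((continuous_apply n).comp hφ))
    (fun n m m' hm x hx => lt_of_lt_of_le hx hm)
    (fun n => eq_univ_of_forall fun x => mem_iUnion.2 ⟨φ x n + 1, Nat.lt_succ_self _⟩)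
  refine ⟨g, fun x hx => ?_⟩
  obtain ⟨n, hn⟩ := mem_iUnion.1 (hg.symm ▸ mem_univ x)
  exact (hx n).not_gt hn

theorem tendsto_update_succ (f : ℕ → ℕ) :
    Tendsto (fun k => Function.update f k (f k + 1)) atTop (𝓝 f) := by
  refine tendsto_pi_nhds.2 fun n => tendsto_const_nhds.congr' ?_
  filter_upwards [eventually_gt_atTop n] with k hk
  rw [Function.update_of_ne hk.ne]

theorem perfect_Ici (g : ℕ → ℕ) : Perfect (Ici g) := by
  refine ⟨isClosed_Ici, fun f hf => accPt_iff_frequently_nhdsNE.2 ?_⟩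
  have hne : ∀ k, Function.update f k (f k + 1) ≠ f := fun k h => by
    simpa using congrFun h k
  have hle : ∀ k, f ≤ Function.update f k (f k + 1) := fun k => by simp
  exact (tendsto_nhdsWithin_iff.2 ⟨tendsto_update_succ f, .of_forall hne⟩).frequently
    (.of_forall fun k => le_trans hf (hle k))

theorem bernstein_in_baireSpace_not_menger (B : Set (ℕ → ℕ)) (hB : IsBernstein B) :
    ¬ MengerSpace ↥B := by
  intro hM
  obtain ⟨g, hg⟩ := hM.exists_forall_not_le continuous_subtype_val
  obtain ⟨⟨x, hxB, hgx⟩, -⟩ := hB (Ici g) (perfect_Ici g) nonempty_Ici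
  exact hg ⟨x, hxB⟩ hgx
end

section
/- A Bernstein subset of ℝ is completely Baire but not Menger. -/
/-- `B ⊆ ℝ` is Bernstein: both `B` and `ℝ ∖ B` meet every uncountable closed set. -/
def IsBernsteinReal (B : Set ℝ) : Prop :=
  ∀ C : Set ℝ, IsClosed C → ¬ C.Countable → (B ∩ C).Nonempty ∧ (Bᶜ ∩ C).Nonempty

open Set Function Topology Filter PiNat CantorScheme

theorem not_countable_range_of_injective {α : Type*} {f : (ℕ → Bool) → α} (hf : Injective f) :
    ¬ (range f).Countable := by
  intro h
  have := h.to_subtype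
  have : Countable (ℕ → Bool) := (rangeFactorization_injective.2 hf).countable
  rw [← Cardinal.mk_le_aleph0_iff, ← Cardinal.power_def, Cardinal.mk_bool, Cardinal.mk_nat,
    Cardinal.two_power_aleph0] at this
  exact Cardinal.aleph0_lt_continuum.not_ge this

theorem MeasurableSet.exists_nat_bool_injection_of_not_countable {Y : Type*} [TopologicalSpace Y]
    [PolishSpace Y] [MeasurableSpace Y] [BorelSpace Y] {s : Set Y} (hs : MeasurableSet s)
    (hunc : ¬ s.Countable) :
    ∃ f : (ℕ → Bool) → Y, range f ⊆ s ∧ Continuous f ∧ Injective f := by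
  obtain ⟨t, hle, hpolish, hclosed, -⟩ := hs.isClopenable
  obtain ⟨f, hfs, hf, hinj⟩ :=
    @IsClosed.exists_nat_bool_injection_of_not_countable Y t hpolish s hclosed hunc
  exact ⟨f, hfs, continuous_le_rng hle hf, hinj⟩

theorem IsGδ.exists_isOpen_singleton_of_countable {Y : Type*} [TopologicalSpace Y] [T1Space Y]
    [BaireSpace Y] {G : Set Y} (hG : IsGδ G) (hc : G.Countable)
    (hint : (interior (closure G)).Nonempty) : ∃ g ∈ G, IsOpen ({g} : Set Y) := by
  by_contra! hiso
  have hGc : Dense Gᶜ :=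
    (dense_biInter_of_isOpen (fun g _ => isOpen_compl_singleton) hc
      fun g hg => dense_compl_singleton_iff_not_open.2 (hiso g hg)).mono
      fun x hx hxG => by simpa using mem_iInter₂.1 hx x hxG
  have hG' : Dense (G ∪ (closure G)ᶜ) := by
    rw [dense_iff_closure_eq, closure_union, eq_univ_iff_forall]
    intro x
    by_cases hx : x ∈ closure G
    exacts [Or.inl hx, Or.inr (subset_closure hx)]
  -- `G ∪ (closure G)ᶜ` and `Gᶜ` are dense Gδ sets whose intersection misses `interior (closure G)`.
  obtain ⟨x, hxint, hxG | hxG, hxGc⟩ :=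
    (Dense.inter_of_Gδ (hG.union isClosed_closure.isOpen_compl.isGδ) hc.isGδ_compl hG'
      hGc).inter_open_nonempty _ isOpen_interior hint
  exacts [hxGc hxG, hxG (interior_subset hxint)]

theorem IsGδ.inter_nonempty_of_forall_nat_bool {Y : Type*} [TopologicalSpace Y] [PolishSpace Y]
    {S : Set Y} (hS : Dense S)
    (hC : ∀ f : (ℕ → Bool) → Y, Continuous f → Injective f → ∃ b, f b ∈ S)
    {G : Set Y} (hG : IsGδ G) (hint : (interior (closure G)).Nonempty) : (G ∩ S).Nonempty := by
  by_cases hc : G.Countable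
  · obtain ⟨g, hg, hopen⟩ := hG.exists_isOpen_singleton_of_countable hc hint
    obtain ⟨_, rfl, hgS⟩ := hS.inter_open_nonempty {g} hopen (singleton_nonempty g)
    exact ⟨_, hg, hgS⟩
  · borelize Y
    obtain ⟨f, hfG, hf, hinj⟩ := hG.measurableSet.exists_nat_bool_injection_of_not_countable hc
    obtain ⟨b, hb⟩ := hC f hf hinj
    exact ⟨f b, hfG (mem_range_self b), hb⟩

theorem Topology.IsInducing.baireSpace_of_forall_nat_bool {X Y : Type*} [TopologicalSpace X]
    [TopologicalSpace Y] [PolishSpace Y] {e : X → Y} (he : IsInducing e) (hd : DenseRange e)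
    (hC : ∀ f : (ℕ → Bool) → Y, Continuous f → Injective f → ∃ b, f b ∈ range e) :
    BaireSpace X := by
  refine ⟨fun U hUo hUd => ?_⟩
  choose O hO hOU using fun n => he.isOpen_iff.1 (hUo n)
  have hOd : ∀ n, Dense (O n) := fun n =>
    (hd.dense_image he.continuous (hUd n)).mono (hOU n ▸ image_preimage_subset e (O n))
  rw [dense_iff_inter_open]
  intro W hW ⟨x, hx⟩
  obtain ⟨V, hV, rfl⟩ := he.isOpen_iff.1 hW
  have hint : (interior (closure (V ∩ ⋂ n, O n))).Nonempty :=
    ⟨e x, interior_maximal ((dense_iInter_of_isOpen hO hOd).open_subset_closure_inter hV) hV hx⟩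
  obtain ⟨_, ⟨hyV, hyO⟩, z, rfl⟩ :=
    (hV.isGδ.inter (.iInter_of_isOpen hO)).inter_nonempty_of_forall_nat_bool hd hC hint
  refine ⟨z, hyV, mem_iInter.2 fun n => ?_⟩
  rw [← hOU n]
  exact mem_iInter.1 hyO n

theorem completelyBaire_of_forall_nat_bool {Y : Type*} [TopologicalSpace Y] [PolishSpace Y]
    {B : Set Y} (hB : ∀ f : (ℕ → Bool) → Y, Continuous f → Injective f → ∃ b, f b ∈ B) :
    CompletelyBaire B := by
  intro C hC
  set F := closure (((↑) : B → Y) '' C)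
  have : PolishSpace F := isClosed_closure.polishSpace
  let e : C → F := fun c => ⟨c.1, subset_closure (mem_image_of_mem _ c.2)⟩
  refine IsInducing.baireSpace_of_forall_nat_bool (e := e) ?_ ?_ fun f hf hinj => ?_
  · exact (IsInducing.subtypeVal.of_comp_iff (f := e)).1
      (IsInducing.subtypeVal.comp IsInducing.subtypeVal : IsInducing fun c : C => (c : B).1)
  · refine IsInducing.subtypeVal.dense_iff.2 fun y => ?_
    have hrange : range (Subtype.val ∘ e) = (↑) '' C := by
      rw [image_eq_range]
      rfl
    rw [← range_comp, hrange]
    exact y.2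
  · obtain ⟨b, hb⟩ := hB (Subtype.val ∘ f) (continuous_subtype_val.comp hf)
      (Subtype.val_injective.comp hinj)
    have hbC : (⟨(f b).1, hb⟩ : B) ∈ C := by
      rw [← hC.closure_eq, IsInducing.subtypeVal.closure_eq_preimage_closure_image]
      exact (f b).2
    exact ⟨b, ⟨_, hbC⟩, rfl⟩

theorem not_mengerSpace_of_forall_exists_notMem {X : Type*} [TopologicalSpace X]
    (W : ℕ → ℕ → Set X) (hW : ∀ n k, IsOpen (W n k)) (hcover : ∀ n, ⋃ k, W n k = univ)
    (hescape : ∀ g : ℕ → ℕ, ∃ x, ∀ n k, k ≤ g n → x ∉ W n k) : ¬ MengerSpace X := by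
  intro hM
  obtain ⟨V, hV, hVcover⟩ := hM (fun n => range (W n)) fun n =>
    ⟨forall_mem_range.2 (hW n), by rw [sUnion_range, hcover]⟩
  have hbound : ∀ n, ∃ m, ∀ v ∈ V n, ∃ k ≤ m, v = W n k := fun n => by
    choose! κ hκ using fun v (hv : v ∈ V n) => (hV n).1 hv
    obtain ⟨m, hm⟩ := ((hV n).2.image κ).bddAbove
    exact ⟨m, fun v hv => ⟨κ v, hm (mem_image_of_mem κ hv), (hκ v hv).symm⟩⟩
  choose g hg using hbound
  obtain ⟨x, hx⟩ := hescape g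
  obtain ⟨n, hn⟩ := mem_iUnion.1 (hVcover.symm ▸ mem_univ x)
  obtain ⟨v, hv, hxv⟩ := mem_sUnion.1 hn
  obtain ⟨k, hk, rfl⟩ := hg n v hv
  exact hx n k hk hxv

/-- The `k`-th of a sequence of disjoint closed intervals in `(a, c)` accumulating only at `c`. -/
noncomputable def approachInterval (a c : ℝ) (k : ℕ) : ℝ × ℝ :=
  (c - 2 * ((c - a) / 4 ^ (k + 1)), c - (c - a) / 4 ^ (k + 1))

section approachInterval

variable {a c : ℝ}

theorem approachInterval_step_pos (h : a < c) (k : ℕ) : 0 < (c - a) / 4 ^ (k + 1) := by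
  have := sub_pos.2 h
  positivity

theorem approachInterval_step_le (h : a < c) (k : ℕ) : (c - a) / 4 ^ (k + 1) ≤ (c - a) / 4 :=
  div_le_div_of_nonneg_left (sub_pos.2 h).le (by norm_num) (le_self_pow₀ (by norm_num) (by omega))

theorem lt_approachInterval_fst (h : a < c) (k : ℕ) : a < (approachInterval a c k).1 := by
  have := approachInterval_step_le h k
  simp only [approachInterval]
  linarith

theorem approachInterval_fst_lt_snd (h : a < c) (k : ℕ) :
    (approachInterval a c k).1 < (approachInterval a c k).2 := by
  have := approachInterval_step_pos h k
  simp only [approachInterval]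
  linarith

theorem approachInterval_snd_lt (h : a < c) (k : ℕ) : (approachInterval a c k).2 < c := by
  have := approachInterval_step_pos h k
  simp only [approachInterval]
  linarith

theorem approachInterval_snd_lt_fst (h : a < c) {k l : ℕ} (hkl : k < l) :
    (approachInterval a c k).2 < (approachInterval a c l).1 := by
  have hpow : (4 : ℝ) ^ (k + 1) * 4 ≤ 4 ^ (l + 1) := by
    rw [← pow_succ]
    exact pow_le_pow_right₀ (by norm_num) (by omega)
  have : (c - a) / 4 ^ (l + 1) ≤ (c - a) / 4 ^ (k + 1) / 4 := by
    rw [div_div]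
    exact div_le_div_of_nonneg_left (sub_pos.2 h).le (by positivity) hpow
  have := approachInterval_step_pos h k
  simp only [approachInterval]
  linarith

theorem approachInterval_length_le (h : a < c) (k : ℕ) :
    (approachInterval a c k).2 - (approachInterval a c k).1 ≤ (c - a) / 4 := by
  have := approachInterval_step_le h k
  simp only [approachInterval]
  linarith

theorem tendsto_approachInterval_fst :
    Tendsto (fun k => (approachInterval a c k).1) atTop (𝓝 c) := by
  have : Tendsto (fun k : ℕ => (c - a) / 4 ^ (k + 1)) atTop (𝓝 0) :=
    tendsto_const_nhds.div_atTop <| (tendsto_pow_atTop_atTop_of_one_lt (by norm_num)).comp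
      (tendsto_add_atTop_nat 1)
  simpa [approachInterval] using tendsto_const_nhds.sub (this.const_mul 2)

end approachInterval

theorem exists_forall_res_of_forall_exists_cons {β : Type*} [Nonempty β] {P : List β → Prop}
    (h0 : P []) (h : ∀ s, P s → ∃ b, P (b :: s)) : ∃ f : ℕ → β, ∀ n, P (res f n) := by
  choose! g hg using h
  let L : ℕ → List β := fun n => (fun s => g s :: s)^[n] []
  have hL : ∀ n, P (L n) := fun n => by
    induction n with
    | zero => exact h0
    | succ n ih => simpa only [L, iterate_succ_apply'] using hg _ ih
  refine ⟨fun n => g (L n), fun n => ?_⟩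
  suffices res (fun n => g (L n)) n = L n by rw [this]; exact hL n
  induction n with
  | zero => rfl
  | succ n ih => rw [res_succ, ih]; simp only [L, iterate_succ_apply']

theorem exists_mem_closure_of_mem_closure_iUnion {S : ℕ → Set ℝ} {l : ℕ → ℝ} {c x : ℝ}
    (hl : Tendsto l atTop (𝓝 c)) (hS : ∀ k, S k ⊆ Icc (l k) c)
    (hx : x ∈ closure (⋃ k, S k)) (hxc : x ≠ c) : ∃ k, x ∈ closure (S k) := by
  have hxc : x < c := lt_of_le_of_ne (closure_minimal
    (iUnion_subset fun k => (hS k).trans Icc_subset_Iic_self) isClosed_Iic hx) hxc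
  obtain ⟨y, hxy, hyc⟩ := exists_between hxc
  obtain ⟨N, hN⟩ := eventually_atTop.1 (hl.eventually (lt_mem_nhds hyc))
  have hsplit : (⋃ k, S k) ⊆ (⋃ k < N, S k) ∪ Ici y := by
    refine iUnion_subset fun k z hz => ?_
    rcases lt_or_ge k N with hk | hk
    · exact Or.inl (mem_biUnion hk hz)
    · exact Or.inr ((hN k hk).le.trans (hS k hz).1)
  have := closure_mono hsplit hx
  rw [closure_union, closure_iUnion₂_lt_nat, isClosed_Ici.closure_eq] at this
  obtain ⟨k, -, hk⟩ := mem_iUnion₂.1 (this.resolve_right hxy.not_ge)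
  exact ⟨k, hk⟩

/-- Lists are read last index first, as in `PiNat.res`. The children of a node accumulate only at
the value of `q` at its endpoints. -/
noncomputable def schemeNode (q : ℝ → ℝ → ℝ) : List ℕ → ℝ × ℝ
  | [] => (0, 1)
  | k :: s => approachInterval (schemeNode q s).1 (q (schemeNode q s).1 (schemeNode q s).2) k

def schemeIcc (q : ℝ → ℝ → ℝ) (s : List ℕ) : Set ℝ := Icc (schemeNode q s).1 (schemeNode q s).2

section Scheme

variable {q : ℝ → ℝ → ℝ} (hq : ∀ a b, a < b → q a b ∈ Ioo a b)
include hq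

theorem schemeNode_fst_lt_snd (s : List ℕ) : (schemeNode q s).1 < (schemeNode q s).2 := by
  induction s with
  | nil => simp [schemeNode]
  | cons k s ih => exact approachInterval_fst_lt_snd (hq _ _ ih).1 k

theorem schemeIcc_cons_subset_Ioo (k : ℕ) (s : List ℕ) :
    schemeIcc q (k :: s) ⊆ Ioo (schemeNode q s).1 (schemeNode q s).2 := by
  have hlt := hq _ _ (schemeNode_fst_lt_snd hq s)
  exact Icc_subset_Ioo (lt_approachInterval_fst hlt.1 k)
    ((approachInterval_snd_lt hlt.1 k).trans hlt.2)

theorem schemeIcc_cons_subset (k : ℕ) (s : List ℕ) : schemeIcc q (k :: s) ⊆ schemeIcc q s :=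
  (schemeIcc_cons_subset_Ioo hq k s).trans Ioo_subset_Icc_self

theorem schemeNode_length_le (s : List ℕ) :
    (schemeNode q s).2 - (schemeNode q s).1 ≤ (1 / 4) ^ s.length := by
  induction s with
  | nil => simp [schemeNode]
  | cons k s ih =>
    have hlt := hq _ _ (schemeNode_fst_lt_snd hq s)
    have := approachInterval_length_le hlt.1 k
    simp only [schemeNode, List.length_cons, pow_succ]
    linarith [hlt.2]

theorem eq_of_mem_schemeIcc {s t : List ℕ} (hl : s.length = t.length) {x : ℝ}
    (hs : x ∈ schemeIcc q s) (ht : x ∈ schemeIcc q t) : s = t := by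
  induction s generalizing t with
  | nil => exact (List.length_eq_zero_iff.1 hl.symm).symm
  | cons k s ih =>
    obtain _ | ⟨l, t⟩ := t
    · simp at hl
    obtain rfl := ih (Nat.succ_injective hl) (schemeIcc_cons_subset hq k s hs)
      (schemeIcc_cons_subset hq l t ht)
    have hlt := hq _ _ (schemeNode_fst_lt_snd hq s)
    rcases lt_trichotomy k l with hkl | rfl | hkl
    · exact absurd (ht.1.trans hs.2) (approachInterval_snd_lt_fst hlt.1 hkl).not_ge
    · rfl
    · exact absurd (hs.1.trans ht.2) (approachInterval_snd_lt_fst hlt.1 hkl).not_ge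

theorem exists_continuous_eq_iff_forall_mem_schemeIcc :
    ∃ E : (ℕ → ℕ) → ℝ, Continuous E ∧ ∀ f x, x = E f ↔ ∀ n, x ∈ schemeIcc q (res f n) := by
  have hdiam : VanishingDiam (schemeIcc q) := fun f => by
    refine tendsto_of_tendsto_of_tendsto_of_le_of_le tendsto_const_nhds
      (ENNReal.ofReal_zero ▸ (ENNReal.continuous_ofReal.tendsto 0).comp
        (tendsto_pow_atTop_nhds_zero_of_lt_one (by norm_num : (0 : ℝ) ≤ 1 / 4) (by norm_num)))
      (fun _ => bot_le) fun n => ?_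
    rw [schemeIcc, Real.ediam_Icc]
    simpa using ENNReal.ofReal_le_ofReal (schemeNode_length_le hq (res f n))
  have hanti : ClosureAntitone (schemeIcc q) :=
    Antitone.closureAntitone (fun s k => schemeIcc_cons_subset hq k s) fun _ => isClosed_Icc
  have hdom : ∀ f, f ∈ (inducedMap (schemeIcc q)).1 := fun f => by
    rw [hanti.map_of_vanishingDiam hdiam fun s => nonempty_Icc.2 (schemeNode_fst_lt_snd hq s).le]
    trivial
  refine ⟨fun f => (inducedMap (schemeIcc q)).2 ⟨f, hdom f⟩,
    hdiam.map_continuous.comp (continuous_id.subtype_mk hdom), fun f x => ⟨?_, ?_⟩⟩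
  · rintro rfl n
    exact map_mem _ n
  · refine fun hx => eq_of_forall_dist_le fun ε hε => ?_
    obtain ⟨n, hn⟩ := hdiam.dist_lt ε hε f
    exact (hn x (hx n) _ (map_mem _ n)).le

end Scheme

section SchemeMap

variable {q : ℝ → ℝ → ℝ} (hq : ∀ a b, a < b → q a b ∈ Ioo a b) {E : (ℕ → ℕ) → ℝ}
  (hE : ∀ f x, x = E f ↔ ∀ n, x ∈ schemeIcc q (res f n))
include hq hE

theorem res_eq_of_mem_schemeIcc {f : ℕ → ℕ} {s : List ℕ} (h : E f ∈ schemeIcc q s) :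
    res f s.length = s :=
  eq_of_mem_schemeIcc hq (res_length f _) ((hE f _).1 rfl _) h

theorem mem_Ioo_schemeNode_res (f : ℕ → ℕ) (n : ℕ) :
    E f ∈ Ioo (schemeNode q (res f n)).1 (schemeNode q (res f n)).2 :=
  schemeIcc_cons_subset_Ioo hq (f n) (res f n) ((hE f _).1 rfl (n + 1))

theorem isEmbedding_of_eq_iff_forall_mem_schemeIcc (hc : Continuous E) : IsEmbedding E := by
  refine (isInducing_iff_nhds.2 fun f => le_antisymm (hc.tendsto f).le_comap ?_).isEmbedding
  refine ((isTopologicalBasis_cylinders fun _ => ℕ).nhds_hasBasis).ge_iff.2 ?_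
  rintro _ ⟨⟨g, n, rfl⟩, hf⟩
  rw [← mem_cylinder_iff_eq.1 hf]
  refine mem_comap.2 ⟨_, isOpen_Ioo.mem_nhds (mem_Ioo_schemeNode_res hq hE f n), fun g hg => ?_⟩
  rw [cylinder_eq_res]
  simpa using res_eq_of_mem_schemeIcc hq hE (Ioo_subset_Icc_self hg)

theorem mem_range_of_mem_closure_range_of_notMem {D : Set ℝ} (hD : ∀ a b, a < b → q a b ∈ D) {x : ℝ}
    (hx : x ∈ closure (range E)) (hxD : x ∉ D) : x ∈ range E := by
  -- The children of `schemeIcc q s` accumulate only at a point of `D`.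
  have hstep : ∀ s, x ∈ closure (range E ∩ schemeIcc q s) →
      ∃ k, x ∈ closure (range E ∩ schemeIcc q (k :: s)) := by
    intro s hs
    have hlt := hq _ _ (schemeNode_fst_lt_snd hq s)
    refine exists_mem_closure_of_mem_closure_iUnion tendsto_approachInterval_fst
      (fun k => inter_subset_right.trans
        (Icc_subset_Icc_right (approachInterval_snd_lt hlt.1 k).le))
      (closure_mono ?_ hs) fun h => hxD (h ▸ hD _ _ (schemeNode_fst_lt_snd hq s))
    rintro _ ⟨⟨f, rfl⟩, hf⟩
    refine mem_iUnion.2 ⟨f s.length, mem_range_self f, ?_⟩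
    have := (hE f _).1 rfl (s.length + 1)
    rwa [res_succ, res_eq_of_mem_schemeIcc hq hE hf] at this
  have hroot : range E ⊆ schemeIcc q [] := by
    rintro _ ⟨f, rfl⟩
    exact (hE f _).1 rfl 0
  obtain ⟨f, hf⟩ := exists_forall_res_of_forall_exists_cons
    (by rwa [inter_eq_left.2 hroot]) hstep
  exact ⟨f, ((hE f x).2 fun n => closure_minimal inter_subset_right isClosed_Icc (hf n)).symm⟩

end SchemeMap

theorem Dense.exists_isEmbedding_nat_nat_closure_range_subset {D : Set ℝ} (hD : Dense D) :
    ∃ E : (ℕ → ℕ) → ℝ, IsEmbedding E ∧ closure (range E) ⊆ range E ∪ D := by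
  choose! q hqD hq using fun a b (h : a < b) => hD.exists_between h
  obtain ⟨E, hc, hE⟩ := exists_continuous_eq_iff_forall_mem_schemeIcc hq
  exact ⟨E, isEmbedding_of_eq_iff_forall_mem_schemeIcc hq hE hc, fun x hx =>
    or_iff_not_imp_right.2 (mem_range_of_mem_closure_range_of_notMem hq hE hqD hx)⟩

theorem not_mengerSpace_of_dense_compl {B : Set ℝ} (hD : Dense Bᶜ)
    (hB : ∀ f : (ℕ → Bool) → ℝ, Continuous f → Injective f → ∃ b, f b ∈ B) :
    ¬ MengerSpace B := by
  obtain ⟨E, hE, hcl⟩ := hD.exists_isEmbedding_nat_nat_closure_range_subset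
  choose O hO hEO using fun n k =>
    hE.isInducing.isOpen_iff.1 ((isOpen_discrete {k}).preimage (continuous_apply n))
  refine not_mengerSpace_of_forall_exists_notMem
    (fun n k => (↑) ⁻¹' (O n k ∪ (closure (range E))ᶜ))
    (fun n k => ((hO n k).union isClosed_closure.isOpen_compl).preimage continuous_subtype_val)
    (fun n => eq_univ_of_forall fun x => ?_) fun g => ?_
  · by_cases hx : (x : ℝ) ∈ closure (range E)
    · obtain ⟨f, hf⟩ := (hcl hx).resolve_right (not_not.2 x.2)
      refine mem_iUnion.2 ⟨f n, Or.inl ?_⟩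
      rw [← hf, ← mem_preimage, hEO]
      rfl
    · exact mem_iUnion.2 ⟨0, Or.inr hx⟩
  · let φ : (ℕ → Bool) → ℕ → ℕ := fun b n => g n + 1 + (b n).toNat
    have hφ : Continuous φ :=
      continuous_pi fun n =>
        (continuous_of_discreteTopology (f := fun t : Bool => g n + 1 + t.toNat)).comp
          (continuous_apply n)
    have hφi : Injective φ := fun b b' h => funext fun n => by
      have h' : (b n).toNat = (b' n).toNat := by simpa [φ] using congrFun h n
      revert h'
      cases b n <;> cases b' n <;> simp
    obtain ⟨b, hb⟩ := hB (E ∘ φ) (hE.continuous.comp hφ) (hE.injective.comp hφi)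
    refine ⟨⟨_, hb⟩, fun n k hk hmem => ?_⟩
    rcases hmem with h | h
    · have h' : φ b ∈ E ⁻¹' O n k := h
      rw [hEO] at h'
      have : g n + 1 + (b n).toNat = k := h'
      omega
    · exact h (subset_closure (mem_range_self _))

theorem IsBernsteinReal.exists_apply_mem {B : Set ℝ} (hB : IsBernsteinReal B)
    {f : (ℕ → Bool) → ℝ} (hf : Continuous f) (hinj : Injective f) : ∃ b, f b ∈ B := by
  obtain ⟨⟨_, hfB, b, rfl⟩, -⟩ :=
    hB (range f) (isCompact_range hf).isClosed (not_countable_range_of_injective hinj)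
  exact ⟨b, hfB⟩

theorem IsBernsteinReal.dense_compl {B : Set ℝ} (hB : IsBernsteinReal B) : Dense Bᶜ := by
  refine dense_iff_exists_between.2 fun a b hab => ?_
  obtain ⟨c, hac, hcb⟩ := exists_between hab
  obtain ⟨d, hcd, hdb⟩ := exists_between hcb
  obtain ⟨-, x, hxB, hx⟩ := hB (Icc c d) isClosed_Icc (by simpa using hcd)
  exact ⟨x, hxB, hac.trans_le hx.1, hx.2.trans_lt hdb⟩

theorem bernstein_completelyBaire_not_menger (B : Set ℝ) (hB : IsBernsteinReal B) :
    CompletelyBaire ↥B ∧ ¬ MengerSpace ↥B :=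
  ⟨completelyBaire_of_forall_nat_bool fun _ => hB.exists_apply_mem,
    not_mengerSpace_of_dense_compl hB.dense_compl fun _ => hB.exists_apply_mem⟩
end

section
/- If B is a Bernstein subset of ℝ, then B contains a closed (in B) subspace homeomorphic to a Bernstein subset of ℕ^ℕ. -/
/-- `D` is a Bernstein subset of ℕ^ℕ: both `D` and its complement meet every
nonempty perfect subset. -/
def IsBernsteinBaire (D : Set (ℕ → ℕ)) : Prop :=
  ∀ C : Set (ℕ → ℕ), Perfect C → C.Nonempty → (D ∩ C).Nonempty ∧ (Dᶜ ∩ C).Nonempty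

/-
Choose a point `q` of the dense set `ℝ ∖ B` inside an interval and place inside the interval
countably many disjoint open subintervals accumulating only at `q`; iterating inside each
subinterval gives a Cantor scheme indexed by finite sequences of naturals, hence an embedding
`e` of `ℕ^ℕ` into `ℝ` whose range is closed up to the countably many points `q`, all outside `B`.
So `range e ∩ B` is closed in `B` and homeomorphic to `e⁻¹(B)`, and `e⁻¹(B)` is Bernstein because
`e` maps a Cantor set inside any perfect subset of `ℕ^ℕ` to an uncountable compact subset of `ℝ`.
-/

open Set Filter Topology PiNat Function
open scoped Set.Notation

theorem closure_iUnion_subset_insert_of_tendsto_smallSets {X ι : Type*} [TopologicalSpace X]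
    [T3Space X] {F : ι → Set X} {q : X} (hF : Tendsto F cofinite (𝓝 q).smallSets) :
    closure (⋃ i, F i) ⊆ insert q (⋃ i, closure (F i)) := by
  intro z hz
  rw [mem_insert_iff, or_iff_not_imp_left]
  intro hzq
  obtain ⟨V, ⟨hVq, hVc⟩, hzV⟩ :=
    (closed_nhds_basis q).mem_iff.1 (isOpen_compl_singleton.mem_nhds (Ne.symm hzq))
  have hfin : {i | ¬ F i ⊆ V}.Finite := tendsto_smallSets_iff.1 hF V hVq
  have hcover : ⋃ i, F i ⊆ V ∪ ⋃ i ∈ {i | ¬ F i ⊆ V}, F i := by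
    refine iUnion_subset fun i => ?_
    by_cases hi : F i ⊆ V
    · exact hi.trans subset_union_left
    · exact (subset_biUnion_of_mem (u := F) hi).trans subset_union_right
  have hz' := closure_mono hcover hz
  rw [closure_union, hVc.closure_eq, hfin.closure_biUnion] at hz'
  obtain hz' | hz' := hz'
  · exact (hzV hz' rfl).elim
  · obtain ⟨i, -, hi⟩ := mem_iUnion₂.1 hz'
    exact mem_iUnion.2 ⟨i, hi⟩

theorem isClosed_preimage_val_of_closure_diff_subset {X : Type*} [TopologicalSpace X]
    {s t : Set X} (h : closure t \ t ⊆ sᶜ) : IsClosed (s ↓∩ t) := by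
  refine isClosed_preimage_val.2 fun z ⟨hzs, hz⟩ => ?_
  by_contra hzt
  exact h ⟨closure_mono inter_subset_right hz, hzt⟩ hzs

namespace CantorScheme

variable {β α : Type*} {A : List β → Set α}

theorem res_eq_of_map_mem (hanti : CantorScheme.Antitone A) (hdisj : CantorScheme.Disjoint A)
    {x : ℕ → β} {y : (inducedMap A).1} {n : ℕ} (h : (inducedMap A).2 y ∈ A (res x n)) :
    res y n = res x n := by
  induction n with
  | zero => rfl
  | succ n ih =>
    rw [res_succ] at h
    have hres : res y n = res x n := ih (hanti _ _ h)
    have hy : (inducedMap A).2 y ∈ A (y.1 n :: res x n) := by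
      rw [← hres, ← res_succ]
      exact map_mem y (n + 1)
    have hyx : y.1 n = x n := by
      by_contra hne
      exact disjoint_left.1 (hdisj _ hne) hy h
    rw [res_succ, res_succ, hres, hyx]

theorem VanishingDiam.eq_of_forall_mem [MetricSpace α] (hA : VanishingDiam A) {x : ℕ → β}
    {y z : α} (hy : ∀ n, y ∈ A (res x n)) (hz : ∀ n, z ∈ A (res x n)) : y = z :=
  eq_of_forall_dist_le fun ε hε =>
    let ⟨n, hn⟩ := hA.dist_lt ε hε x
    (hn y (hy n) z (hz n)).le

theorem isEmbedding_inducedMap [TopologicalSpace β] [DiscreteTopology β] [MetricSpace α]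
    (hanti : CantorScheme.Antitone A) (hdisj : CantorScheme.Disjoint A) (hdiam : VanishingDiam A)
    (hopen : ∀ l, IsOpen (A l)) : IsEmbedding (inducedMap A).2 := by
  refine ⟨isInducing_iff_nhds.2 fun x => le_antisymm
    (hdiam.map_continuous.tendsto x).le_comap fun U hU => ?_, hdisj.map_injective⟩
  obtain ⟨t, ht, htU⟩ := (mem_nhds_subtype _ x U).1 hU
  obtain ⟨_, ⟨w, n, rfl⟩, hxw, hwt⟩ := (isTopologicalBasis_cylinders _).mem_nhds_iff.1 ht
  rw [← mem_cylinder_iff_eq.1 hxw] at hwt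
  refine mem_comap.2 ⟨A (res x n), (hopen _).mem_nhds (map_mem x n), fun y hy => htU (hwt ?_)⟩
  rw [cylinder_eq_res]
  exact res_eq_of_map_mem hanti hdisj hy

variable (A) in
def imageOfPrefix (l : List β) : Set α := (inducedMap A).2 '' {x | res x.1 l.length = l}

theorem imageOfPrefix_nil : imageOfPrefix A [] = range (inducedMap A).2 := by
  simp [imageOfPrefix, res_zero]

theorem imageOfPrefix_subset (l : List β) : imageOfPrefix A l ⊆ A l := by
  rintro _ ⟨x, hx, rfl⟩
  rw [← (hx : res x.1 l.length = l)]
  exact map_mem x _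

theorem imageOfPrefix_subset_iUnion_cons (l : List β) :
    imageOfPrefix A l ⊆ ⋃ b, imageOfPrefix A (b :: l) := by
  rintro _ ⟨x, hx, rfl⟩
  refine mem_iUnion.2 ⟨x.1 l.length, x, ?_, rfl⟩
  change res x.1 (l.length + 1) = _
  rw [res_succ, (hx : res x.1 l.length = l)]

theorem exists_mem_closure_imageOfPrefix_cons [TopologicalSpace α] [T3Space α] {q : α}
    {l : List β} (hq : Tendsto (fun b => A (b :: l)) cofinite (𝓝 q).smallSets) {z : α}
    (hz : z ∈ closure (imageOfPrefix A l)) (hzq : z ≠ q) :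
    ∃ b, z ∈ closure (imageOfPrefix A (b :: l)) := by
  have hq' : Tendsto (fun b => imageOfPrefix A (b :: l)) cofinite (𝓝 q).smallSets :=
    hq.smallSets_mono (Eventually.of_forall fun b => imageOfPrefix_subset (b :: l))
  have := closure_iUnion_subset_insert_of_tendsto_smallSets hq'
    (closure_mono (imageOfPrefix_subset_iUnion_cons l) hz)
  simpa [hzq] using this

theorem closure_range_inducedMap_diff_subset [MetricSpace α] (hanti : ClosureAntitone A)
    (hdiam : VanishingDiam A) {q : List β → α}
    (hq : ∀ l, Tendsto (fun b => A (b :: l)) cofinite (𝓝 (q l)).smallSets) :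
    closure (range (inducedMap A).2) \ range (inducedMap A).2 ⊆ range q := by
  rintro z ⟨hz, hzf⟩
  by_contra hzq
  have : Nonempty β := by
    obtain ⟨_, x, -⟩ := closure_nonempty_iff.1 ⟨z, hz⟩
    exact ⟨x.1 0⟩
  choose! next hnext using fun l (hl : z ∈ closure (imageOfPrefix A l)) =>
    exists_mem_closure_imageOfPrefix_cons (hq l) hl fun h => hzq ⟨l, h.symm⟩
  let branch : ℕ → List β := fun k => Nat.rec [] (fun _ l => next l :: l) k
  let x : ℕ → β := fun k => next (branch k)
  have hres : ∀ k, res x k = branch k := by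
    intro k
    induction k with
    | zero => rfl
    | succ k ih => rw [res_succ, ih]
  have hclosure : ∀ k, z ∈ closure (imageOfPrefix A (res x k)) := by
    intro k
    induction k with
    | zero => rwa [res_zero, imageOfPrefix_nil]
    | succ k ih => rw [hres] at ih ⊢; exact hnext _ ih
  have hmem : ∀ k, z ∈ A (res x k) := fun k =>
    hanti _ (x k) (closure_mono (imageOfPrefix_subset _) (res_succ x k ▸ hclosure (k + 1)))
  exact hzf ⟨⟨x, z, mem_iInter.2 hmem⟩, hdiam.eq_of_forall_mem (map_mem _) hmem⟩

theorem exists_isEmbedding_closure_range_diff_subset [TopologicalSpace β] [DiscreteTopology β]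
    [MetricSpace α] [CompleteSpace α] (hanti : ClosureAntitone A) (hdisj : CantorScheme.Disjoint A)
    (hdiam : VanishingDiam A) (hne : ∀ l, (A l).Nonempty) (hopen : ∀ l, IsOpen (A l))
    {q : List β → α} (hq : ∀ l, Tendsto (fun b => A (b :: l)) cofinite (𝓝 (q l)).smallSets) :
    ∃ e : (ℕ → β) → α, IsEmbedding e ∧ closure (range e) \ range e ⊆ range q := by
  let h : (ℕ → β) ≃ₜ (inducedMap A).1 := (Homeomorph.Set.univ _).symm.trans
    (Homeomorph.setCongr (hanti.map_of_vanishingDiam hdiam hne).symm)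
  refine ⟨(inducedMap A).2 ∘ h,
    (isEmbedding_inducedMap hanti.antitone hdisj hdiam hopen).comp h.isEmbedding, ?_⟩
  rw [h.surjective.range_comp]
  exact closure_range_inducedMap_diff_subset hanti hdiam hq

end CantorScheme

namespace AccumulatingIntervals

noncomputable def child (q b : ℝ) (n : ℕ) : ℝ × ℝ :=
  (q + (b - q) / (n + 3), q + (b - q) / (n + 2))

variable {q b : ℝ}

theorem lt_child_fst (h : q < b) (n : ℕ) : q < (child q b n).1 := by
  simp only [child]
  have : 0 < (b - q) / (n + 3) := by positivity
  linarith

theorem child_fst_lt_snd (h : q < b) (n : ℕ) : (child q b n).1 < (child q b n).2 := by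
  simp only [child, add_lt_add_iff_left]
  exact div_lt_div_of_pos_left (by linarith) (by positivity) (by linarith)

theorem child_snd_lt (h : q < b) (n : ℕ) : (child q b n).2 < b := by
  simp only [child]
  have : (b - q) / (n + 2) < b - q :=
    div_lt_self (by linarith) (by linarith [n.cast_nonneg (α := ℝ)])
  linarith

theorem child_snd_sub_fst_le (h : q ≤ b) (n : ℕ) :
    (child q b n).2 - (child q b n).1 ≤ (b - q) / 2 := by
  simp only [child, add_sub_add_left_eq_sub]
  calc (b - q) / (n + 2) - (b - q) / (n + 3) ≤ (b - q) / (n + 2) := by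
        linarith [show 0 ≤ (b - q) / (n + 3) by positivity]
    _ ≤ (b - q) / 2 := div_le_div_of_nonneg_left (by linarith) (by norm_num) (by simp)

theorem child_snd_le_fst (h : q ≤ b) {m n : ℕ} (hmn : m < n) :
    (child q b n).2 ≤ (child q b m).1 := by
  simp only [child, add_le_add_iff_left]
  exact div_le_div_of_nonneg_left (by linarith) (by positivity) (by norm_cast; omega)

theorem pairwise_disjoint_child (h : q ≤ b) :
    Pairwise fun m n => Disjoint (Ioo (child q b m).1 (child q b m).2)
      (Ioo (child q b n).1 (child q b n).2) := by
  intro m n hmn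
  rcases hmn.lt_or_gt with hlt | hlt
  · exact ((Ioc_disjoint_Ioc_of_le (child_snd_le_fst h hlt)).mono
      Ioo_subset_Ioc_self Ioo_subset_Ioc_self).symm
  · exact (Ioc_disjoint_Ioc_of_le (child_snd_le_fst h hlt)).mono
      Ioo_subset_Ioc_self Ioo_subset_Ioc_self

theorem tendsto_child (q b : ℝ) :
    Tendsto (fun n => Ioo (child q b n).1 (child q b n).2) cofinite (𝓝 q).smallSets := by
  have hlim : ∀ k : ℕ, Tendsto (fun n : ℕ => q + (b - q) / (n + k)) cofinite (𝓝 q) := by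
    intro k
    rw [Nat.cofinite_eq_atTop]
    simpa using tendsto_const_nhds.add
      ((tendsto_const_div_atTop_nhds_zero_nat (b - q)).comp (tendsto_add_atTop_nat k))
  exact (hlim 3).Ioo (hlim 2)

/-- Node `l` of the scheme is the open interval `(a, b) = endpoints c l`; its children
accumulate only at `c a b`. -/
noncomputable def endpoints (c : ℝ → ℝ → ℝ) : List ℕ → ℝ × ℝ
  | [] => (0, 1)
  | n :: l => child (c (endpoints c l).1 (endpoints c l).2) (endpoints c l).2 n

def scheme (c : ℝ → ℝ → ℝ) (l : List ℕ) : Set ℝ := Ioo (endpoints c l).1 (endpoints c l).2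

noncomputable def apex (c : ℝ → ℝ → ℝ) (l : List ℕ) : ℝ := c (endpoints c l).1 (endpoints c l).2

variable {c : ℝ → ℝ → ℝ} (hc : ∀ a b, a < b → c a b ∈ Ioo a b)
include hc

theorem endpoints_fst_lt_snd : ∀ l, (endpoints c l).1 < (endpoints c l).2
  | [] => zero_lt_one
  | n :: l => child_fst_lt_snd (hc _ _ (endpoints_fst_lt_snd l)).2 n

theorem apex_mem_scheme (l : List ℕ) : apex c l ∈ scheme c l :=
  hc _ _ (endpoints_fst_lt_snd hc l)

theorem closureAntitone_scheme : CantorScheme.ClosureAntitone (scheme c) := by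
  intro l n
  have hq := apex_mem_scheme hc l
  rw [scheme, closure_Ioo (endpoints_fst_lt_snd hc (n :: l)).ne]
  exact Icc_subset_Ioo (hq.1.trans (lt_child_fst hq.2 n)) (child_snd_lt hq.2 n)

theorem disjoint_scheme : CantorScheme.Disjoint (scheme c) :=
  fun l => pairwise_disjoint_child (apex_mem_scheme hc l).2.le

theorem endpoints_snd_sub_fst_le : ∀ l, (endpoints c l).2 - (endpoints c l).1 ≤ (1 / 2) ^ l.length
  | [] => by norm_num [endpoints]
  | n :: l => by
    have hq := apex_mem_scheme hc l
    calc _ ≤ ((endpoints c l).2 - apex c l) / 2 := child_snd_sub_fst_le hq.2.le n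
      _ ≤ ((endpoints c l).2 - (endpoints c l).1) / 2 := by linarith [hq.1]
      _ ≤ (1 / 2) ^ (n :: l).length := by
        rw [List.length_cons, pow_succ]
        linarith [endpoints_snd_sub_fst_le l]

theorem vanishingDiam_scheme : CantorScheme.VanishingDiam (scheme c) := by
  intro x
  have hlim : Tendsto (fun n : ℕ => ENNReal.ofReal ((1 / 2) ^ n)) atTop (𝓝 0) := by
    simpa using ENNReal.tendsto_ofReal
      (tendsto_pow_atTop_nhds_zero_of_lt_one (by norm_num : (0 : ℝ) ≤ 1 / 2) (by norm_num))
  refine tendsto_of_tendsto_of_tendsto_of_le_of_le tendsto_const_nhds hlim (fun _ => zero_le)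
    fun n => ?_
  rw [scheme, Real.ediam_Ioo]
  have := endpoints_snd_sub_fst_le hc (res x n)
  rw [res_length] at this
  exact ENNReal.ofReal_le_ofReal this

end AccumulatingIntervals

theorem exists_isEmbedding_closure_range_diff_subset_of_dense {S : Set ℝ} (hS : Dense S) :
    ∃ e : (ℕ → ℕ) → ℝ, IsEmbedding e ∧ closure (range e) \ range e ⊆ S := by
  choose! c hcS hc using fun a b (h : a < b) => hS.exists_between h
  have hc_mem : ∀ a b, a < b → c a b ∈ Ioo a b := hc
  open AccumulatingIntervals in
  obtain ⟨e, he, hclosure⟩ := CantorScheme.exists_isEmbedding_closure_range_diff_subset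
    (closureAntitone_scheme hc_mem) (disjoint_scheme hc_mem) (vanishingDiam_scheme hc_mem)
    (fun l => ⟨_, apex_mem_scheme hc_mem l⟩) (fun _ => isOpen_Ioo) (fun l => tendsto_child _ _)
  refine ⟨e, he, hclosure.trans ?_⟩
  rintro _ ⟨l, rfl⟩
  exact hcS _ _ (AccumulatingIntervals.endpoints_fst_lt_snd hc_mem l)

theorem Real.not_countable_Icc {a b : ℝ} (h : a < b) : ¬ (Icc a b).Countable := fun hc =>
  (Cardinal.mk_Icc_real h ▸ Cardinal.le_aleph0_iff_set_countable.2 hc).not_gt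
    Cardinal.aleph0_lt_continuum

instance : Uncountable (ℕ → Bool) := by
  rw [← Cardinal.aleph0_lt_mk_iff]
  simpa using Cardinal.aleph0_lt_continuum

namespace IsBernsteinReal

variable {B : Set ℝ} (hB : IsBernsteinReal B)
include hB

theorem dense_compl_s16 : Dense Bᶜ := by
  refine dense_of_exists_between fun a b hab => ?_
  obtain ⟨a', ha, hab'⟩ := exists_between hab
  obtain ⟨b', hab'', hb⟩ := exists_between hab'
  obtain ⟨z, hzB, hz⟩ := (hB _ isClosed_Icc (Real.not_countable_Icc hab'')).2
  exact ⟨z, hzB, ha.trans_le hz.1, hz.2.trans_lt hb⟩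

theorem isBernsteinBaire_preimage {e : (ℕ → ℕ) → ℝ} (hcont : Continuous e)
    (hinj : Injective e) : IsBernsteinBaire (e ⁻¹' B) := by
  intro P hP hne
  let := TopologicalSpace.upgradeIsCompletelyMetrizable (ℕ → ℕ)
  obtain ⟨g, hgP, hgc, hgi⟩ := hP.exists_nat_bool_injection hne
  have hK : ¬ (range (e ∘ g)).Countable := fun h =>
    not_countable_univ (preimage_range (e ∘ g) ▸ h.preimage (hinj.comp hgi))
  obtain ⟨⟨_, hB₁, c₁, rfl⟩, ⟨_, hB₂, c₂, rfl⟩⟩ :=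
    hB _ (isCompact_range (hcont.comp hgc)).isClosed hK
  exact ⟨⟨g c₁, hB₁, hgP ⟨c₁, rfl⟩⟩, ⟨g c₂, hB₂, hgP ⟨c₂, rfl⟩⟩⟩

end IsBernsteinReal

theorem bernstein_contains_closed_bernstein_copy (B : Set ℝ) (hB : IsBernsteinReal B) :
    ∃ C : Set ↥B, IsClosed C ∧
      ∃ D : Set (ℕ → ℕ), IsBernsteinBaire D ∧ Nonempty (↥C ≃ₜ ↥D) := by
  obtain ⟨e, he, hclosure⟩ := exists_isEmbedding_closure_range_diff_subset_of_dense hB.dense_compl_s16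
  refine ⟨range (B.restrictPreimage e), ?_, e ⁻¹' B,
    hB.isBernsteinBaire_preimage he.continuous he.injective,
    ⟨(he.restrictPreimage B).toHomeomorph.symm⟩⟩
  rw [range_restrictPreimage]
  exact isClosed_preimage_val_of_closure_diff_subset hclosure
end

section
/- A separable metrizable space X is completely Baire if and only if X does not contain a closed subspace homeomorphic to ℚ. -/
open Set Filter Topology Function Metric

theorem List.IsSuffix.eq_or_cons_suffix {α : Type*} {s t : List α} (h : s <:+ t) :
    t = s ∨ ∃ a, a :: s <:+ t := by
  obtain ⟨r, rfl⟩ := h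
  rcases r.eq_nil_or_concat' with rfl | ⟨r, a, rfl⟩
  · exact .inl rfl
  · exact .inr ⟨a, r, by simp⟩

theorem Set.diff_iInter_subset_iUnion_diff_succ {α : Type*} (A : ℕ → Set α) :
    A 0 \ ⋂ n, A n ⊆ ⋃ n, A n \ A (n + 1) := by
  rintro q ⟨h0, hq⟩
  by_contra hqA
  have : ∀ n, q ∈ A n := fun n =>
    Nat.rec h0 (fun n hn => by_contra fun hn' => hqA (mem_iUnion.2 ⟨n, hn, hn'⟩)) n
  exact hq (mem_iInter.2 this)

theorem Antitone.pairwise_disjoint_diff_succ {α : Type*} {A : ℕ → Set α} (hA : Antitone A) :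
    Pairwise (Disjoint on fun n => A n \ A (n + 1)) :=
  (pairwise_disjoint_on _).2 fun _ _ hmn =>
    disjoint_sdiff_left.mono_right (Set.sdiff_subset.trans (hA hmn))

structure IsSplitting {Y : Type*} [TopologicalSpace Y] (x : Y) (W : Set Y) (y : ℕ → Y)
    (V : ℕ → Set Y) : Prop where
  isOpen : ∀ n, IsOpen (V n)
  mem : ∀ n, y n ∈ V n
  closure_subset : ∀ n, closure (V n) ⊆ W
  notMem_closure : ∀ n, x ∉ closure (V n)
  pairwise_disjoint : Pairwise (Disjoint on fun n => closure (V n))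
  tendsto : Tendsto V atTop (𝓝 x).smallSets

theorem IsSplitting.mono {Y : Type*} [TopologicalSpace Y] {x : Y} {W W' : Set Y} {y : ℕ → Y}
    {V : ℕ → Set Y} (h : IsSplitting x W y V) (hW : W ⊆ W') : IsSplitting x W' y V :=
  { h with closure_subset := fun n => (h.closure_subset n).trans hW }

/-- The children of the node `s` are the lists `n :: s`. The point set `range c` of every such
scheme is a copy of `ℚ` (`RatScheme.nonempty_range_homeomorph_rat`). -/
structure RatScheme (Y : Type*) [TopologicalSpace Y] where
  V : List ℕ → Set Y
  c : List ℕ → Y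
  isOpen_V_nil : IsOpen (V [])
  c_mem_V_nil : c [] ∈ V []
  isSplitting : ∀ s, IsSplitting (c s) (V s) (fun n => c (n :: s)) (fun n => V (n :: s))

namespace RatScheme

variable {Y Z : Type*} [TopologicalSpace Y] [TopologicalSpace Z] (S : RatScheme Y)

theorem isOpen_V : ∀ s, IsOpen (S.V s)
  | [] => S.isOpen_V_nil
  | n :: s => (S.isSplitting s).isOpen n

theorem c_mem_V : ∀ s, S.c s ∈ S.V s
  | [] => S.c_mem_V_nil
  | n :: s => (S.isSplitting s).mem n

theorem V_cons_subset (n : ℕ) (s : List ℕ) : S.V (n :: s) ⊆ S.V s :=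
  subset_closure.trans ((S.isSplitting s).closure_subset n)

theorem V_subset_of_suffix {s t : List ℕ} (h : s <:+ t) : S.V t ⊆ S.V s := by
  obtain ⟨r, rfl⟩ := h
  induction r with
  | nil => rfl
  | cons n r ih => exact (S.V_cons_subset n _).trans ih

theorem c_mem_V_of_suffix {s t : List ℕ} (h : s <:+ t) : S.c t ∈ S.V s :=
  S.V_subset_of_suffix h (S.c_mem_V t)

theorem suffix_of_c_mem_closure_V {s t : List ℕ} (h : S.c t ∈ closure (S.V s)) : s <:+ t := by
  induction s with
  | nil => exact List.nil_suffix
  | cons n s ih =>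
    have hst : s <:+ t :=
      ih (subset_closure (((S.isSplitting s).closure_subset n) h))
    rcases hst.eq_or_cons_suffix with rfl | ⟨m, hm⟩
    · exact absurd h ((S.isSplitting t).notMem_closure n)
    · obtain rfl | hmn := eq_or_ne m n
      · exact hm
      · exact absurd h (((S.isSplitting s).pairwise_disjoint hmn).notMem_of_mem_left
          (subset_closure (S.c_mem_V_of_suffix hm)))

theorem c_injective : Injective S.c := fun s t h =>
  have hst := S.suffix_of_c_mem_closure_V (h ▸ subset_closure (S.c_mem_V s))
  have hts := S.suffix_of_c_mem_closure_V (h.symm ▸ subset_closure (S.c_mem_V t))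
  hst.eq_of_length (hst.length_le.antisymm hts.length_le)

def nbhd (s : List ℕ) (N : ℕ) : Set Y :=
  S.V s \ ⋃ m ∈ Finset.range N, closure (S.V (m :: s))

theorem isOpen_nbhd (s : List ℕ) (N : ℕ) : IsOpen (S.nbhd s N) :=
  (S.isOpen_V s).sdiff (isClosed_biUnion_finset fun _ _ => isClosed_closure)

theorem c_mem_nbhd (s : List ℕ) (N : ℕ) : S.c s ∈ S.nbhd s N :=
  ⟨S.c_mem_V s, by simpa using fun m _ => (S.isSplitting s).notMem_closure m⟩

theorem eq_or_exists_le_of_c_mem_nbhd {s t : List ℕ} {N : ℕ} (h : S.c t ∈ S.nbhd s N) :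
    t = s ∨ ∃ m, N ≤ m ∧ m :: s <:+ t := by
  refine (S.suffix_of_c_mem_closure_V (subset_closure h.1)).eq_or_cons_suffix.imp_right ?_
  rintro ⟨m, hm⟩
  refine ⟨m, not_lt.1 fun hmN => h.2 ?_, hm⟩
  exact mem_biUnion (Finset.mem_range.2 hmN) (subset_closure (S.c_mem_V_of_suffix hm))

theorem exists_mem_nhds_forall_c_mem (T : RatScheme Z) (s : List ℕ) {W : Set Z}
    (hW : W ∈ 𝓝 (T.c s)) : ∃ O ∈ 𝓝 (S.c s), ∀ t, S.c t ∈ O → T.c t ∈ W := by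
  obtain ⟨N, hN⟩ :=
    eventually_atTop.1 (tendsto_smallSets_iff.1 (T.isSplitting s).tendsto W hW)
  refine ⟨S.nbhd s N, (S.isOpen_nbhd s N).mem_nhds (S.c_mem_nbhd s N), fun t ht => ?_⟩
  rcases S.eq_or_exists_le_of_c_mem_nbhd ht with rfl | ⟨m, hm, hmt⟩
  · exact mem_of_mem_nhds hW
  · exact hN m hm (T.c_mem_V_of_suffix hmt)

noncomputable def equivRange : List ℕ ≃ range S.c :=
  Equiv.ofInjective S.c S.c_injective

theorem continuous_equivRange_symm_trans (T : RatScheme Z) :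
    Continuous (S.equivRange.symm.trans T.equivRange) := by
  refine continuous_induced_rng.2 (continuous_iff_continuousAt.2 ?_)
  rintro ⟨_, s, rfl⟩ W hW
  obtain ⟨O, hO, hOW⟩ := S.exists_mem_nhds_forall_c_mem T s (by simpa [equivRange] using hW)
  refine mem_map.2 ?_
  filter_upwards [continuous_subtype_val.continuousAt.preimage_mem_nhds hO]
  rintro ⟨_, t, rfl⟩ ht
  simpa [equivRange] using hOW t ht

noncomputable def rangeHomeomorph (T : RatScheme Z) : range S.c ≃ₜ range T.c where
  toEquiv := S.equivRange.symm.trans T.equivRange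
  continuous_toFun := S.continuous_equivRange_symm_trans T
  continuous_invFun := T.continuous_equivRange_symm_trans S

theorem image_suffix_subset (s : List ℕ) :
    S.c '' {t | s <:+ t} ⊆ insert (S.c s) (⋃ n, S.c '' {t | n :: s <:+ t}) := by
  rintro _ ⟨t, hst, rfl⟩
  rcases hst.eq_or_cons_suffix with rfl | ⟨n, hn⟩
  · exact mem_insert _ _
  · exact mem_insert_of_mem _ (mem_iUnion.2 ⟨n, t, hn, rfl⟩)

theorem exists_length_eq_mem_closure_V [T3Space Y] {y : Y} (hy : y ∈ closure (range S.c))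
    (hyc : y ∉ range S.c) (k : ℕ) : ∃ s : List ℕ, s.length = k ∧ y ∈ closure (S.V s) := by
  suffices ∃ s : List ℕ, s.length = k ∧ y ∈ closure (S.c '' {t | s <:+ t}) by
    obtain ⟨s, hs, hy⟩ := this
    exact ⟨s, hs, closure_mono (image_subset_iff.2 fun t => S.c_mem_V_of_suffix) hy⟩
  induction k with
  | zero => exact ⟨[], rfl, by simpa using hy⟩
  | succ k ih =>
    obtain ⟨s, rfl, hs⟩ := ih
    -- a closed neighbourhood `K` of `c s` missing `y` contains all but finitely many children
    obtain ⟨K, hK, hKc, hKy⟩ := exists_mem_nhds_isClosed_subset (x := S.c s)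
      (isOpen_compl_singleton.mem_nhds fun h => hyc ⟨s, h⟩)
    obtain ⟨N, hN⟩ :=
      eventually_atTop.1 (tendsto_smallSets_iff.1 (S.isSplitting s).tendsto K hK)
    have hsub : S.c '' {t | s <:+ t} ⊆ K ∪ ⋃ n ∈ Finset.range N, S.c '' {t | n :: s <:+ t} := by
      refine (S.image_suffix_subset s).trans (insert_subset (.inl (mem_of_mem_nhds hK)) ?_)
      refine iUnion_subset fun n => ?_
      rcases lt_or_ge n N with hn | hn
      · exact fun x hx => .inr (mem_iUnion₂.2 ⟨n, Finset.mem_range.2 hn, hx⟩)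
      · rintro _ ⟨t, ht, rfl⟩
        exact .inl (hN n hn (S.c_mem_V_of_suffix ht))
    have hy' := closure_mono hsub hs
    rw [closure_union, hKc.closure_eq, Finset.closure_biUnion] at hy'
    obtain ⟨n, -, hn⟩ := mem_iUnion₂.1 (hy'.resolve_left fun h => hKy h (mem_singleton y))
    exact ⟨n :: s, rfl, hn⟩

theorem surjective_c [Encodable Y] (hroot : S.V [] = univ)
    (hmin : ∀ s, ∀ q ∈ S.V s, Encodable.encode (S.c s) ≤ Encodable.encode q)
    (hcover : ∀ s, S.V s \ {S.c s} ⊆ ⋃ n, S.V (n :: s)) : Surjective S.c := by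
  intro q
  suffices ∀ k s, Encodable.encode q - Encodable.encode (S.c s) = k → q ∈ S.V s →
      ∃ t, S.c t = q from this _ [] rfl (hroot ▸ mem_univ q)
  intro k
  induction k using Nat.strong_induction_on with
  | _ k ih =>
    intro s hk hq
    by_cases hqs : q = S.c s
    · exact ⟨s, hqs.symm⟩
    obtain ⟨n, hn⟩ := mem_iUnion.1 (hcover s ⟨hq, hqs⟩)
    -- the code of the point strictly grows from `c s` to its child, and stays below that of `q`
    have hlt : Encodable.encode (S.c s) < Encodable.encode (S.c (n :: s)) :=
      (hmin s _ (S.V_cons_subset n s (S.c_mem_V _))).lt_of_ne fun h =>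
        (S.isSplitting s).notMem_closure n
          (Encodable.encode_injective h ▸ subset_closure (S.c_mem_V _))
    have hle := hmin (n :: s) q hn
    exact ih _ (by omega) (n :: s) rfl hn

section ofSplitting

variable (x₀ : Y) (W₀ : Set Y) (y : ℕ → Y → Set Y → ℕ → Y) (V : ℕ → Y → Set Y → ℕ → Set Y)

def node : List ℕ → Y × Set Y
  | [] => (x₀, W₀)
  | n :: s => (y s.length (node s).1 (node s).2 n, V s.length (node s).1 (node s).2 n)

variable {x₀ W₀ y V} (P : ℕ → Y → Set Y → Prop)

theorem node_spec (h₀ : P 0 x₀ W₀)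
    (h : ∀ k x W, P k x W → IsSplitting x W (y k x W) (V k x W) ∧
      ∀ n, P (k + 1) (y k x W n) (V k x W n)) :
    ∀ s, P s.length (node x₀ W₀ y V s).1 (node x₀ W₀ y V s).2
  | [] => h₀
  | _ :: s => (h _ _ _ (node_spec h₀ h s)).2 _

def ofSplitting (h₀ : P 0 x₀ W₀)
    (h : ∀ k x W, P k x W → IsSplitting x W (y k x W) (V k x W) ∧
      ∀ n, P (k + 1) (y k x W n) (V k x W n))
    (hW₀ : IsOpen W₀) (hx₀ : x₀ ∈ W₀) : RatScheme Y where
  V s := (node x₀ W₀ y V s).2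
  c s := (node x₀ W₀ y V s).1
  isOpen_V_nil := hW₀
  c_mem_V_nil := hx₀
  isSplitting s := (h _ _ _ (node_spec P h₀ h s)).1

end ofSplitting

end RatScheme

theorem Rat.isClosed_ball_of_irrational (x : ℚ) {r : ℝ} (hr : Irrational r) :
    IsClosed (ball x r) := by
  convert isClosed_closedBall (x := x) (ε := r) using 1
  refine ((ball_subset_closedBall).antisymm fun q hq => ?_)
  refine (mem_closedBall.1 hq).lt_of_ne fun h => hr.ne_rat |q - x| ?_
  rw [← h, Rat.dist_eq, Rat.cast_abs, Rat.cast_sub]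

theorem Rat.nonempty_ball_diff_ball (x : ℚ) {a b : ℝ} (hb : 0 ≤ b) (hab : b < a) :
    (ball x a \ ball x b).Nonempty := by
  obtain ⟨t, hbt, hta⟩ := exists_rat_btwn hab
  have ht : dist (x + t) x = t := by
    rw [Rat.dist_eq]
    push_cast
    rw [add_sub_cancel_left, abs_of_nonneg (hb.trans hbt.le)]
  exact ⟨x + t, by simpa [ht] using hta, by simpa [ht] using hbt.le⟩

theorem exists_irrational_strictAnti_tendsto_zero {ρ : ℝ} (hρ : 0 < ρ) :
    ∃ r : ℕ → ℝ, (∀ n, Irrational (r n)) ∧ StrictAnti r ∧ (∀ n, 0 < r n) ∧ r 0 < ρ ∧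
      Tendsto r atTop (𝓝 0) := by
  obtain ⟨r₀, hirr, hr₀, hr₀ρ⟩ := exists_irrational_btwn hρ
  refine ⟨fun n => r₀ / 2 ^ n, fun n => ?_, fun m n hmn => ?_, fun n => by positivity,
    by simpa using hr₀ρ, ?_⟩
  · exact_mod_cast hirr.div_natCast (pow_ne_zero n two_ne_zero)
  · exact div_lt_div_of_pos_left hr₀ (by positivity) (pow_lt_pow_right₀ one_lt_two hmn)
  · simpa [div_eq_mul_inv] using
      (tendsto_pow_atTop_nhds_zero_of_lt_one (by norm_num : (0 : ℝ) ≤ 2⁻¹)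
        (by norm_num)).const_mul r₀

theorem Rat.exists_isSplitting {x : ℚ} {W : Set ℚ} (hWo : IsOpen W) (hWc : IsClosed W)
    (hx : x ∈ W) :
    ∃ (y : ℕ → ℚ) (V : ℕ → Set ℚ), IsSplitting x W y V ∧ (∀ n, IsClosed (V n)) ∧
      (∀ n, ∀ q ∈ V n, Encodable.encode (y n) ≤ Encodable.encode q) ∧
      W \ {x} ⊆ ⋃ n, V n := by
  obtain ⟨ρ, hρ, hρW⟩ := Metric.isOpen_iff.1 hWo x hx
  obtain ⟨r, hirr, hanti, hpos, hr0, hlim⟩ := exists_irrational_strictAnti_tendsto_zero hρ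
  let A : ℕ → Set ℚ := fun
    | 0 => W
    | n + 1 => ball x (r n)
  have hAo : ∀ n, IsOpen (A n) := fun | 0 => hWo | n + 1 => isOpen_ball
  have hAc : ∀ n, IsClosed (A n) := fun
    | 0 => hWc
    | n + 1 => Rat.isClosed_ball_of_irrational x (hirr n)
  have hA : Antitone A := antitone_nat_of_succ_le fun
    | 0 => (ball_subset_ball hr0.le).trans hρW
    | n + 1 => ball_subset_ball (hanti (Nat.lt_succ_self n)).le
  have hxA : ∀ n, x ∈ A (n + 1) := fun n => mem_ball_self (hpos n)
  have hne : ∀ n, (A n \ A (n + 1)).Nonempty := fun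
    | 0 => (Rat.nonempty_ball_diff_ball x (hpos 0).le hr0).mono (sdiff_subset_sdiff_left hρW)
    | n + 1 => Rat.nonempty_ball_diff_ball x (hpos _).le (hanti (Nat.lt_succ_self n))
  have hVc : ∀ n, IsClosed (A n \ A (n + 1)) := fun n => (hAc n).sdiff (hAo (n + 1))
  refine ⟨fun n => argminOn Encodable.encode _ (hne n), fun n => A n \ A (n + 1),
    ⟨fun n => (hAo n).sdiff (hAc (n + 1)), fun n => argminOn_mem _ _ (hne n),
      fun n => by simpa only [(hVc n).closure_eq] using sdiff_subset.trans (hA (Nat.zero_le n)),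
      fun n => by simpa only [(hVc n).closure_eq] using fun h => h.2 (hxA n), ?_, ?_⟩,
    hVc, fun n q hq => argminOn_le _ _ hq, ?_⟩
  · simpa only [(hVc _).closure_eq] using hA.pairwise_disjoint_diff_succ
  · refine tendsto_smallSets_iff.2 fun t ht => ?_
    obtain ⟨ε, hε, hεt⟩ := Metric.mem_nhds_iff.1 ht
    obtain ⟨N, hN⟩ := eventually_atTop.1 (hlim.eventually (gt_mem_nhds hε))
    refine eventually_atTop.2 ⟨N + 1, fun n hn => ?_⟩
    obtain ⟨m, rfl⟩ := Nat.exists_eq_add_one_of_ne_zero (by omega : n ≠ 0)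
    exact sdiff_subset.trans ((ball_subset_ball (hN m (by omega)).le).trans hεt)
  · refine (sdiff_subset_sdiff_right fun q hq => ?_).trans (diff_iInter_subset_iUnion_diff_succ A)
    by_contra hqx
    obtain ⟨n, hn⟩ := (hlim.eventually (gt_mem_nhds (dist_pos.2 hqx))).exists
    exact lt_asymm (mem_ball.1 (mem_iInter.1 hq (n + 1))) hn

theorem RatScheme.exists_surjective_c_rat : ∃ S : RatScheme ℚ, Surjective S.c := by
  choose! y V hsplit hclosed hmin hcover using
    fun (x : ℚ) (W : Set ℚ) (h : IsOpen W ∧ IsClosed W ∧ x ∈ W) =>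
      Rat.exists_isSplitting h.1 h.2.1 h.2.2
  let P : ℕ → ℚ → Set ℚ → Prop := fun _ x W =>
    (IsOpen W ∧ IsClosed W ∧ x ∈ W) ∧ ∀ q ∈ W, Encodable.encode x ≤ Encodable.encode q
  have h₀ : P 0 (argminOn Encodable.encode univ univ_nonempty) univ :=
    ⟨⟨isOpen_univ, isClosed_univ, mem_univ _⟩, fun q hq => argminOn_le _ _ hq⟩
  have hstep : ∀ k x W, P k x W →
      IsSplitting x W (y x W) (V x W) ∧ ∀ n, P (k + 1) (y x W n) (V x W n) := fun _ x W hP =>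
    ⟨hsplit x W hP.1, fun n => ⟨⟨(hsplit x W hP.1).isOpen n, hclosed x W hP.1 n,
      (hsplit x W hP.1).mem n⟩, hmin x W hP.1 n⟩⟩
  let S := RatScheme.ofSplitting P h₀ hstep isOpen_univ (mem_univ _)
  have hS := RatScheme.node_spec P h₀ hstep
  exact ⟨S, S.surjective_c rfl (fun s => (hS s).2) fun s => hcover _ _ (hS s).1⟩

theorem RatScheme.nonempty_range_homeomorph_rat {Y : Type*} [TopologicalSpace Y]
    (S : RatScheme Y) : Nonempty (range S.c ≃ₜ ℚ) :=
  let ⟨T, hT⟩ := RatScheme.exists_surjective_c_rat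
  ⟨(S.rangeHomeomorph T).trans ((Homeomorph.setCongr hT.range_eq).trans (Homeomorph.Set.univ ℚ))⟩

theorem exists_isSplitting_of_mem_closure {Y : Type*} [MetricSpace Y] {x : Y}
    {O : Set Y} (hO : IsOpen O) (hx : x ∈ closure O) (hxO : x ∉ O) :
    ∃ (y : ℕ → Y) (V : ℕ → Set Y), IsSplitting x O y V := by
  have hpos : ∀ z ∈ O, 0 < dist z x := fun z hz => dist_pos.2 (ne_of_mem_of_not_mem hz hxO)
  -- decay by a factor `4` keeps the balls of radius `≤ dist (p n) x / 4` pairwise apart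
  obtain ⟨p, hpO, hdec⟩ := exists_seq_of_forall_finset_exists (· ∈ O)
    (fun a b => dist b x < dist a x / 4) fun s hs => by
      have hnhds : ⋂ a ∈ s, ball x (dist a x / 4) ∈ 𝓝 x :=
        (biInter_finset_mem s).2 fun a ha => ball_mem_nhds x (by linarith [hpos a (hs a ha)])
      obtain ⟨z, hz, hzO⟩ := mem_closure_iff_nhds.1 hx _ hnhds
      exact ⟨z, hzO, fun a ha => by simpa [dist_comm] using mem_iInter₂.1 hz a ha⟩
  choose ε hε hεO using fun n => nhds_basis_closedBall.mem_iff.1 (hO.mem_nhds (hpO n))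
  set r := fun n => min (ε n) (dist (p n) x / 4)
  have hr : ∀ n, 0 < r n := fun n => lt_min (hε n) (by linarith [hpos _ (hpO n)])
  have hrd : ∀ n, r n ≤ dist (p n) x / 4 := fun n => min_le_right _ _
  have hclO : ∀ n, closure (ball (p n) (r n)) ⊆ O := fun n =>
    closure_ball_subset_closedBall.trans
      ((closedBall_subset_closedBall (min_le_left _ _)).trans (hεO n))
  have hd : Tendsto (fun n => dist (p n) x) atTop (𝓝 0) := by
    refine squeeze_zero (fun n => dist_nonneg)
      (fun n => ?_ : ∀ n, dist (p n) x ≤ dist (p 0) x * (1 / 4) ^ n)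
      (by simpa using (tendsto_pow_atTop_nhds_zero_of_lt_one (by norm_num : (0 : ℝ) ≤ 1 / 4)
        (by norm_num)).const_mul (dist (p 0) x))
    induction n with
    | zero => simp
    | succ n ih =>
      rw [pow_succ]
      linarith [hdec n (n + 1) (Nat.lt_succ_self n)]
  refine ⟨p, fun n => ball (p n) (r n), ⟨fun n => isOpen_ball, fun n => mem_ball_self (hr n),
    hclO, fun n h => hxO (hclO n h), ?_, ?_⟩⟩
  · refine (pairwise_disjoint_on _).2 fun m n hmn =>
      (closedBall_disjoint_closedBall ?_).mono closure_ball_subset_closedBall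
        closure_ball_subset_closedBall
    linarith [hrd m, hrd n, hdec m n hmn, hpos _ (hpO m), dist_triangle (p m) (p n) x]
  · refine tendsto_smallSets_iff.2 fun t ht => ?_
    obtain ⟨δ, hδ, hδt⟩ := Metric.mem_nhds_iff.1 ht
    filter_upwards [hd.eventually (gt_mem_nhds (by linarith : 0 < δ / 2))] with n hn
    exact (ball_subset_ball' (by linarith [hrd n])).trans hδt

theorem exists_isSplitting_subset_of_dense {Y : Type*} [MetricSpace Y] {x : Y}
    {W G : Set Y} (hW : IsOpen W) (hx : x ∈ W) (hG : IsOpen G) (hGd : Dense G)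
    (hx' : ¬IsOpen {x}) :
    ∃ (y : ℕ → Y) (V : ℕ → Set Y), IsSplitting x W y V ∧ ∀ n, closure (V n) ⊆ W ∩ G := by
  have hd : Dense (G ∩ {x}ᶜ) :=
    hGd.inter_of_isOpen_left (dense_compl_singleton_iff_not_open.2 hx') hG
  obtain ⟨y, V, hV⟩ := exists_isSplitting_of_mem_closure
    (hW.inter (hG.inter isOpen_compl_singleton)) (hd.open_subset_closure_inter hW hx)
    fun h => h.2.2 rfl
  exact ⟨y, V, hV.mono inter_subset_left, fun n =>
    (hV.closure_subset n).trans (inter_subset_inter_right _ inter_subset_left)⟩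

theorem exists_ratScheme_isClosed_range {Y : Type*} [MetricSpace Y] {U : Set Y}
    {f : ℕ → Set Y} (hU : IsOpen U) (hUne : U.Nonempty) (hfo : ∀ n, IsOpen (f n))
    (hfd : ∀ n, Dense (f n)) (hUf : Disjoint U (⋂ n, f n)) :
    ∃ S : RatScheme Y, IsClosed (range S.c) := by
  have hiso : ∀ x ∈ U, ¬IsOpen {x} := fun x hxU hx => hUf.notMem_of_mem_left hxU
    (mem_iInter.2 fun n => by simpa using (hfd n).inter_open_nonempty _ hx (singleton_nonempty x))
  choose! y V hsplit hsub using fun (k : ℕ) (x : Y) (W : Set Y)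
    (h : IsOpen W ∧ x ∈ W ∧ closure W ⊆ U ∩ f k) =>
      exists_isSplitting_subset_of_dense h.1 h.2.1 (hfo (k + 1)) (hfd (k + 1))
        (hiso x (h.2.2 (subset_closure h.2.1)).1)
  let P : ℕ → Y → Set Y → Prop := fun k x W => IsOpen W ∧ x ∈ W ∧ closure W ⊆ U ∩ f k
  obtain ⟨x₀, hx₀⟩ := (hfd 0).inter_open_nonempty U hU hUne
  obtain ⟨ε, hε, hεU⟩ := nhds_basis_closedBall.mem_iff.1 ((hU.inter (hfo 0)).mem_nhds hx₀)
  have h₀ : P 0 x₀ (ball x₀ ε) :=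
    ⟨isOpen_ball, mem_ball_self hε, closure_ball_subset_closedBall.trans hεU⟩
  have hstep : ∀ k x W, P k x W →
      IsSplitting x W (y k x W) (V k x W) ∧ ∀ n, P (k + 1) (y k x W n) (V k x W n) :=
    fun k x W hP => ⟨hsplit k x W hP, fun n => ⟨(hsplit k x W hP).isOpen n,
      (hsplit k x W hP).mem n, fun z hz => ⟨(hP.2.2 (subset_closure (hsub k x W hP n hz).1)).1,
        (hsub k x W hP n hz).2⟩⟩⟩
  let S := RatScheme.ofSplitting P h₀ hstep isOpen_ball (mem_ball_self hε)
  refine ⟨S, closure_subset_iff_isClosed.1 fun z hz => by_contra fun hzS => ?_⟩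
  have hzk : ∀ k, z ∈ U ∩ f k := fun k =>
    let ⟨s, hs, hzs⟩ := S.exists_length_eq_mem_closure_V hz hzS k
    hs ▸ (RatScheme.node_spec P h₀ hstep s).2.2 hzs
  exact hUf.notMem_of_mem_left (hzk 0).1 (mem_iInter.2 fun k => (hzk k).2)

theorem exists_isClosed_homeomorph_rat_of_not_baireSpace {Y : Type*} [TopologicalSpace Y]
    [TopologicalSpace.MetrizableSpace Y] (h : ¬BaireSpace Y) :
    ∃ D : Set Y, IsClosed D ∧ Nonempty (D ≃ₜ ℚ) := by
  let := TopologicalSpace.metrizableSpaceMetric Y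
  obtain ⟨f, hfo, hfd, hf⟩ : ∃ f : ℕ → Set Y,
      (∀ n, IsOpen (f n)) ∧ (∀ n, Dense (f n)) ∧ ¬Dense (⋂ n, f n) := by
    by_contra! H
    exact h ⟨H⟩
  obtain ⟨S, hS⟩ := exists_ratScheme_isClosed_range isClosed_closure.isOpen_compl
    (nonempty_compl.2 (mt dense_iff_closure_eq.2 hf)) hfo hfd
    (disjoint_compl_left.mono_right subset_closure)
  exact ⟨range S.c, hS, S.nonempty_range_homeomorph_rat⟩

theorem not_baireSpace_of_countable (X : Type*) [TopologicalSpace X] [T1Space X] [Countable X]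
    [Nonempty X] [∀ x : X, NeBot (𝓝[≠] x)] : ¬BaireSpace X := fun _ => by
  obtain ⟨z, hz⟩ := (dense_iInter_of_isOpen (f := fun x : X => {x}ᶜ)
    (fun x => isOpen_compl_singleton) fun x => dense_compl_singleton x).nonempty
  exact mem_iInter.1 hz z rfl

theorem Topology.IsClosedEmbedding.exists_isClosed_homeomorph {X Y Z : Type*}
    [TopologicalSpace X] [TopologicalSpace Y] [TopologicalSpace Z] {f : Y → X}
    (hf : IsClosedEmbedding f) {D : Set Y} (hD : IsClosed D) (e : D ≃ₜ Z) :
    ∃ E : Set X, IsClosed E ∧ Nonempty (E ≃ₜ Z) :=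
  have hg := hf.comp hD.isClosedEmbedding_subtypeVal
  ⟨_, hg.isClosed_range, ⟨hg.isEmbedding.toHomeomorph.symm.trans e⟩⟩

theorem hurewicz_completelyBaire_iff_no_closed_copy_of_rationals_general
    (X : Type*) [TopologicalSpace X]
    [TopologicalSpace.MetrizableSpace X] :
    CompletelyBaire X ↔ ¬ ∃ C : Set X, IsClosed C ∧ Nonempty (↥C ≃ₜ ℚ) := by
  refine ⟨fun hX ⟨C, hC, ⟨e⟩⟩ => ?_, fun hX C hC => by_contra fun hCB => ?_⟩
  · have := hX C hC
    exact not_baireSpace_of_countable ℚ e.baireSpace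
  · obtain ⟨D, hD, ⟨e⟩⟩ := exists_isClosed_homeomorph_rat_of_not_baireSpace hCB
    exact hX (hC.isClosedEmbedding_subtypeVal.exists_isClosed_homeomorph hD e)

theorem hurewicz_completelyBaire_iff_no_closed_copy_of_rationals
    (X : Type*) [TopologicalSpace X] [TopologicalSpace.SeparableSpace X]
    [TopologicalSpace.MetrizableSpace X] :
    CompletelyBaire X ↔ ¬ ∃ C : Set X, IsClosed C ∧ Nonempty (↥C ≃ₜ ℚ) :=
  hurewicz_completelyBaire_iff_no_closed_copy_of_rationals_general X
end

section
/- If Q is a subset of ℝ homeomorphic to ℚ that is closed in ℝ ∖ X for some X ⊆ ℝ, then the set cl(Q) ∖ Q is contained in X and is a Polish, zero-dimensional, nowhere locally compact space; hence X contains a closed copy of ℕ^ℕ. -/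
/-!
Write `S = cl(Q) \ Q`. Since `Q` is closed in `Xᶜ`, no point of `S` lies in `Xᶜ`. As a closed set
minus a countable one, `S` is a `G_δ` in `ℝ`, hence Polish; its complement is dense, so intervals
with endpoints outside `S` cut out a clopen basis of `S`. Every point `q ∈ Q` is a limit of points
of `S`: otherwise the closure of `Q` near `q` would be a nonempty perfect subset of the countable
set `Q`, while nonempty perfect sets in `ℝ` are uncountable. A compact neighbourhood in `S` of a
point of `S` is closed in `ℝ` and would then contain a point of `Q`, so `S` is nowhere locally
compact.

By the Alexandrov–Urysohn characterisation `S ≃ₜ ℕ^ℕ`. To prove it, split every nonempty clopen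
set into countably many disjoint nonempty clopen pieces of small diameter (infinitely many, since a
noncompact closed set in a complete space is not totally bounded) and iterate: the resulting Lusin
scheme induces a homeomorphism `ℕ^ℕ ≃ₜ S`. Finally `S = X ∩ cl(Q)` is closed in `X`.
-/

open Set Filter Topology Metric Function TopologicalSpace PiNat
open scoped ENNReal

theorem PiNat.exists_forall_res_of_forall_exists_cons {β : Type*} {P : List β → Prop}
    (hnil : P []) (hcons : ∀ l, P l → ∃ a, P (a :: l)) : ∃ x : ℕ → β, ∀ n, P (res x n) := by
  obtain ⟨a₀, -⟩ := hcons [] hnil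
  have : Nonempty β := ⟨a₀⟩
  choose! g hg using hcons
  let L : ℕ → List β := fun n => Nat.rec [] (fun _ l => g l :: l) n
  have hres : ∀ n, res (fun k => g (L k)) n = L n := by
    intro n
    induction n with
    | zero => rfl
    | succ n ih => rw [res_succ, ih]
  refine ⟨fun k => g (L k), fun n => ?_⟩
  rw [hres]
  induction n with
  | zero => exact hnil
  | succ n ih => exact hg _ ih

namespace CantorScheme

variable {β α : Type*} {A : List β → Set α}

theorem res_eq_of_inter_nonempty (hanti : CantorScheme.Antitone A)
    (hdisj : CantorScheme.Disjoint A) {x y : ℕ → β} :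
    ∀ {n : ℕ}, (A (res x n) ∩ A (res y n)).Nonempty → res x n = res y n
  | 0, _ => rfl
  | n + 1, ⟨z, hzx, hzy⟩ => by
    have hn : res x n = res y n :=
      res_eq_of_inter_nonempty hanti hdisj ⟨z, hanti _ _ hzx, hanti _ _ hzy⟩
    rw [res_succ, hn] at hzx ⊢
    refine congrArg₂ List.cons (by_contra fun hne => ?_) rfl
    exact (hdisj _ hne).ne_of_mem hzx hzy rfl

theorem nonempty_homeomorph_of_vanishingDiam [TopologicalSpace β] [DiscreteTopology β]
    [MetricSpace α] [CompleteSpace α] (hroot : A [] = univ) (hopen : ∀ l, IsOpen (A l))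
    (hclosed : ∀ l, IsClosed (A l)) (hne : ∀ l, (A l).Nonempty)
    (hanti : CantorScheme.Antitone A) (hdisj : CantorScheme.Disjoint A)
    (hcover : ∀ l, A l ⊆ ⋃ a, A (a :: l)) (hdiam : VanishingDiam A) :
    Nonempty ((ℕ → β) ≃ₜ α) := by
  have hdom := (hanti.closureAntitone hclosed).map_of_vanishingDiam hdiam hne
  let f : (ℕ → β) → α := fun x => (inducedMap A).2 ⟨x, hdom ▸ mem_univ x⟩
  have hf_mem : ∀ x n, f x ∈ A (res x n) := fun x => map_mem _
  have hf_surj : Surjective f := by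
    intro y
    obtain ⟨x, hx⟩ := exists_forall_res_of_forall_exists_cons (P := (y ∈ A ·))
      (hroot ▸ mem_univ y) fun l hy => mem_iUnion.1 (hcover l hy)
    refine ⟨x, eq_of_forall_dist_le fun ε hε => ?_⟩
    obtain ⟨n, hn⟩ := hdiam.dist_lt ε hε x
    exact (hn _ (hf_mem x n) _ (hx n)).le
  have himage : ∀ x n, f '' cylinder x n = A (res x n) := by
    refine fun x n => Subset.antisymm ?_ fun y hy => ?_
    · rintro _ ⟨x', hx', rfl⟩
      rw [cylinder_eq_res] at hx'
      exact hx' ▸ hf_mem x' n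
    · obtain ⟨x', rfl⟩ := hf_surj y
      rw [cylinder_eq_res]
      exact ⟨x', res_eq_of_inter_nonempty hanti hdisj ⟨_, hf_mem x' n, hy⟩, rfl⟩
  have hf_open : IsOpenMap f := (isTopologicalBasis_cylinders fun _ => β).isOpenMap_iff.2 <| by
    rintro _ ⟨x, n, rfl⟩
    exact himage x n ▸ hopen _
  exact ⟨(Equiv.ofBijective f ⟨fun x y h => congrArg Subtype.val (hdisj.map_injective h),
    hf_surj⟩).toHomeomorphOfContinuousOpen (hdiam.map_continuous.comp
      (continuous_id.subtype_mk _)) hf_open⟩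

end CantorScheme

section ClopenPartition

variable {α : Type*}

theorem exists_pairwise_disjoint_clopen_cover_subordinate [TopologicalSpace α]
    [SecondCountableTopology α] {B : Set (Set α)} (hB : IsTopologicalBasis B)
    (hBc : ∀ s ∈ B, IsClopen s) {A : Set α} (hA : IsOpen A) (hAne : A.Nonempty)
    {𝒰 : Set (Set α)} (h𝒰 : ∀ u ∈ 𝒰, IsOpen u) (hA𝒰 : A ⊆ ⋃₀ 𝒰) :
    ∃ D : ℕ → Set α, (∀ n, IsClopen (D n)) ∧ Pairwise (Disjoint on D) ∧ ⋃ n, D n = A ∧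
      ∀ n, ∃ u ∈ 𝒰, D n ⊆ u := by
  set 𝒲 := {b ∈ B | ∃ u ∈ 𝒰, b ⊆ A ∩ u}
  have h𝒲 : ⋃₀ 𝒲 = A := by
    refine Subset.antisymm (sUnion_subset fun b hb => ?_) fun x hx => ?_
    · obtain ⟨-, u, -, hb⟩ := hb
      exact hb.trans inter_subset_left
    obtain ⟨u, hu, hxu⟩ := hA𝒰 hx
    obtain ⟨b, hbB, hxb, hb⟩ :=
      hB.exists_subset_of_mem_open (mem_inter hx hxu) (hA.inter (h𝒰 u hu))
    exact ⟨b, ⟨hbB, u, hu, hb⟩, hxb⟩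
  obtain ⟨𝒯, h𝒯c, h𝒯𝒲, h𝒯⟩ := isOpen_sUnion_countable 𝒲 fun b hb => (hBc b hb.1).isOpen
  rw [h𝒲] at h𝒯
  have h𝒯ne : 𝒯.Nonempty := by
    obtain ⟨x, hx⟩ := hAne
    rw [← h𝒯] at hx
    obtain ⟨t, ht, -⟩ := hx
    exact ⟨t, ht⟩
  obtain ⟨e, rfl⟩ := h𝒯c.exists_eq_range h𝒯ne
  have he : ∀ n, e n ∈ 𝒲 := fun n => h𝒯𝒲 ⟨n, rfl⟩
  refine ⟨disjointed e, fun n => disjointedRec (fun _ i ht => ht.diff (hBc _ (he i).1))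
    (hBc _ (he n).1), disjoint_disjointed e, by rw [iUnion_disjointed, ← sUnion_range, h𝒯],
    fun n => ?_⟩
  obtain ⟨u, hu, heu⟩ := (he n).2
  exact ⟨u, hu, (disjointed_subset e n).trans (heu.trans inter_subset_right)⟩

theorem exists_injective_forall_nonempty_iUnion_eq {D : ℕ → Set α}
    (h : {n | (D n).Nonempty}.Infinite) :
    ∃ e : ℕ → ℕ, Injective e ∧ (∀ k, (D (e k)).Nonempty) ∧ ⋃ k, D (e k) = ⋃ n, D n := by
  refine ⟨Nat.nth fun n => (D n).Nonempty, Nat.nth_injective h, Nat.nth_mem_of_infinite h,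
    Subset.antisymm (iUnion_mono' fun k => ⟨_, subset_rfl⟩) (iUnion_subset fun n x hx => ?_)⟩
  obtain ⟨k, hk⟩ : n ∈ range (Nat.nth fun n => (D n).Nonempty) := by
    rw [Nat.range_nth_of_infinite h]
    exact ⟨x, hx⟩
  exact mem_iUnion.2 ⟨k, hk ▸ hx⟩

structure IsSmallClopenPartition [PseudoEMetricSpace α] (A : Set α) (ε : ℝ≥0∞)
    (F : ℕ → Set α) : Prop where
  isClopen : ∀ n, IsClopen (F n)
  nonempty : ∀ n, (F n).Nonempty
  ediam_le : ∀ n, ediam (F n) ≤ ε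
  pairwise_disjoint : Pairwise (Disjoint on F)
  iUnion_eq : ⋃ n, F n = A

theorem exists_isSmallClopenPartition [PseudoEMetricSpace α] [CompleteSpace α]
    [SecondCountableTopology α] {B : Set (Set α)} (hB : IsTopologicalBasis B)
    (hBc : ∀ s ∈ B, IsClopen s) {A : Set α} (hA : IsClopen A) (hAne : A.Nonempty)
    (hAc : ¬IsCompact A) {ε : ℝ≥0∞} (hε : 0 < ε) : ∃ F, IsSmallClopenPartition A ε F := by
  have hAtb : ¬TotallyBounded A := fun h =>
    hAc (isCompact_iff_totallyBounded_isComplete.2 ⟨h, hA.isClosed.isComplete⟩)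
  obtain ⟨δ, hδ, hδA⟩ : ∃ δ > 0, ∀ t : Set α, t.Finite → ¬A ⊆ ⋃ y ∈ t, eball y δ := by
    simpa [EMetric.totallyBounded_iff] using hAtb
  set r := min δ (ε / 2)
  have hr : 0 < r := lt_min hδ (ENNReal.half_pos hε.ne')
  obtain ⟨D, hDc, hDd, hDA, hDr⟩ := exists_pairwise_disjoint_clopen_cover_subordinate hB hBc
    hA.isOpen hAne (𝒰 := range fun c => eball c r) (forall_mem_range.2 fun _ => isOpen_eball)
    fun x _ => mem_sUnion_of_mem (mem_eball_self hr) (mem_range_self x)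
  simp only [exists_range_iff] at hDr
  choose c hc using hDr
  have hinf : {n | (D n).Nonempty}.Infinite := by
    refine fun hfin => hδA _ (hfin.image c) fun x hx => ?_
    obtain ⟨n, hn⟩ := mem_iUnion.1 (hDA ▸ hx)
    exact mem_biUnion (mem_image_of_mem c ⟨x, hn⟩) (eball_subset_eball (min_le_left _ _) (hc n hn))
  obtain ⟨e, he, hne, hU⟩ := exists_injective_forall_nonempty_iUnion_eq hinf
  refine ⟨D ∘ e, fun k => hDc _, hne, fun k => ?_, hDd.comp_of_injective he, hU.trans hDA⟩
  calc ediam (D (e k)) ≤ 2 * r := (ediam_mono (hc _)).trans ediam_eball_le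
    _ ≤ 2 * (ε / 2) := by gcongr; exact min_le_right _ _
    _ = ε := ENNReal.mul_div_cancel two_ne_zero ENNReal.ofNat_ne_top

-- Children of a node of length `n` have `ediam ≤ n⁻¹`; at the root this bound is `0⁻¹ = ⊤`.
noncomputable def partitionScheme (part : Set α → ℝ≥0∞ → ℕ → Set α) : List ℕ → Set α
  | [] => univ
  | a :: l => part (partitionScheme part l) (l.length : ℝ≥0∞)⁻¹ a

variable {part : Set α → ℝ≥0∞ → ℕ → Set α}

theorem isSmallClopenPartition_partitionScheme [PseudoEMetricSpace α] [Nonempty α]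
    (hpart : ∀ A, IsClopen A → A.Nonempty → ∀ ε, 0 < ε → IsSmallClopenPartition A ε (part A ε)) :
    ∀ l, IsSmallClopenPartition (partitionScheme part l) (l.length : ℝ≥0∞)⁻¹
      fun a => partitionScheme part (a :: l)
  | [] => hpart _ isClopen_univ univ_nonempty _ (by simp)
  | a :: l =>
    have h := isSmallClopenPartition_partitionScheme hpart l
    hpart _ (h.isClopen a) (h.nonempty a) _ (ENNReal.inv_pos.2 (ENNReal.natCast_ne_top _))

theorem partitionScheme_vanishingDiam [PseudoMetricSpace α] [Nonempty α]
    (hpart : ∀ A, IsClopen A → A.Nonempty → ∀ ε, 0 < ε → IsSmallClopenPartition A ε (part A ε)) :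
    CantorScheme.VanishingDiam (partitionScheme part) := by
  intro x
  rw [← tendsto_add_atTop_iff_nat 1]
  refine tendsto_of_tendsto_of_tendsto_of_le_of_le tendsto_const_nhds
    ENNReal.tendsto_inv_nat_nhds_zero (fun _ => bot_le) fun n => ?_
  simpa using (isSmallClopenPartition_partitionScheme hpart (res x n)).ediam_le (x n)

end ClopenPartition

theorem PolishSpace.nonempty_homeomorph_nat_nat {α : Type*} [TopologicalSpace α] [PolishSpace α]
    [Nonempty α] (hB : ∃ B : Set (Set α), IsTopologicalBasis B ∧ ∀ s ∈ B, IsClopen s)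
    (hnlc : ∀ x : α, ¬∃ s ∈ 𝓝 x, IsCompact s) : Nonempty (α ≃ₜ (ℕ → ℕ)) := by
  obtain ⟨B, hB, hBc⟩ := hB
  let := upgradeIsCompletelyMetrizable α
  choose! part hpart using fun A (hA : IsClopen A) (hAne : A.Nonempty) ε (hε : 0 < ε) =>
    exists_isSmallClopenPartition hB hBc hA hAne
      (fun hAc => hnlc _ ⟨A, hA.isOpen.mem_nhds hAne.some_mem, hAc⟩) hε
  have hS := isSmallClopenPartition_partitionScheme hpart
  have hclopen : ∀ l, IsClopen (partitionScheme part l)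
    | [] => isClopen_univ
    | a :: l => (hS l).isClopen a
  have hne : ∀ l, (partitionScheme part l).Nonempty
    | [] => univ_nonempty
    | a :: l => (hS l).nonempty a
  obtain ⟨φ⟩ := CantorScheme.nonempty_homeomorph_of_vanishingDiam (β := ℕ) rfl
    (fun l => (hclopen l).isOpen) (fun l => (hclopen l).isClosed) hne
    (fun l a => (hS l).iUnion_eq ▸ subset_iUnion _ a) (fun l => (hS l).pairwise_disjoint)
    (fun l => (hS l).iUnion_eq.ge) (partitionScheme_vanishingDiam hpart)
  exact ⟨φ.symm⟩

theorem IsGδ.polishSpace {α : Type*} [TopologicalSpace α] [PolishSpace α] {s : Set α}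
    (hs : IsGδ s) : PolishSpace s := by
  obtain ⟨U, hU, rfl⟩ := isGδ_iff_eq_iInter_nat.1 hs
  have : ∀ n, PolishSpace (U n) := fun n => (hU n).polishSpace
  let diag : (⋂ n, U n : Set α) → ∀ n, U n := fun x n => ⟨x, mem_iInter.1 x.2 n⟩
  have hdiag : Continuous diag := continuous_pi fun n => continuous_subtype_val.subtype_mk _
  have hrange : range diag = ⋂ n, {y | (y n : α) = y 0} := by
    ext y
    refine ⟨?_, fun hy => ?_⟩
    · rintro ⟨x, rfl⟩
      exact mem_iInter.2 fun n => rfl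
    · have hy : ∀ n, (y n : α) = y 0 := fun n => mem_iInter.1 hy n
      exact ⟨⟨y 0, mem_iInter.2 fun n => hy n ▸ (y n).2⟩, funext fun n => Subtype.ext (hy n).symm⟩
  refine IsClosedEmbedding.polishSpace (f := diag) ⟨IsEmbedding.of_comp hdiag
    (continuous_subtype_val.comp (continuous_apply 0)) IsEmbedding.subtypeVal, ?_⟩
  rw [hrange]
  exact isClosed_iInter fun n => isClosed_eq (continuous_subtype_val.comp (continuous_apply n))
    (continuous_subtype_val.comp (continuous_apply 0))

section ClosureDiff

variable {α : Type*} [TopologicalSpace α]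

theorem closure_diff_subset_compl_of_isClosed {Y Q : Set α} (hQY : Q ⊆ Y)
    (hQ : IsClosed ((↑) ⁻¹' Q : Set Y)) : closure Q \ Q ⊆ Yᶜ := by
  rintro x ⟨hxc, hxQ⟩ hxY
  exact hxQ (isClosed_preimage_val.1 hQ ⟨hxY, by rwa [inter_eq_right.2 hQY]⟩)

theorem dense_compl_closure_diff (Q : Set α) : Dense (closure Q \ Q)ᶜ := by
  intro x
  by_cases hx : x ∈ closure Q \ Q
  · exact closure_mono (fun y hy h => h.2 hy) hx.1
  · exact subset_closure hx

theorem preperfect_of_homeomorph {X : Type*} [TopologicalSpace X] [PerfectSpace X] {Q : Set α}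
    (e : Q ≃ₜ X) : Preperfect Q := by
  intro x hx
  have h := (PerfectSpace.univ_preperfect (e ⟨x, hx⟩) (mem_univ _)).map
    (f := Subtype.val ∘ e.symm) (by fun_prop) (Subtype.val_injective.comp e.symm.injective)
  rw [map_principal, image_univ, range_comp, e.symm.surjective.range_eq, image_univ,
    Subtype.range_coe] at h
  simpa using h

theorem closure_diff_not_exists_isCompact_mem_nhds [T2Space α] {Q : Set α}
    (hQ : Q ⊆ closure (closure Q \ Q)) (x : ↥(closure Q \ Q)) : ¬∃ s ∈ 𝓝 x, IsCompact s := by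
  rintro ⟨s, hs, hsc⟩
  obtain ⟨u, hu, hus⟩ := (mem_nhds_subtype _ _ _).1 hs
  obtain ⟨W, hWu, hW, hxW⟩ := mem_nhds_iff.1 hu
  obtain ⟨q, hqW, hqQ⟩ := mem_closure_iff.1 x.2.1 W hW hxW
  have hWs : W ∩ (closure Q \ Q) ⊆ (↑) '' s := fun y hy => ⟨⟨y, hy.2⟩, hus (hWu hy.1), rfl⟩
  have hq : q ∈ (↑) '' s :=
    (hsc.image continuous_subtype_val).isClosed.closure_subset_iff.2 hWs
      (hW.inter_closure ⟨hqW, hQ hqQ⟩)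
  obtain ⟨y, -, hy⟩ := hq
  exact (hy ▸ y.2).2 hqQ

end ClosureDiff

theorem Preperfect.subset_closure_closure_diff {α : Type*} [MetricSpace α] [CompleteSpace α]
    {Q : Set α} (hQ : Preperfect Q) (hQc : Q.Countable) : Q ⊆ closure (closure Q \ Q) := by
  intro q hq
  rw [Metric.mem_closure_iff]
  intro ε hε
  by_contra! hfar
  set C := closure (ball q (ε / 2) ∩ Q)
  have hCQ : C ⊆ Q := by
    intro y hy
    by_contra hyQ
    have hyq : dist y q ≤ ε / 2 :=
      closure_ball_subset_closedBall (closure_mono inter_subset_left hy)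
    have := hfar y ⟨closure_mono inter_subset_right hy, hyQ⟩
    rw [dist_comm] at this
    linarith
  obtain ⟨f, hfC, -, hf⟩ := (hQ.open_inter isOpen_ball).perfect_closure.exists_nat_bool_injection
    ⟨q, subset_closure ⟨mem_ball_self (half_pos hε), hq⟩⟩
  have : Countable (range f) := (hQc.mono (hfC.trans hCQ)).to_subtype
  have : Countable (ℕ → Bool) := (Equiv.ofInjective f hf).injective.countable
  rw [← Cardinal.mk_le_aleph0_iff] at this
  exact Cardinal.aleph0_lt_continuum.not_ge (by simpa using this)

theorem exists_isTopologicalBasis_isClopen_of_dense_compl {α : Type*} [LinearOrder α]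
    [TopologicalSpace α] [OrderTopology α] [DenselyOrdered α] [NoMinOrder α] [NoMaxOrder α]
    {S : Set α} (hS : Dense Sᶜ) :
    ∃ B : Set (Set S), IsTopologicalBasis B ∧ ∀ s ∈ B, IsClopen s := by
  set B : Set (Set S) := {V | ∃ a ∉ S, ∃ b ∉ S, V = (↑) ⁻¹' Ioo a b}
  have hBc : ∀ V ∈ B, IsClopen V := by
    rintro _ ⟨a, ha, b, hb, rfl⟩
    have hIcc : ((↑) ⁻¹' Ioo a b : Set S) = (↑) ⁻¹' Icc a b := by
      ext ⟨x, hx⟩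
      simp only [mem_preimage, mem_Ioo, mem_Icc]
      exact ⟨fun h => ⟨h.1.le, h.2.le⟩, fun h => ⟨h.1.lt_of_ne (by rintro rfl; exact ha hx),
        h.2.lt_of_ne (by rintro rfl; exact hb hx)⟩⟩
    exact ⟨hIcc ▸ isClosed_Icc.preimage continuous_subtype_val,
      isOpen_Ioo.preimage continuous_subtype_val⟩
  refine ⟨B, isTopologicalBasis_of_isOpen_of_nhds (fun V hV => (hBc V hV).isOpen)
    fun x V hxV hV => ?_, hBc⟩
  obtain ⟨W, hW, rfl⟩ := isOpen_induced_iff.1 hV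
  obtain ⟨l, u, ⟨hl, hu⟩, hluW⟩ := mem_nhds_iff_exists_Ioo_subset.1 (hW.mem_nhds hxV)
  obtain ⟨a, ha, hla, hax⟩ := hS.exists_mem_open isOpen_Ioo (nonempty_Ioo.2 hl)
  obtain ⟨b, hb, hxb, hbu⟩ := hS.exists_mem_open isOpen_Ioo (nonempty_Ioo.2 hu)
  exact ⟨_, ⟨a, ha, b, hb, rfl⟩, ⟨hax, hxb⟩,
    fun y hy => hluW ⟨hla.trans hy.1, hy.2.trans hbu⟩⟩

theorem closure_diff_of_closed_copy_of_rationals (X Q : Set ℝ)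
    (hQhomeo : Nonempty (↥Q ≃ₜ ℚ)) (hQsub : Q ⊆ Xᶜ)
    (hQclosed : IsClosed ((↑) ⁻¹' Q : Set ↥(Xᶜ))) :
    closure Q \ Q ⊆ X ∧
    PolishSpace ↥(closure Q \ Q) ∧
    (∃ B : Set (Set ↥(closure Q \ Q)), TopologicalSpace.IsTopologicalBasis B ∧
      ∀ s ∈ B, IsClopen s) ∧
    (∀ x : ↥(closure Q \ Q), ¬ ∃ s ∈ nhds x, IsCompact s) ∧
    ∃ C : Set ↥X, IsClosed C ∧ Nonempty (↥C ≃ₜ (ℕ → ℕ)) := by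
  obtain ⟨e⟩ := hQhomeo
  have hQc : Q.Countable := countable_coe_iff.1 e.injective.countable
  have hQS : Q ⊆ closure (closure Q \ Q) :=
    (preperfect_of_homeomorph e).subset_closure_closure_diff hQc
  have hSX : closure Q \ Q ⊆ X := by
    simpa using closure_diff_subset_compl_of_isClosed hQsub hQclosed
  have hpolish : PolishSpace ↥(closure Q \ Q) :=
    (isClosed_closure.isGδ.inter hQc.isGδ_compl).polishSpace
  have hbasis := exists_isTopologicalBasis_isClopen_of_dense_compl (dense_compl_closure_diff Q)
  have hnlc := closure_diff_not_exists_isCompact_mem_nhds hQS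
  have : Nonempty ↥(closure Q \ Q) :=
    (closure_nonempty_iff.1 ⟨_, hQS (e.symm 0).2⟩).to_subtype
  obtain ⟨φ⟩ := PolishSpace.nonempty_homeomorph_nat_nat hbasis hnlc
  have hC : ((↑) '' ((↑) ⁻¹' closure Q : Set X)) = closure Q \ Q := by
    rw [Subtype.image_preimage_coe]
    exact Subset.antisymm (fun x hx => ⟨hx.2, fun hxQ => hQsub hxQ hx.1⟩) fun x hx => ⟨hSX hx, hx.1⟩
  exact ⟨hSX, hpolish, hbasis, hnlc, _, isClosed_closure.preimage continuous_subtype_val,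
    ⟨(IsEmbedding.subtypeVal.homeomorphImage _).trans ((Homeomorph.setCongr hC).trans φ)⟩⟩
end
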